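/- arXiv:2009.11570 — 10 statements merged into one kernel-verified Lean document; each statement's English description precedes it below -/
import Mathlib

section
/- Let X and Y be sets, E and F real vector spaces, A(X,E) ⊆ E^X and A(Y,F) ⊆ F^Y vector subspaces, and let T: A(X,E) → A(Y,F) be a biseparating map. Then for all f, g, h ∈ A(X,E), Ĉ(f−h) ⊆ Ĉ(g−h) if and only if Ĉ(Tf−Th) ⊆ Ĉ(Tg−Th). -/
open Set

namespace Stmt0

variable {X Y E F : Type*}

/-- The carrier of a function: the set where it is nonzero. -/
def carrier [Zero E] (f : X → E) : Set X := {x | f x ≠ 0}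

/-- The support `Ĉ(f)` of `f` relative to the function space `A`:
`X` minus the union of the carriers of all `g ∈ A` whose carrier is disjoint from that of `f`. -/
def supp [Zero E] (A : Set (X → E)) (f : X → E) : Set X :=
  Set.univ \ ⋃ g ∈ {g | g ∈ A ∧ carrier g ∩ carrier f = ∅}, carrier g

/-- `f ⊥_h g` : disjointness with respect to `h`. -/
def PerpAt [AddGroup E] (h f g : X → E) : Prop :=
  carrier (f - h) ∩ carrier (g - h) = ∅

/-- A map `T` between vector subspaces of `E^X` and `F^Y` is biseparating if it is a
bijection and `f ⊥_h g ↔ Tf ⊥_{Th} Tg` for all `f, g, h`. -/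
def Biseparating [AddCommGroup E] [Module ℝ E] [AddCommGroup F] [Module ℝ F]
    (A : Submodule ℝ (X → E)) (B : Submodule ℝ (Y → F)) (T : A → B) : Prop :=
  Function.Bijective T ∧ ∀ f g h : A,
    (PerpAt (h : X → E) (f : X → E) (g : X → E) ↔
      PerpAt ((T h : Y → F)) ((T f : Y → F)) ((T g : Y → F)))


lemma carrier_subset_iff [Zero E] (A : Set (X → E)) (f k : X → E) (hk : k ∈ A) :
    carrier k ⊆ (⋃ g ∈ {g | g ∈ A ∧ carrier g ∩ carrier f = ∅}, carrier g) ↔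
      carrier k ∩ carrier f = ∅ := by
  constructor
  · intro hsub
    ext x
    simp only [carrier, mem_inter_iff, mem_setOf_eq, mem_empty_iff_false, iff_false, not_and]
    intro hkx hfx
    have := hsub hkx
    simp only [mem_iUnion, mem_setOf_eq] at this
    obtain ⟨g, ⟨-, hg⟩, hgx⟩ := this
    have : x ∈ carrier g ∩ carrier f := ⟨hgx, hfx⟩
    rw [hg] at this; exact this
  · intro hdisj x hx
    simp only [mem_iUnion, mem_setOf_eq]
    exact ⟨k, ⟨hk, hdisj⟩, hx⟩

lemma supp_subset_iff [Zero E] (A : Set (X → E)) (f g : X → E) :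
    supp A f ⊆ supp A g ↔
      ∀ k ∈ A, carrier k ∩ carrier g = ∅ → carrier k ∩ carrier f = ∅ := by
  unfold supp
  rw [show ∀ (s t : Set X), univ \ s ⊆ univ \ t ↔ t ⊆ s from fun s t => by
    simp [diff_eq, compl_subset_compl]]
  rw [iUnion₂_subset_iff]
  constructor
  · intro H k hkA hkg
    exact (carrier_subset_iff A f k hkA).1 (H k ⟨hkA, hkg⟩)
  · intro H k hk
    exact (carrier_subset_iff A f k hk.1).2 (H k hk.1 hk.2)

lemma supp_subset_iff_perp [AddCommGroup E] [Module ℝ E]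
    (A : Submodule ℝ (X → E)) (f g h : A) :
    supp (A : Set (X → E)) ((f : X → E) - (h : X → E)) ⊆
        supp (A : Set (X → E)) ((g : X → E) - (h : X → E)) ↔
      ∀ m : A, PerpAt (h : X → E) (m : X → E) (g : X → E) →
        PerpAt (h : X → E) (m : X → E) (f : X → E) := by
  rw [supp_subset_iff]
  constructor
  · intro H m hm
    have hmem : (m : X → E) - (h : X → E) ∈ A := by
      simpa using (Submodule.sub_mem A m.2 h.2)
    exact H _ hmem hm
  · intro H k hk hkg
    have := H (⟨k, hk⟩ + h)
    simp only [PerpAt, Submodule.coe_add, add_sub_cancel_right] at this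
    exact this hkg

/-- Araujo's Lemma: for a biseparating map `T`,
`Ĉ(f−h) ⊆ Ĉ(g−h)` iff `Ĉ(Tf−Th) ⊆ Ĉ(Tg−Th)`. -/
theorem stmt0 [AddCommGroup E] [Module ℝ E] [AddCommGroup F] [Module ℝ F]
    (A : Submodule ℝ (X → E)) (B : Submodule ℝ (Y → F)) (T : A → B)
    (hT : Biseparating A B T) (f g h : A) :
    supp (A : Set (X → E)) ((f : X → E) - (h : X → E)) ⊆
        supp (A : Set (X → E)) ((g : X → E) - (h : X → E)) ↔
      supp (B : Set (Y → F)) ((T f : Y → F) - (T h : Y → F)) ⊆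
        supp (B : Set (Y → F)) ((T g : Y → F) - (T h : Y → F)) := by
  rw [supp_subset_iff_perp, supp_subset_iff_perp]
  constructor
  · intro H n hn
    obtain ⟨m, rfl⟩ := hT.1.2 n
    exact (hT.2 m f h).1 (H m ((hT.2 m g h).2 hn))
  · intro H m hm
    exact (hT.2 m f h).2 (H (T m) ((hT.2 m g h).1 hm))

end Stmt0
end

section
/- Let Y be a set, F a real vector space, and A(Y,F) ⊆ F^Y a vector subspace which is basic. If f, g ∈ A(Y,F) and V ∈ 𝒟(Y) are such that f = g on V and V ⊆ Ĉ(g), then V ⊆ Ĉ(f). -/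
open Set

namespace Stmt1

variable {Y F : Type*}

/-- The carrier of a function: the set where it is nonzero. -/
def carrier [Zero F] (f : Y → F) : Set Y := {y | f y ≠ 0}

/-- The support `Ĉ(f)` of `f` relative to the function space `A`. -/
def supp [Zero F] (A : Set (Y → F)) (f : Y → F) : Set Y :=
  Set.univ \ ⋃ g ∈ {g | g ∈ A ∧ carrier g ∩ carrier f = ∅}, carrier g

/-- `𝒞(Y)`: the collection of carriers of members of `A`. -/
def carrSets [Zero F] (A : Set (Y → F)) : Set (Set Y) := {C | ∃ f ∈ A, C = carrier f}

/-- `𝒟(Y)`: the collection of supports of members of `A`. -/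
def suppSets [Zero F] (A : Set (Y → F)) : Set (Set Y) := {D | ∃ f ∈ A, D = supp A f}

/-- `A` is basic if any point in the intersection of two carriers lies in a
carrier contained in the intersection. -/
def Basic [Zero F] (A : Set (Y → F)) : Prop :=
  ∀ C₁ ∈ carrSets A, ∀ C₂ ∈ carrSets A, ∀ y ∈ C₁ ∩ C₂,
    ∃ C ∈ carrSets A, y ∈ C ∧ C ⊆ C₁ ∩ C₂

lemma mem_supp_iff [Zero F] (A : Set (Y → F)) (f : Y → F) (y : Y) :
    y ∈ supp A f ↔ ∀ k : Y → F, k ∈ A → carrier k ∩ carrier f = ∅ → y ∉ carrier k := by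
  simp [supp, mem_diff]

lemma carrier_subset_supp [Zero F] (A : Set (Y → F)) (f : Y → F) :
    carrier f ⊆ supp A f := by
  intro y hy
  rw [mem_supp_iff]
  intro k _ hk hyk
  exact (eq_empty_iff_forall_notMem.1 hk y) ⟨hyk, hy⟩

theorem stmt1 [AddCommGroup F] [Module ℝ F] (A : Submodule ℝ (Y → F))
    (hbasic : Basic (A : Set (Y → F))) (f g : Y → F) (hf : f ∈ A) (hg : g ∈ A)
    (V : Set Y) (hV : V ∈ suppSets (A : Set (Y → F)))
    (hfg : ∀ y ∈ V, f y = g y) (hVg : V ⊆ supp (A : Set (Y → F)) g) :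
    V ⊆ supp (A : Set (Y → F)) f := by
  obtain ⟨h, hh, rfl⟩ := hV
  intro y hy
  rw [mem_supp_iff]
  intro k hk hkf hyk
  -- carrier k ∩ carrier h is nonempty
  have hne : (carrier k ∩ carrier h).Nonempty := by
    by_contra hcon
    rw [Set.not_nonempty_iff_eq_empty] at hcon
    exact ((mem_supp_iff _ h y).1 hy) k hk hcon hyk
  obtain ⟨z, hz⟩ := hne
  obtain ⟨C, ⟨m, hm, rfl⟩, hzm, hmsub⟩ :=
    hbasic (carrier k) ⟨k, hk, rfl⟩ (carrier h) ⟨h, hh, rfl⟩ z hz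
  have hmV : carrier m ⊆ supp (A : Set (Y → F)) h :=
    fun w hw => carrier_subset_supp _ h (hmsub hw).2
  -- m ⊥ g
  have hmg : carrier m ∩ carrier g = ∅ := by
    rw [eq_empty_iff_forall_notMem]
    rintro w ⟨hwm, hwg⟩
    have hwf : f w = g w := hfg w (hmV hwm)
    have : w ∈ carrier k ∩ carrier f := ⟨(hmsub hwm).1, by simp [carrier, hwf]; exact hwg⟩
    exact (eq_empty_iff_forall_notMem.1 hkf w) this
  exact ((mem_supp_iff _ g z).1 (hVg (hmV hzm))) m hm hmg hzm

end Stmt1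
end

section
/- Let X and Y be sets, E and F real vector spaces, A(X,E) ⊆ E^X and A(Y,F) ⊆ F^Y vector subspaces, and let T: A(X,E) → A(Y,F) be a biseparating map. Assume that A(Y,F) is both basic and compatible. Then for all f, g, h ∈ A(X,E), Ĉ(T(f+h) − Tf) = Ĉ(T(g+h) − Tg); that is, the set mover θ_f: Ĉ(h) ↦ Ĉ(T(f+h) − Tf) on 𝒟(X) does not depend on the choice of f ∈ A(X,E). -/
open Set

namespace Stmt2

variable {X Y E F : Type*}

/-- The carrier of a function: the set where it is nonzero. -/
def carrier [Zero E] (f : X → E) : Set X := {x | f x ≠ 0}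

/-- The support `Ĉ(f)` of `f` relative to the function space `A`. -/
def supp [Zero E] (A : Set (X → E)) (f : X → E) : Set X :=
  Set.univ \ ⋃ g ∈ {g | g ∈ A ∧ carrier g ∩ carrier f = ∅}, carrier g

/-- `𝒞(X)`: the collection of carriers of members of `A`. -/
def carrSets [Zero E] (A : Set (X → E)) : Set (Set X) := {C | ∃ f ∈ A, C = carrier f}

/-- `𝒟(X)`: the collection of supports of members of `A`. -/
def suppSets [Zero E] (A : Set (X → E)) : Set (Set X) := {D | ∃ f ∈ A, D = supp A f}

/-- `A` is basic if any point in the intersection of two carriers lies in a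
carrier contained in the intersection. -/
def Basic [Zero E] (A : Set (X → E)) : Prop :=
  ∀ C₁ ∈ carrSets A, ∀ C₂ ∈ carrSets A, ∀ x ∈ C₁ ∩ C₂,
    ∃ C ∈ carrSets A, x ∈ C ∧ C ⊆ C₁ ∩ C₂

/-- `A` is compatible if for every `f ∈ A`, `D ∈ 𝒟(X)` and `x ∉ D` there are
`g ∈ A` and `C ∈ 𝒞(X)` with `x ∈ C`, `g = f` on `C` and `g = 0` on `D`. -/
def Compatible [Zero E] (A : Set (X → E)) : Prop :=
  ∀ f ∈ A, ∀ D ∈ suppSets A, ∀ x ∉ D, ∃ g ∈ A, ∃ C ∈ carrSets A,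
    x ∈ C ∧ (∀ z ∈ C, g z = f z) ∧ (∀ z ∈ D, g z = 0)

/-- `f ⊥_h g` : disjointness with respect to `h`. -/
def PerpAt [AddGroup E] (h f g : X → E) : Prop :=
  carrier (f - h) ∩ carrier (g - h) = ∅

/-- Biseparating map between vector subspaces of `E^X` and `F^Y`. -/
def Biseparating [AddCommGroup E] [Module ℝ E] [AddCommGroup F] [Module ℝ F]
    (A : Submodule ℝ (X → E)) (B : Submodule ℝ (Y → F)) (T : A → B) : Prop :=
  Function.Bijective T ∧ ∀ f g h : A,
    (PerpAt (h : X → E) (f : X → E) (g : X → E) ↔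
      PerpAt ((T h : Y → F)) ((T f : Y → F)) ((T g : Y → F)))

theorem carrier_neg' [SubtractionMonoid E] (f : X → E) : carrier (-f) = carrier f := by
  ext x; simp [carrier]

theorem disj_apply [Zero E] {p q : X → E} (hd : carrier p ∩ carrier q = ∅) {x : X}
    (hp : p x ≠ 0) : q x = 0 := by
  by_contra hq
  have hx : x ∈ carrier p ∩ carrier q := ⟨hp, hq⟩
  rw [hd] at hx
  exact hx

theorem disj_apply' [Zero E] {p q : X → E} (hd : carrier p ∩ carrier q = ∅) {x : X}
    (hq : q x ≠ 0) : p x = 0 := disj_apply (by rwa [Set.inter_comm] at hd) hq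

theorem mem_supp_iff [Zero E] {A : Set (X → E)} {f : X → E} {x : X} :
    x ∈ supp A f ↔ ∀ g, g ∈ A → carrier g ∩ carrier f = ∅ → g x = 0 := by
  constructor
  · intro H g hg hd
    by_contra hgx
    exact H.2 (mem_biUnion (show g ∈ {g | g ∈ A ∧ carrier g ∩ carrier f = ∅} from ⟨hg, hd⟩)
      (show x ∈ carrier g from hgx))
  · intro H
    refine ⟨trivial, ?_⟩
    intro hx
    obtain ⟨g, hg, hgx⟩ := mem_iUnion₂.mp hx
    exact hgx (H g hg.1 hg.2)

theorem carrier_subset_supp [Zero E] {A : Set (X → E)} (f : X → E) :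
    carrier f ⊆ supp A f := by
  intro x hx
  rw [mem_supp_iff]
  intro g _ hd
  by_contra hg
  have hx' : x ∈ carrier g ∩ carrier f := ⟨hg, hx⟩
  rw [hd] at hx'
  exact hx'

/-- Lemma (I): an increment is unchanged under a base shift disjoint from it. -/
theorem incr_eq [AddCommGroup E] [Module ℝ E] [AddCommGroup F] [Module ℝ F]
    {A : Submodule ℝ (X → E)} {B : Submodule ℝ (Y → F)} {T : A → B}
    (hT : Biseparating A B T) (m g h : A)
    (hd : carrier ((m : X → E) - (g : X → E)) ∩ carrier (h : X → E) = ∅) :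
    (T (m + h) : Y → F) - (T m : Y → F) = (T (g + h) : Y → F) - (T g : Y → F) := by
  have P1 : PerpAt ((T g : Y → F)) ((T m : Y → F)) ((T (g + h) : Y → F)) := by
    refine (hT.2 m (g + h) g).mp ?_
    show carrier ((m : X → E) - (g : X → E)) ∩
      carrier (((g + h : A) : X → E) - (g : X → E)) = ∅
    rw [show (((g + h : A) : X → E) - (g : X → E)) = (h : X → E) by push_cast; abel]
    exact hd
  have P2 : PerpAt ((T (g + h) : Y → F)) ((T (m + h) : Y → F)) ((T g : Y → F)) := by
    refine (hT.2 (m + h) g (g + h)).mp ?_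
    show carrier (((m + h : A) : X → E) - ((g + h : A) : X → E)) ∩
      carrier ((g : X → E) - ((g + h : A) : X → E)) = ∅
    rw [show (((m + h : A) : X → E) - ((g + h : A) : X → E)) = (m : X → E) - (g : X → E) by
        push_cast; abel,
      show ((g : X → E) - ((g + h : A) : X → E)) = -(h : X → E) by push_cast; abel,
      carrier_neg']
    exact hd
  have P3 : PerpAt ((T m : Y → F)) ((T g : Y → F)) ((T (m + h) : Y → F)) := by
    refine (hT.2 g (m + h) m).mp ?_
    show carrier ((g : X → E) - (m : X → E)) ∩
      carrier (((m + h : A) : X → E) - (m : X → E)) = ∅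
    rw [show ((g : X → E) - (m : X → E)) = -((m : X → E) - (g : X → E)) by abel, carrier_neg',
      show (((m + h : A) : X → E) - (m : X → E)) = (h : X → E) by push_cast; abel]
    exact hd
  have P4 : PerpAt ((T (m + h) : Y → F)) ((T (g + h) : Y → F)) ((T m : Y → F)) := by
    refine (hT.2 (g + h) m (m + h)).mp ?_
    show carrier (((g + h : A) : X → E) - ((m + h : A) : X → E)) ∩
      carrier ((m : X → E) - ((m + h : A) : X → E)) = ∅
    rw [show (((g + h : A) : X → E) - ((m + h : A) : X → E)) =
        -((m : X → E) - (g : X → E)) by push_cast; abel, carrier_neg',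
      show ((m : X → E) - ((m + h : A) : X → E)) = -(h : X → E) by push_cast; abel,
      carrier_neg']
    exact hd
  funext y
  simp only [Pi.sub_apply]
  by_cases hg1 : (T (g + h) : Y → F) y = (T g : Y → F) y
  · by_cases hm1 : (T (m + h) : Y → F) y = (T m : Y → F) y
    · rw [sub_eq_zero_of_eq hm1, sub_eq_zero_of_eq hg1]
    · have hmy : ((T (m + h) : Y → F) - (T m : Y → F)) y ≠ 0 := by
        simp only [Pi.sub_apply]; exact sub_ne_zero.mpr hm1
      have e1 : ((T g : Y → F) - (T m : Y → F)) y = 0 := disj_apply' P3 hmy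
      have hmy' : ((T m : Y → F) - (T (m + h) : Y → F)) y ≠ 0 := by
        simp only [Pi.sub_apply]
        exact sub_ne_zero.mpr fun hc => hm1 hc.symm
      have e2 : ((T (g + h) : Y → F) - (T (m + h) : Y → F)) y = 0 := disj_apply' P4 hmy'
      simp only [Pi.sub_apply] at e1 e2
      rw [sub_eq_zero.mp e1, sub_eq_zero.mp e2]
  · have hgy : ((T (g + h) : Y → F) - (T g : Y → F)) y ≠ 0 := by
      simp only [Pi.sub_apply]; exact sub_ne_zero.mpr hg1
    have e1 : ((T m : Y → F) - (T g : Y → F)) y = 0 := disj_apply' P1 hgy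
    have hgy' : ((T g : Y → F) - (T (g + h) : Y → F)) y ≠ 0 := by
      simp only [Pi.sub_apply]
      exact sub_ne_zero.mpr fun hc => hg1 hc.symm
    have e2 : ((T (m + h) : Y → F) - (T (g + h) : Y → F)) y = 0 := disj_apply' P2 hgy'
    simp only [Pi.sub_apply] at e1 e2
    rw [sub_eq_zero.mp e1, sub_eq_zero.mp e2]

/-- Main inclusion. -/
theorem supp_incl [AddCommGroup E] [Module ℝ E] [AddCommGroup F] [Module ℝ F]
    (A : Submodule ℝ (X → E)) (B : Submodule ℝ (Y → F)) (T : A → B)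
    (hT : Biseparating A B T)
    (hBbasic : Basic (B : Set (Y → F))) (hBcompat : Compatible (B : Set (Y → F)))
    (f g h : A) :
    supp (B : Set (Y → F)) ((T (f + h) : Y → F) - (T f : Y → F)) ⊆
      supp (B : Set (Y → F)) ((T (g + h) : Y → F) - (T g : Y → F)) := by
  intro y hy
  by_contra hy'
  -- witness r with r y ≠ 0, carrier r ∩ carrier u_g = ∅
  have hy2 : ∃ r, (r ∈ (B : Set (Y → F)) ∧
      carrier r ∩ carrier ((T (g + h) : Y → F) - (T g : Y → F)) = ∅) ∧ r y ≠ 0 := by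
    by_contra hno
    push_neg at hno
    apply hy'
    rw [mem_supp_iff]
    intro q hq hd
    by_contra hqy
    exact hqy (hno q ⟨hq, hd⟩)
  obtain ⟨r, ⟨hrB, hrd⟩, hry⟩ := hy2
  -- compatible: copy Tf − Tg off supp u_g
  have hDmem : supp (B : Set (Y → F)) ((T (g + h) : Y → F) - (T g : Y → F)) ∈
      suppSets (B : Set (Y → F)) := by
    refine ⟨((T (g + h) - T g : B) : Y → F), (T (g + h) - T g).2, ?_⟩
    norm_cast
  obtain ⟨v, hvB, C₁, hC₁, hyC₁, hveq, hv0⟩ :=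
    hBcompat ((T f : Y → F) - (T g : Y → F)) (sub_mem (T f).2 (T g).2) _ hDmem y hy'
  -- m with Tm = v + Tg
  obtain ⟨m, hm⟩ := hT.1.2 (⟨v, hvB⟩ + T g)
  have hTm : (T m : Y → F) = v + (T g : Y → F) := by rw [hm]; push_cast; try abel
  have hvd : carrier v ∩ carrier ((T (g + h) : Y → F) - (T g : Y → F)) = ∅ := by
    ext x
    simp only [mem_inter_iff, mem_empty_iff_false, iff_false, not_and]
    intro h1 h2
    exact h1 (hv0 x (carrier_subset_supp _ h2))
  -- m − g ⊥ h
  have hkh : carrier ((m : X → E) - (g : X → E)) ∩ carrier ((h : X → E)) = ∅ := by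
    have hY : PerpAt ((T g : Y → F)) ((T m : Y → F)) ((T (g + h) : Y → F)) := by
      show carrier ((T m : Y → F) - (T g : Y → F)) ∩
        carrier ((T (g + h) : Y → F) - (T g : Y → F)) = ∅
      rw [hTm, add_sub_cancel_right]
      exact hvd
    have hX := (hT.2 m (g + h) g).mpr hY
    unfold PerpAt at hX
    rwa [show (((g + h : A) : X → E) - (g : X → E)) = (h : X → E) by push_cast; abel] at hX
  -- u_m = u_g
  have humg : (T (m + h) : Y → F) - (T m : Y → F) =
      (T (g + h) : Y → F) - (T g : Y → F) := incr_eq hT m g h hkh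
  -- basic: shrink C₁ ∩ carrier r
  obtain ⟨C, hCmem, hyC, hCsub⟩ :=
    hBbasic C₁ hC₁ (carrier r) ⟨r, hrB, rfl⟩ y ⟨hyC₁, hry⟩
  obtain ⟨c, hcB, hCc⟩ := hCmem
  -- b with Tb = c + Tm
  obtain ⟨b, hb⟩ := hT.1.2 (⟨c, hcB⟩ + T m)
  have hTb : (T b : Y → F) = c + (T m : Y → F) := by rw [hb]; push_cast; try abel
  have hTbc : (T b : Y → F) - (T m : Y → F) = c := by rw [hTb]; abel
  -- (f − m) ⊥ (b − m)
  have hfm : carrier ((f : X → E) - (m : X → E)) ∩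
      carrier ((b : X → E) - (m : X → E)) = ∅ := by
    have hY : PerpAt ((T m : Y → F)) ((T f : Y → F)) ((T b : Y → F)) := by
      show carrier ((T f : Y → F) - (T m : Y → F)) ∩
        carrier ((T b : Y → F) - (T m : Y → F)) = ∅
      rw [hTbc]
      ext x
      simp only [mem_inter_iff, mem_empty_iff_false, iff_false, not_and]
      intro h1 h2
      exfalso
      apply h1
      have hxC : x ∈ C := hCc ▸ h2
      have hxC1 : x ∈ C₁ := (hCsub hxC).1
      have hvx := hveq x hxC1
      show (T f : Y → F) x - (T m : Y → F) x = 0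
      rw [hTm]
      simp only [Pi.add_apply, Pi.sub_apply] at hvx ⊢
      rw [hvx]
      abel
    have hX := (hT.2 f b m).mpr hY
    unfold PerpAt at hX
    exact hX
  -- (b − m) ⊥ h
  have hbh : carrier ((b : X → E) - (m : X → E)) ∩ carrier ((h : X → E)) = ∅ := by
    have hY : PerpAt ((T m : Y → F)) ((T b : Y → F)) ((T (m + h) : Y → F)) := by
      show carrier ((T b : Y → F) - (T m : Y → F)) ∩
        carrier ((T (m + h) : Y → F) - (T m : Y → F)) = ∅
      rw [hTbc, humg]
      ext x
      simp only [mem_inter_iff, mem_empty_iff_false, iff_false, not_and]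
      intro h1 h2
      have hxr : x ∈ carrier r := (hCsub (hCc ▸ h1)).2
      have : x ∈ carrier r ∩ carrier ((T (g + h) : Y → F) - (T g : Y → F)) := ⟨hxr, h2⟩
      rw [hrd] at this
      exact this
    have hX := (hT.2 b (m + h) m).mpr hY
    unfold PerpAt at hX
    rwa [show (((m + h : A) : X → E) - (m : X → E)) = (h : X → E) by push_cast; abel] at hX
  -- key: c = T(f + (b−m)) − Tf
  have key : (T (f + (b - m)) : Y → F) - (T f : Y → F) = c := by
    have hI := incr_eq hT f m (b - m) (by
      rwa [show (((b - m : A)) : X → E) = (b : X → E) - (m : X → E) by push_cast; try abel])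
    rw [show m + (b - m) = b by abel] at hI
    rw [hI, hTbc]
  -- carrier c ∩ carrier u_f = ∅
  have hcd : carrier c ∩ carrier ((T (f + h) : Y → F) - (T f : Y → F)) = ∅ := by
    have hX : PerpAt ((f : X → E)) (((f + (b - m) : A)) : X → E) (((f + h : A)) : X → E) := by
      show carrier (((f + (b - m) : A) : X → E) - (f : X → E)) ∩
        carrier (((f + h : A) : X → E) - (f : X → E)) = ∅
      rw [show (((f + (b - m) : A)) : X → E) - (f : X → E) = (b : X → E) - (m : X → E) by
          push_cast; abel,
        show (((f + h : A)) : X → E) - (f : X → E) = (h : X → E) by push_cast; abel]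
      exact hbh
    have hY := (hT.2 (f + (b - m)) (f + h) f).mp hX
    unfold PerpAt at hY
    rwa [key] at hY
  -- contradiction
  have hc0 : c y = 0 := mem_supp_iff.mp hy c hcB hcd
  have : y ∈ carrier c := hCc ▸ hyC
  exact this hc0

/-- The set mover `θ_f : Ĉ(h) ↦ Ĉ(T(f+h) − Tf)` does not depend on `f`. -/
theorem stmt2 [AddCommGroup E] [Module ℝ E] [AddCommGroup F] [Module ℝ F]
    (A : Submodule ℝ (X → E)) (B : Submodule ℝ (Y → F)) (T : A → B)
    (hT : Biseparating A B T)
    (hBbasic : Basic (B : Set (Y → F))) (hBcompat : Compatible (B : Set (Y → F)))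
    (f g h : A) :
    supp (B : Set (Y → F)) ((T (f + h) : Y → F) - (T f : Y → F)) =
      supp (B : Set (Y → F)) ((T (g + h) : Y → F) - (T g : Y → F)) :=
  Set.Subset.antisymm (supp_incl A B T hT hBbasic hBcompat f g h)
    (supp_incl A B T hT hBbasic hBcompat g f h)

end Stmt2
end

section
/- Let X and Y be sets, E and F real vector spaces, and A(X,E) ⊆ E^X, A(Y,F) ⊆ F^Y vector subspaces which are both basic and compatible. Then a bijection T: A(X,E) → A(Y,F) is biseparating if and only if it is locally determined. -/
open Set

namespace Stmt3

variable {X Y E F : Type*}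

/-- The carrier of a function: the set where it is nonzero. -/
def carrier [Zero E] (f : X → E) : Set X := {x | f x ≠ 0}

/-- The support `Ĉ(f)` of `f` relative to the function space `A`. -/
def supp [Zero E] (A : Set (X → E)) (f : X → E) : Set X :=
  Set.univ \ ⋃ g ∈ {g | g ∈ A ∧ carrier g ∩ carrier f = ∅}, carrier g

/-- `𝒞(X)`: the collection of carriers of members of `A`. -/
def carrSets [Zero E] (A : Set (X → E)) : Set (Set X) := {C | ∃ f ∈ A, C = carrier f}

/-- `𝒟(X)`: the collection of supports of members of `A`. -/
def suppSets [Zero E] (A : Set (X → E)) : Set (Set X) := {D | ∃ f ∈ A, D = supp A f}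

/-- `A` is basic if any point in the intersection of two carriers lies in a
carrier contained in the intersection. -/
def Basic [Zero E] (A : Set (X → E)) : Prop :=
  ∀ C₁ ∈ carrSets A, ∀ C₂ ∈ carrSets A, ∀ x ∈ C₁ ∩ C₂,
    ∃ C ∈ carrSets A, x ∈ C ∧ C ⊆ C₁ ∩ C₂

/-- `A` is compatible if for every `f ∈ A`, `D ∈ 𝒟(X)` and `x ∉ D` there are
`g ∈ A` and `C ∈ 𝒞(X)` with `x ∈ C`, `g = f` on `C` and `g = 0` on `D`. -/
def Compatible [Zero E] (A : Set (X → E)) : Prop :=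
  ∀ f ∈ A, ∀ D ∈ suppSets A, ∀ x ∉ D, ∃ g ∈ A, ∃ C ∈ carrSets A,
    x ∈ C ∧ (∀ z ∈ C, g z = f z) ∧ (∀ z ∈ D, g z = 0)

/-- `f ⊥_h g` : disjointness with respect to `h`. -/
def PerpAt [AddGroup E] (h f g : X → E) : Prop :=
  carrier (f - h) ∩ carrier (g - h) = ∅

/-- Biseparating map between vector subspaces of `E^X` and `F^Y`. -/
def Biseparating [AddCommGroup E] [Module ℝ E] [AddCommGroup F] [Module ℝ F]
    (A : Submodule ℝ (X → E)) (B : Submodule ℝ (Y → F)) (T : A → B) : Prop :=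
  Function.Bijective T ∧ ∀ f g h : A,
    (PerpAt (h : X → E) (f : X → E) (g : X → E) ↔
      PerpAt ((T h : Y → F)) ((T f : Y → F)) ((T g : Y → F)))

/-- A bijection `T : A(X,E) → A(Y,F)` is locally determined if there is a bijection
`θ : 𝒟(X) → 𝒟(Y)` preserving set inclusion such that for all `f, g ∈ A(X,E)` and
`U ∈ 𝒟(X)`, `f = g` on `U` iff `Tf = Tg` on `θ(U)`. -/
def LocallyDetermined [Zero E] [Zero F] (A : Set (X → E)) (B : Set (Y → F))
    (T : A → B) : Prop :=
  ∃ θ : Set X → Set Y,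
    Set.BijOn θ (suppSets A) (suppSets B) ∧
    (∀ U ∈ suppSets A, ∀ V ∈ suppSets A, U ⊆ V → θ U ⊆ θ V) ∧
    ∀ f g : A, ∀ U ∈ suppSets A,
      ((∀ x ∈ U, (f : X → E) x = (g : X → E) x) ↔
        ∀ y ∈ θ U, (T f : Y → F) y = (T g : Y → F) y)

section AuxZero
variable [AddCommGroup E]

lemma mem_carrier {f : X → E} {x : X} : x ∈ carrier f ↔ f x ≠ 0 := Iff.rfl

lemma dis_iff {a b : X → E} : carrier a ∩ carrier b = ∅ ↔ ∀ x, a x = 0 ∨ b x = 0 := by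
  rw [Set.eq_empty_iff_forall_notMem]
  constructor
  · intro h x
    by_contra hx
    push_neg at hx
    exact h x ⟨hx.1, hx.2⟩
  · rintro h x ⟨hx1, hx2⟩
    rcases h x with h0 | h0
    · exact hx1 h0
    · exact hx2 h0

lemma carrier_neg (f : X → E) : carrier (-f) = carrier f := by
  ext x; simp [carrier]

lemma mem_supp_iff {A : Set (X → E)} {f : X → E} {x : X} :
    x ∈ supp A f ↔ ∀ g, g ∈ A → carrier g ∩ carrier f = ∅ → g x = 0 := by
  unfold supp
  simp only [Set.mem_diff, Set.mem_univ, true_and, Set.mem_iUnion, Set.mem_setOf_eq,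
    exists_prop, not_exists, not_and]
  constructor
  · intro h g hg hperp
    by_contra hgx
    exact h g ⟨hg, hperp⟩ hgx
  · intro h g hgp hgx
    exact hgx (h g hgp.1 hgp.2)

lemma carrier_subset_supp (A : Set (X → E)) (f : X → E) : carrier f ⊆ supp A f := by
  intro x hx
  rw [mem_supp_iff]
  intro g hg hperp
  by_contra hgx
  rw [Set.eq_empty_iff_forall_notMem] at hperp
  exact hperp x ⟨hgx, hx⟩

lemma vanish_of_dis {A : Set (X → E)} {g f : X → E} (hg : g ∈ A)
    (h : carrier g ∩ carrier f = ∅) : ∀ x ∈ supp A f, g x = 0 := fun x hx =>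
  (mem_supp_iff.1 hx) g hg h

lemma dis_of_vanish {A : Set (X → E)} {g f : X → E}
    (h : ∀ x ∈ supp A f, g x = 0) : carrier g ∩ carrier f = ∅ := by
  rw [Set.eq_empty_iff_forall_notMem]
  rintro x ⟨hxg, hxf⟩
  exact hxg (h x (carrier_subset_supp A f hxf))

lemma supp_subset_of_ann {A : Set (X → E)} {a b : X → E}
    (h : ∀ z, z ∈ A → carrier z ∩ carrier a = ∅ → carrier z ∩ carrier b = ∅) :
    supp A b ⊆ supp A a := by
  intro x hx
  rw [mem_supp_iff] at hx ⊢
  intro g hg hperp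
  exact hx g hg (h g hg hperp)

lemma supp_mono_carrier {A : Set (X → E)} {a b : X → E} (h : carrier a ⊆ carrier b) :
    supp A a ⊆ supp A b := by
  apply supp_subset_of_ann
  intro z hz hd
  rw [Set.eq_empty_iff_forall_notMem] at hd ⊢
  rintro x ⟨h1, h2⟩
  exact hd x ⟨h1, h h2⟩

end AuxZero

section Core
variable [AddCommGroup E] [Module ℝ E] [AddCommGroup F] [Module ℝ F]
variable {A : Submodule ℝ (X → E)} {B : Submodule ℝ (Y → F)}

/-- Core refutation lemma for the "locally determined ⇒ biseparating" direction. -/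
lemma type1
    (hAbasic : Basic (A : Set (X → E)))
    (hBbasic : Basic (B : Set (Y → F)))
    (hBcompat : Compatible (B : Set (Y → F)))
    (S : A → B) (hSbij : Function.Bijective S) (hS0 : ((S 0 : Y → F)) = 0)
    (θ : Set X → Set Y)
    (hmaps : Set.MapsTo θ (suppSets (A : Set (X → E))) (suppSets (B : Set (Y → F))))
    (hsurj : Set.SurjOn θ (suppSets (A : Set (X → E))) (suppSets (B : Set (Y → F))))
    (hmono : ∀ U ∈ suppSets (A : Set (X → E)), ∀ V ∈ suppSets (A : Set (X → E)),
      U ⊆ V → θ U ⊆ θ V)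
    (hiff : ∀ f g : A, ∀ U ∈ suppSets (A : Set (X → E)),
      ((∀ x ∈ U, (f : X → E) x = (g : X → E) x) ↔
        ∀ y ∈ θ U, (S f : Y → F) y = (S g : Y → F) y))
    (n f h : A)
    (hperp : carrier (n : X → E) ∩ carrier ((f : X → E) - (h : X → E)) = ∅) :
    carrier (S n : Y → F) ∩ carrier ((S f : Y → F) - (S h : Y → F)) = ∅ := by
  classical
  by_contra hne
  obtain ⟨y0, hy0⟩ := Set.nonempty_iff_ne_empty.2 hne
  have hy0n : (S n : Y → F) y0 ≠ 0 := hy0.1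
  have hy0fh : (S f : Y → F) y0 ≠ (S h : Y → F) y0 := by
    have := hy0.2
    rw [mem_carrier, Pi.sub_apply] at this
    exact sub_ne_zero.1 this
  -- supp A n is a support set
  have hsuppn : supp (A : Set (X → E)) (n : X → E) ∈ suppSets (A : Set (X → E)) :=
    ⟨(n : X → E), n.2, rfl⟩
  -- Step 1 : f = h on supp A n, hence S f = S h on θ (supp A n), hence y0 ∉ θ (supp A n)
  have hfh : ∀ x ∈ supp (A : Set (X → E)) (n : X → E), (f : X → E) x = (h : X → E) x := by
    intro x hx
    have hd : carrier ((f : X → E) - (h : X → E)) ∩ carrier (n : X → E) = ∅ := by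
      rw [Set.inter_comm]; exact hperp
    have := vanish_of_dis (A := (A : Set (X → E))) (A.sub_mem f.2 h.2) hd x hx
    rw [Pi.sub_apply] at this
    exact sub_eq_zero.1 this
  have hy0nmem : y0 ∉ θ (supp (A : Set (X → E)) (n : X → E)) := by
    intro hy
    exact hy0fh ((hiff f h _ hsuppn).1 hfh y0 hy)
  -- Step 2 : basic in B
  obtain ⟨C, ⟨s, hsB, hCs⟩, hy0C, hCsub⟩ :=
    hBbasic (carrier (S n : Y → F)) ⟨(S n : Y → F), (S n).2, rfl⟩
      (carrier ((S f : Y → F) - (S h : Y → F)))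
      ⟨(S f : Y → F) - (S h : Y → F), B.sub_mem (S f).2 (S h).2, rfl⟩ y0 hy0
  subst hCs
  -- Step 3 : compat in B
  obtain ⟨π, hπB, C₉, hC₉, hy0C₉, hπs, hπ0⟩ :=
    hBcompat s hsB (θ (supp (A : Set (X → E)) (n : X → E))) (hmaps hsuppn) y0 hy0nmem
  -- Step 4 : basic in B again
  obtain ⟨Cσ, ⟨σ, hσB, hCσ⟩, hy0Cσ, hCσsub⟩ :=
    hBbasic C₉ hC₉ (carrier s) ⟨s, hsB, rfl⟩ y0 ⟨hy0C₉, hy0C⟩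
  subst hCσ
  -- Step 5 : pull back π and s
  set Sinv : B → A := ⇑(Equiv.ofBijective S hSbij).symm with hSinv
  have hSinv_eq : ∀ b : B, S (Sinv b) = b := fun b =>
    (Equiv.ofBijective S hSbij).apply_symm_apply b
  set μ : A := Sinv ⟨π, hπB⟩ with hμ
  have hSμ : (S μ : Y → F) = π := by rw [hμ, hSinv_eq]
  set ν : A := Sinv ⟨s, hsB⟩ with hν
  have hSν : (S ν : Y → F) = s := by rw [hν, hSinv_eq]
  -- Step 6 : π = s on supp B σ
  have hπs_supp : ∀ y ∈ supp (B : Set (Y → F)) σ, π y = s y := by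
    have hd : carrier (π - s) ∩ carrier σ = ∅ := by
      rw [dis_iff]
      intro y
      by_cases hyσ : σ y = 0
      · right; exact hyσ
      · left
        have : y ∈ carrier σ := hyσ
        have hy9 : y ∈ C₉ := (hCσsub this).1
        rw [Pi.sub_apply, hπs y hy9, sub_self]
    intro y hy
    have := vanish_of_dis (A := (B : Set (Y → F))) (B.sub_mem hπB hsB) hd y hy
    rw [Pi.sub_apply] at this
    exact sub_eq_zero.1 this
  -- Step 7 : Uσ with θ Uσ = supp B σ, μ = ν on Uσ
  have hsuppσ : supp (B : Set (Y → F)) σ ∈ suppSets (B : Set (Y → F)) := ⟨σ, hσB, rfl⟩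
  obtain ⟨Uσ, hUσ, hθUσ⟩ := hsurj hsuppσ
  obtain ⟨dσ, hdσA, hUσ_eq⟩ := hUσ
  have hUσ' : Uσ ∈ suppSets (A : Set (X → E)) := ⟨dσ, hdσA, hUσ_eq⟩
  have hμν : ∀ x ∈ Uσ, (μ : X → E) x = (ν : X → E) x := by
    refine (hiff μ ν Uσ hUσ').2 ?_
    intro y hy
    rw [hSμ, hSν]
    exact hπs_supp y (hθUσ ▸ hy)
  -- Step 8 : ν does not vanish on Uσ; get a piece τ
  have hy0σsupp : y0 ∈ supp (B : Set (Y → F)) σ :=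
    carrier_subset_supp _ σ hy0Cσ
  have hy0s : s y0 ≠ 0 := hy0C
  have hνne : ¬ (∀ x ∈ Uσ, (ν : X → E) x = 0) := by
    intro hν0
    have : ∀ y ∈ θ Uσ, (S ν : Y → F) y = (S 0 : Y → F) y := by
      refine (hiff ν 0 Uσ hUσ').1 ?_
      intro x hx
      rw [hν0 x hx]
      simp
    have hs0 : s y0 = 0 := by
      have := this y0 (hθUσ ▸ hy0σsupp)
      rw [hSν, hS0] at this
      simpa using this
    exact hy0s hs0
  have hνdσ : ¬ (carrier (ν : X → E) ∩ carrier dσ = ∅) := by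
    intro hd
    apply hνne
    intro x hx
    exact vanish_of_dis (A := (A : Set (X → E))) ν.2 hd x (hUσ_eq ▸ hx)
  obtain ⟨x2, hx2⟩ := Set.nonempty_iff_ne_empty.2 hνdσ
  obtain ⟨Cτ, ⟨τ, hτA, hCτ⟩, hx2τ, hCτsub⟩ :=
    hAbasic (carrier (ν : X → E)) ⟨(ν : X → E), ν.2, rfl⟩ (carrier dσ) ⟨dσ, hdσA, rfl⟩ x2 hx2
  subst hCτ
  have hτμ : carrier τ ⊆ carrier (μ : X → E) := by
    intro x hx
    have hxν : x ∈ carrier (ν : X → E) := (hCτsub hx).1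
    have hxdσ : x ∈ carrier dσ := (hCτsub hx).2
    have hxUσ : x ∈ Uσ := hUσ_eq ▸ carrier_subset_supp _ dσ hxdσ
    rw [mem_carrier, hμν x hxUσ]
    exact hxν
  -- Step 9 : μ is disjoint from n
  have hμn : carrier (μ : X → E) ∩ carrier (n : X → E) = ∅ := by
    apply dis_of_vanish
    have : ∀ y ∈ θ (supp (A : Set (X → E)) (n : X → E)),
        (S μ : Y → F) y = (S 0 : Y → F) y := by
      intro y hy
      rw [hSμ, hS0, hπ0 y hy]
      simp
    have hμ0 := (hiff μ 0 _ hsuppn).2 this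
    intro x hx
    have := hμ0 x hx
    simpa using this
  -- Step 10 : τ disjoint from n
  have hτn : carrier (n : X → E) ∩ carrier τ = ∅ := by
    rw [Set.eq_empty_iff_forall_notMem]
    rintro x ⟨hxn, hxτ⟩
    have : x ∈ carrier (μ : X → E) ∩ carrier (n : X → E) := ⟨hτμ hxτ, hxn⟩
    rw [hμn] at this
    exact this
  -- Step 11 : μ does not vanish on supp A τ: get y₂ with π y₂ ≠ 0
  have hsuppτ : supp (A : Set (X → E)) τ ∈ suppSets (A : Set (X → E)) := ⟨τ, hτA, rfl⟩
  have hμτ : ¬ (∀ x ∈ supp (A : Set (X → E)) τ, (μ : X → E) x = ((0 : A) : X → E) x) := by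
    intro hc
    have := hc x2 (carrier_subset_supp _ τ hx2τ)
    simp only [ZeroMemClass.coe_zero, Pi.zero_apply] at this
    exact (hτμ hx2τ) this
  have hy2ex : ¬ (∀ y ∈ θ (supp (A : Set (X → E)) τ), π y = 0) := by
    intro hc
    apply hμτ
    refine (hiff μ 0 _ hsuppτ).2 ?_
    intro y hy
    rw [hSμ, hS0, hc y hy]
    simp
  push_neg at hy2ex
  obtain ⟨y2, hy2mem, hy2π⟩ := hy2ex
  -- Step 12 : θ (supp τ) ⊆ supp B σ
  have hsub12 : θ (supp (A : Set (X → E)) τ) ⊆ supp (B : Set (Y → F)) σ := by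
    rw [← hθUσ]
    apply hmono _ hsuppτ _ hUσ'
    rw [hUσ_eq]
    exact supp_mono_carrier (fun x hx => (hCτsub hx).2)
  -- Step 13 : y₂ ∈ carrier s, hence S n y₂ ≠ 0
  have hy2σ : y2 ∈ supp (B : Set (Y → F)) σ := hsub12 hy2mem
  have hy2s : s y2 ≠ 0 := by
    rw [← hπs_supp y2 hy2σ]
    exact hy2π
  have hy2n : (S n : Y → F) y2 ≠ 0 := (hCsub hy2s).1
  -- Step 14 : but S n vanishes on θ (supp τ)
  have : ∀ x ∈ supp (A : Set (X → E)) τ, (n : X → E) x = ((0 : A) : X → E) x := by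
    intro x hx
    have := vanish_of_dis (A := (A : Set (X → E))) n.2 hτn x hx
    simpa using this
  have := (hiff n 0 _ hsuppτ).1 this y2 hy2mem
  rw [hS0] at this
  simp only [Pi.zero_apply] at this
  exact hy2n this


/-- One perp direction: locally determined data transfers disjointness forward. -/
lemma dir2_perp
    (hAbasic : Basic (A : Set (X → E)))
    (hBbasic : Basic (B : Set (Y → F)))
    (hBcompat : Compatible (B : Set (Y → F)))
    (S : A → B) (hSbij : Function.Bijective S) (hS0 : ((S 0 : Y → F)) = 0)
    (θ : Set X → Set Y)
    (hmaps : Set.MapsTo θ (suppSets (A : Set (X → E))) (suppSets (B : Set (Y → F))))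
    (hsurj : Set.SurjOn θ (suppSets (A : Set (X → E))) (suppSets (B : Set (Y → F))))
    (hmono : ∀ U ∈ suppSets (A : Set (X → E)), ∀ V ∈ suppSets (A : Set (X → E)),
      U ⊆ V → θ U ⊆ θ V)
    (hiff : ∀ f g : A, ∀ U ∈ suppSets (A : Set (X → E)),
      ((∀ x ∈ U, (f : X → E) x = (g : X → E) x) ↔
        ∀ y ∈ θ U, (S f : Y → F) y = (S g : Y → F) y))
    (f g h : A)
    (hp : carrier ((f : X → E) - (h : X → E)) ∩ carrier ((g : X → E) - (h : X → E)) = ∅) :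
    carrier ((S f : Y → F) - (S h : Y → F)) ∩
      carrier ((S g : Y → F) - (S h : Y → F)) = ∅ := by
  classical
  have hUmem : supp (A : Set (X → E)) ((f : X → E) - (h : X → E))
      ∈ suppSets (A : Set (X → E)) := ⟨(f : X → E) - (h : X → E), A.sub_mem f.2 h.2, rfl⟩
  -- g = h on supp (f - h)
  have hgh : ∀ x ∈ supp (A : Set (X → E)) ((f : X → E) - (h : X → E)),
      (g : X → E) x = (h : X → E) x := by
    intro x hx
    have hd : carrier ((g : X → E) - (h : X → E)) ∩
        carrier ((f : X → E) - (h : X → E)) = ∅ := by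
      rw [Set.inter_comm]; exact hp
    have := vanish_of_dis (A := (A : Set (X → E))) (A.sub_mem g.2 h.2) hd x hx
    rw [Pi.sub_apply] at this
    exact sub_eq_zero.1 this
  -- so S g = S h on θ (supp (f-h))
  have hSgh := (hiff g h _ hUmem).1 hgh
  -- pull back (S g - S h)
  set Sinv : B → A := ⇑(Equiv.ofBijective S hSbij).symm with hSinv
  have hSinv_eq : ∀ b : B, S (Sinv b) = b := fun b =>
    (Equiv.ofBijective S hSbij).apply_symm_apply b
  set p : B := ⟨(S g : Y → F) - (S h : Y → F), B.sub_mem (S g).2 (S h).2⟩ with hpdef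
  set nn : A := Sinv p with hnn
  have hSnn : (S nn : Y → F) = (S g : Y → F) - (S h : Y → F) := by
    rw [hnn, hSinv_eq]
  -- nn vanishes on supp (f - h)
  have hnn0 : ∀ x ∈ supp (A : Set (X → E)) ((f : X → E) - (h : X → E)),
      (nn : X → E) x = 0 := by
    have : ∀ y ∈ θ (supp (A : Set (X → E)) ((f : X → E) - (h : X → E))),
        (S nn : Y → F) y = (S 0 : Y → F) y := by
      intro y hy
      rw [hSnn, hS0, Pi.sub_apply, hSgh y hy, sub_self]
      simp
    intro x hx
    have := (hiff nn 0 _ hUmem).2 this x hx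
    simpa using this
  -- nn is disjoint from (f - h)
  have hdis : carrier (nn : X → E) ∩ carrier ((f : X → E) - (h : X → E)) = ∅ :=
    dis_of_vanish hnn0
  -- apply type1
  have := type1 hAbasic hBbasic hBcompat S hSbij hS0 θ hmaps hsurj hmono hiff nn f h hdis
  rw [hSnn] at this
  rw [Set.inter_comm]
  exact this


/-- Core refutation for the "biseparating ⇒ locally determined" direction (half-bridge).
If `q` is disjoint from `S(m+g) - S g` then it is disjoint from `S m`. -/
lemma hb1
    (hAbasic : Basic (A : Set (X → E)))
    (hBbasic : Basic (B : Set (Y → F)))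
    (hAcompat : Compatible (A : Set (X → E)))
    (S : A → B) (hSbij : Function.Bijective S) (hS0 : ((S 0 : Y → F)) = 0)
    (hsep : ∀ f g h : A,
      carrier ((f : X → E) - (h : X → E)) ∩ carrier ((g : X → E) - (h : X → E)) = ∅ ↔
      carrier ((S f : Y → F) - (S h : Y → F)) ∩ carrier ((S g : Y → F) - (S h : Y → F)) = ∅)
    (m g : A) (q : B)
    (hq : carrier (q : Y → F) ∩ carrier ((S (m + g) : Y → F) - (S g : Y → F)) = ∅) :
    carrier (q : Y → F) ∩ carrier (S m : Y → F) = ∅ := by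
  classical
  have perp0 : ∀ a b : A, (carrier (a : X → E) ∩ carrier (b : X → E) = ∅ ↔
      carrier (S a : Y → F) ∩ carrier (S b : Y → F) = ∅) := by
    intro a b
    have := hsep a b 0
    simpa [hS0, sub_zero] using this
  by_contra hne
  obtain ⟨y0, hy0q, hy0m⟩ := Set.nonempty_iff_ne_empty.2 hne
  obtain ⟨Cs, ⟨s, hsB, hCs⟩, hy0s, hCssub⟩ :=
    hBbasic (carrier (q : Y → F)) ⟨(q : Y → F), q.2, rfl⟩
      (carrier (S m : Y → F)) ⟨(S m : Y → F), (S m).2, rfl⟩ y0 ⟨hy0q, hy0m⟩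
  subst hCs
  set Sinv : B → A := ⇑(Equiv.ofBijective S hSbij).symm with hSinvdef
  have hSinv_eq : ∀ b : B, S (Sinv b) = b := fun b =>
    (Equiv.ofBijective S hSbij).apply_symm_apply b
  set r₁ : A := Sinv ⟨s, hsB⟩ with hr₁def
  have hSr₁ : (S r₁ : Y → F) = s := by rw [hr₁def, hSinv_eq]
  set c₁ : A := Sinv (S g + ⟨s, hsB⟩) with hc₁def
  have hSc₁ : (S c₁ : Y → F) = (S g : Y → F) + s := by rw [hc₁def, hSinv_eq]; rfl
  have e1 : (S c₁ : Y → F) - (S g : Y → F) = s := by rw [hSc₁]; abel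
  -- (3) ρ₁ := c₁ - g is disjoint from m
  have hsq : carrier s ∩ carrier ((S (m + g) : Y → F) - (S g : Y → F)) = ∅ := by
    rw [Set.eq_empty_iff_forall_notMem]
    rintro y ⟨hy1, hy2⟩
    rw [Set.eq_empty_iff_forall_notMem] at hq
    exact hq y ⟨(hCssub hy1).1, hy2⟩
  have hρm : carrier ((c₁ : X → E) - (g : X → E)) ∩ carrier (m : X → E) = ∅ := by
    have h3 := (hsep c₁ (m + g) g).2
    have e2 : ((m + g : A) : X → E) - (g : X → E) = (m : X → E) := by simp
    have := h3 (by rw [e1]; exact hsq)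
    rwa [e2] at this
  -- (4)
  have hρvan : ∀ x ∈ supp (A : Set (X → E)) (m : X → E),
      ((c₁ : X → E) - (g : X → E)) x = 0 :=
    vanish_of_dis (A := (A : Set (X → E))) (A.sub_mem c₁.2 g.2) hρm
  -- (5)
  have hr₁supp : supp (A : Set (X → E)) (r₁ : X → E)
      ⊆ supp (A : Set (X → E)) (m : X → E) := by
    apply supp_subset_of_ann
    intro z hzA hzm
    have h1 : carrier ((S ⟨z, hzA⟩ : Y → F)) ∩ carrier ((S m : Y → F)) = ∅ :=
      (perp0 ⟨z, hzA⟩ m).1 hzm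
    have h2 : carrier ((S ⟨z, hzA⟩ : Y → F)) ∩ carrier ((S r₁ : Y → F)) = ∅ := by
      rw [hSr₁, Set.eq_empty_iff_forall_notMem]
      rintro y ⟨hy1, hy2⟩
      rw [Set.eq_empty_iff_forall_notMem] at h1
      exact h1 y ⟨hy1, (hCssub hy2).2⟩
    exact (perp0 ⟨z, hzA⟩ r₁).2 h2
  -- (6)
  have hr₁ρ : carrier (r₁ : X → E) ∩ carrier ((c₁ : X → E) - (g : X → E)) = ∅ := by
    rw [Set.eq_empty_iff_forall_notMem]
    rintro x ⟨hx1, hx2⟩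
    exact hx2 (hρvan x (hr₁supp (carrier_subset_supp _ _ hx1)))
  -- (7,8)
  have hr₁ne : ∃ x, (r₁ : X → E) x ≠ 0 := by
    by_contra hc
    push_neg at hc
    have h0 : r₁ = (0 : A) := Subtype.ext (funext fun x => by simpa using hc x)
    have hs0 : s = 0 := by rw [← hSr₁, h0, hS0]
    rw [mem_carrier, hs0] at hy0s
    exact hy0s rfl
  obtain ⟨x₈, hx₈⟩ := hr₁ne
  have hx₈r₁ : x₈ ∈ carrier (r₁ : X → E) := hx₈
  have hx₈notin : x₈ ∉ supp (A : Set (X → E)) ((c₁ : X → E) - (g : X → E)) := by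
    intro hmem
    exact hx₈ (vanish_of_dis (A := (A : Set (X → E))) r₁.2 hr₁ρ x₈ hmem)
  -- (9) compat in A
  obtain ⟨v, hvA, C₈, hC₈carr, hx₈C₈, hvg, hv0⟩ :=
    hAcompat (g : X → E) g.2 (supp (A : Set (X → E)) ((c₁ : X → E) - (g : X → E)))
      ⟨(c₁ : X → E) - (g : X → E), A.sub_mem c₁.2 g.2, rfl⟩ x₈ hx₈notin
  -- (10) basic in A
  obtain ⟨Cr, ⟨r₂, hr₂A, hCr⟩, hx₈r₂, hr₂sub⟩ :=
    hAbasic C₈ hC₈carr (carrier (r₁ : X → E)) ⟨(r₁ : X → E), r₁.2, rfl⟩ x₈ ⟨hx₈C₈, hx₈r₁⟩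
  subst hCr
  -- (11)
  set vA : A := ⟨v, hvA⟩ with hvAdef
  set r₂' : A := ⟨r₂, hr₂A⟩ with hr₂'def
  set w₀ : A := g - vA with hw₀def
  set w₁ : A := r₂' + w₀ with hw₁def
  have hw₀coe : (w₀ : X → E) = (g : X → E) - v := by rw [hw₀def]; rfl
  have hw₁coe : (w₁ : X → E) = r₂ + ((g : X → E) - v) := by rw [hw₁def, hw₀def]; rfl
  -- (12)
  have hF0X : carrier ((w₀ : X → E) - (g : X → E)) ∩
      carrier ((c₁ : X → E) - (g : X → E)) = ∅ := by
    have hv_dis : carrier v ∩ carrier ((c₁ : X → E) - (g : X → E)) = ∅ :=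
      dis_of_vanish hv0
    have : (w₀ : X → E) - (g : X → E) = -v := by rw [hw₀coe]; abel
    rw [this, carrier_neg]
    exact hv_dis
  have van12 : ∀ y ∈ supp (B : Set (Y → F)) s,
      ((S w₀ : Y → F) - (S g : Y → F)) y = 0 := by
    have hY := (hsep w₀ c₁ g).1 hF0X
    rw [e1] at hY
    exact vanish_of_dis (A := (B : Set (Y → F))) (B.sub_mem (S w₀).2 (S g).2) hY
  -- (13)
  have hF1X : carrier ((w₁ : X → E) - (g : X → E)) ∩
      carrier ((c₁ : X → E) - (g : X → E)) = ∅ := by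
    rw [dis_iff]
    intro x
    by_cases hx : ((c₁ : X → E) - (g : X → E)) x = 0
    · right; exact hx
    · left
      have hxc : x ∈ carrier ((c₁ : X → E) - (g : X → E)) := hx
      have hvx : v x = 0 := hv0 x (carrier_subset_supp _ _ hxc)
      have hr₂x : r₂ x = 0 := by
        by_contra hr
        have hxr₁ : x ∈ carrier (r₁ : X → E) := (hr₂sub hr).2
        rw [Set.eq_empty_iff_forall_notMem] at hr₁ρ
        exact hr₁ρ x ⟨hxr₁, hxc⟩
      rw [hw₁coe, Pi.sub_apply, Pi.add_apply, Pi.sub_apply, hvx, hr₂x]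
      abel
  have van13 : ∀ y ∈ supp (B : Set (Y → F)) s,
      ((S w₁ : Y → F) - (S g : Y → F)) y = 0 := by
    have hY := (hsep w₁ c₁ g).1 hF1X
    rw [e1] at hY
    exact vanish_of_dis (A := (B : Set (Y → F))) (B.sub_mem (S w₁).2 (S g).2) hY
  -- (14)
  have hG0X : carrier (w₀ : X → E) ∩ carrier (r₂' : X → E) = ∅ := by
    rw [dis_iff]
    intro x
    by_cases hx : r₂ x = 0
    · right
      show r₂ x = 0
      exact hx
    · left
      have hxC₈ : x ∈ C₈ := (hr₂sub hx).1
      rw [hw₀coe, Pi.sub_apply, hvg x hxC₈, sub_self]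
  have hG0Y : carrier (S w₀ : Y → F) ∩ carrier (S r₂' : Y → F) = ∅ :=
    (perp0 w₀ r₂').1 hG0X
  -- (15)
  have hG1X : carrier ((w₁ : X → E) - (r₂' : X → E)) ∩
      carrier (((0 : A) : X → E) - (r₂' : X → E)) = ∅ := by
    have e3 : (w₁ : X → E) - (r₂' : X → E) = (w₀ : X → E) := by
      rw [hw₁coe, hw₀coe]
      show r₂ + ((g : X → E) - v) - r₂ = (g : X → E) - v
      abel
    have e4 : ((0 : A) : X → E) - (r₂' : X → E) = -(r₂' : X → E) := by
      simp
    rw [e3, e4, carrier_neg]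
    exact hG0X
  have hG1Y : carrier ((S w₁ : Y → F) - (S r₂' : Y → F)) ∩
      carrier (S r₂' : Y → F) = ∅ := by
    have hY := (hsep w₁ 0 r₂').1 hG1X
    have e5 : (S (0 : A) : Y → F) - (S r₂' : Y → F) = -(S r₂' : Y → F) := by
      rw [hS0]; abel
    rw [e5, carrier_neg] at hY
    exact hY
  -- (16)
  have hsupp16 : supp (B : Set (Y → F)) (S r₂' : Y → F) ⊆ supp (B : Set (Y → F)) s := by
    apply supp_subset_of_ann
    intro p hpB hps
    set zp : A := Sinv ⟨p, hpB⟩ with hzpdef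
    have hSzp : (S zp : Y → F) = p := by rw [hzpdef, hSinv_eq]
    have h1 : carrier (S zp : Y → F) ∩ carrier (S r₁ : Y → F) = ∅ := by
      rw [hSzp, hSr₁]; exact hps
    have h2 : carrier (zp : X → E) ∩ carrier (r₁ : X → E) = ∅ := (perp0 zp r₁).2 h1
    have h3 : carrier (zp : X → E) ∩ carrier (r₂' : X → E) = ∅ := by
      rw [Set.eq_empty_iff_forall_notMem]
      rintro x ⟨hx1, hx2⟩
      rw [Set.eq_empty_iff_forall_notMem] at h2
      exact h2 x ⟨hx1, (hr₂sub hx2).2⟩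
    have h4 := (perp0 zp r₂').1 h3
    rwa [hSzp] at h4
  -- (17)
  have hy₂ex : ∃ y, (S r₂' : Y → F) y ≠ 0 := by
    by_contra hc
    push_neg at hc
    have h0 : S r₂' = S 0 := Subtype.ext (by
      rw [hS0]
      exact funext fun y => hc y)
    have : r₂' = 0 := hSbij.1 h0
    have : r₂ x₈ = 0 := by
      have := congrArg (fun (a : A) => (a : X → E) x₈) this
      simpa using this
    exact hx₈r₂ this
  obtain ⟨y₂, hy₂⟩ := hy₂ex
  have hy₂supp : y₂ ∈ supp (B : Set (Y → F)) s :=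
    hsupp16 (carrier_subset_supp _ _ hy₂)
  -- (18) contradiction
  have e18a : (S w₀ : Y → F) y₂ = (S g : Y → F) y₂ := by
    have := van12 y₂ hy₂supp
    rw [Pi.sub_apply] at this
    exact sub_eq_zero.1 this
  have e18b : (S w₀ : Y → F) y₂ = 0 := by
    by_contra hb
    rw [Set.eq_empty_iff_forall_notMem] at hG0Y
    exact hG0Y y₂ ⟨hb, hy₂⟩
  have e18c : (S g : Y → F) y₂ = 0 := by rw [← e18a]; exact e18b
  have e18d : (S w₁ : Y → F) y₂ = 0 := by
    have := van13 y₂ hy₂supp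
    rw [Pi.sub_apply] at this
    rw [sub_eq_zero.1 this, e18c]
  have e18e : (S w₁ : Y → F) y₂ = (S r₂' : Y → F) y₂ := by
    by_contra hb
    rw [Set.eq_empty_iff_forall_notMem] at hG1Y
    apply hG1Y y₂
    constructor
    · rw [mem_carrier, Pi.sub_apply]
      exact sub_ne_zero.2 hb
    · exact hy₂
  rw [e18d] at e18e
  exact hy₂ e18e.symm


/-- transfer of support inclusion under a base-0 disjointness-preserving bijection -/
lemma supp_transfer_mono
    (S : A → B) (hSbij : Function.Bijective S)
    (hperp0 : ∀ a b : A, carrier (a : X → E) ∩ carrier (b : X → E) = ∅ ↔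
      carrier (S a : Y → F) ∩ carrier (S b : Y → F) = ∅)
    (a b : A) (hab : supp (A : Set (X → E)) (a : X → E) ⊆ supp (A : Set (X → E)) (b : X → E)) :
    supp (B : Set (Y → F)) (S a : Y → F) ⊆ supp (B : Set (Y → F)) (S b : Y → F) := by
  classical
  set Sinv : B → A := ⇑(Equiv.ofBijective S hSbij).symm with hSinvdef
  have hSinv_eq : ∀ b : B, S (Sinv b) = b := fun b =>
    (Equiv.ofBijective S hSbij).apply_symm_apply b
  apply supp_subset_of_ann
  intro p hpB hdis
  have h1 : carrier ((Sinv ⟨p, hpB⟩ : A) : X → E) ∩ carrier (b : X → E) = ∅ := by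
    apply (hperp0 (Sinv ⟨p, hpB⟩) b).2
    rw [hSinv_eq ⟨p, hpB⟩]
    exact hdis
  have h2 : ∀ x ∈ supp (A : Set (X → E)) (a : X → E),
      ((Sinv ⟨p, hpB⟩ : A) : X → E) x = 0 := fun x hx =>
    vanish_of_dis (A := (A : Set (X → E))) (Sinv ⟨p, hpB⟩).2 h1 x (hab hx)
  have h3 : carrier ((Sinv ⟨p, hpB⟩ : A) : X → E) ∩ carrier (a : X → E) = ∅ :=
    dis_of_vanish h2
  have h4 := (hperp0 (Sinv ⟨p, hpB⟩) a).1 h3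
  rwa [hSinv_eq ⟨p, hpB⟩] at h4

/-- the reverse half-bridge, from `hb1` applied to the inverse map -/
lemma hb2
    (hAbasic : Basic (A : Set (X → E)))
    (hBbasic : Basic (B : Set (Y → F)))
    (hBcompat : Compatible (B : Set (Y → F)))
    (S : A → B) (hSbij : Function.Bijective S) (hS0 : ((S 0 : Y → F)) = 0)
    (hsep : ∀ f g h : A,
      carrier ((f : X → E) - (h : X → E)) ∩ carrier ((g : X → E) - (h : X → E)) = ∅ ↔
      carrier ((S f : Y → F) - (S h : Y → F)) ∩ carrier ((S g : Y → F) - (S h : Y → F)) = ∅)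
    (m g : A) (p : B)
    (hp : carrier (p : Y → F) ∩ carrier (S m : Y → F) = ∅) :
    carrier (p : Y → F) ∩ carrier ((S (m + g) : Y → F) - (S g : Y → F)) = ∅ := by
  classical
  have perp0 : ∀ a b : A, (carrier (a : X → E) ∩ carrier (b : X → E) = ∅ ↔
      carrier (S a : Y → F) ∩ carrier (S b : Y → F) = ∅) := by
    intro a b
    have := hsep a b 0
    simpa [hS0, sub_zero] using this
  set Sinv : B → A := ⇑(Equiv.ofBijective S hSbij).symm with hSinvdef
  have hSinv_eq : ∀ b : B, S (Sinv b) = b := fun b =>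
    (Equiv.ofBijective S hSbij).apply_symm_apply b
  have hSinv_eq' : ∀ a : A, Sinv (S a) = a := fun a =>
    (Equiv.ofBijective S hSbij).symm_apply_apply a
  have hSinvbij : Function.Bijective Sinv := (Equiv.ofBijective S hSbij).symm.bijective
  have hSinv0 : ((Sinv 0 : X → E)) = 0 := by
    have hz : S 0 = (0 : B) := Subtype.ext (by rw [hS0]; rfl)
    rw [← hz, hSinv_eq']
    rfl
  have hsepInv : ∀ p' q' r' : B,
      carrier ((p' : Y → F) - (r' : Y → F)) ∩ carrier ((q' : Y → F) - (r' : Y → F)) = ∅ ↔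
      carrier ((Sinv p' : X → E) - (Sinv r' : X → E)) ∩
        carrier ((Sinv q' : X → E) - (Sinv r' : X → E)) = ∅ := by
    intro p' q' r'
    have := hsep (Sinv p') (Sinv q') (Sinv r')
    rw [hSinv_eq p', hSinv_eq q', hSinv_eq r'] at this
    exact this.symm
  -- apply hb1 for Sinv with m' := S(m+g) - S g, g' := S g
  set m' : B := S (m + g) - S g with hm'def
  have hm'g : m' + S g = S (m + g) := by rw [hm'def]; abel
  have hq' : carrier ((Sinv p : A) : X → E) ∩
      carrier ((Sinv (m' + S g) : X → E) - (Sinv (S g) : X → E)) = ∅ := by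
    rw [hm'g, hSinv_eq' (m + g), hSinv_eq' g]
    have e2 : ((m + g : A) : X → E) - (g : X → E) = (m : X → E) := by simp
    rw [e2]
    apply (perp0 (Sinv p) m).2
    rw [hSinv_eq p]
    exact hp
  have hcon := hb1 (A := B) (B := A) hBbasic hAbasic hBcompat Sinv hSinvbij hSinv0
    hsepInv m' (S g) (Sinv p) hq'
  have := (perp0 (Sinv p) (Sinv m')).1 hcon
  rw [hSinv_eq p, hSinv_eq m'] at this
  rw [hm'def] at this
  have ecoe : ((S (m + g) - S g : B) : Y → F) = (S (m + g) : Y → F) - (S g : Y → F) := rfl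
  rwa [ecoe] at this


/-- Direction 1: a biseparating bijection is locally determined. -/
lemma bisep_to_ld
    (hAbasic : Basic (A : Set (X → E)))
    (hBbasic : Basic (B : Set (Y → F)))
    (hAcompat : Compatible (A : Set (X → E)))
    (hBcompat : Compatible (B : Set (Y → F)))
    (S : A → B) (hSbij : Function.Bijective S) (hS0 : ((S 0 : Y → F)) = 0)
    (hsep : ∀ f g h : A,
      carrier ((f : X → E) - (h : X → E)) ∩ carrier ((g : X → E) - (h : X → E)) = ∅ ↔
      carrier ((S f : Y → F) - (S h : Y → F)) ∩ carrier ((S g : Y → F) - (S h : Y → F)) = ∅) :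
    ∃ θ : Set X → Set Y,
      Set.BijOn θ (suppSets (A : Set (X → E))) (suppSets (B : Set (Y → F))) ∧
      (∀ U ∈ suppSets (A : Set (X → E)), ∀ V ∈ suppSets (A : Set (X → E)),
        U ⊆ V → θ U ⊆ θ V) ∧
      ∀ f g : A, ∀ U ∈ suppSets (A : Set (X → E)),
        ((∀ x ∈ U, (f : X → E) x = (g : X → E) x) ↔
          ∀ y ∈ θ U, (S f : Y → F) y = (S g : Y → F) y) := by
  classical
  have perp0 : ∀ a b : A, (carrier (a : X → E) ∩ carrier (b : X → E) = ∅ ↔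
      carrier (S a : Y → F) ∩ carrier (S b : Y → F) = ∅) := by
    intro a b
    have := hsep a b 0
    simpa [hS0, sub_zero] using this
  set Sinv : B → A := ⇑(Equiv.ofBijective S hSbij).symm with hSinvdef
  have hSinv_eq : ∀ b : B, S (Sinv b) = b := fun b =>
    (Equiv.ofBijective S hSbij).apply_symm_apply b
  have hSinv_eq' : ∀ a : A, Sinv (S a) = a := fun a =>
    (Equiv.ofBijective S hSbij).symm_apply_apply a
  have hSinvbij : Function.Bijective Sinv := (Equiv.ofBijective S hSbij).symm.bijective
  have perp0Inv : ∀ p q : B, (carrier (p : Y → F) ∩ carrier (q : Y → F) = ∅ ↔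
      carrier (Sinv p : X → E) ∩ carrier (Sinv q : X → E) = ∅) := by
    intro p q
    have := perp0 (Sinv p) (Sinv q)
    rw [hSinv_eq p, hSinv_eq q] at this
    exact this.symm
  -- transfer of supp equality
  have transfer : ∀ a b : A, supp (A : Set (X → E)) (a : X → E) = supp (A : Set (X → E)) (b : X → E) →
      supp (B : Set (Y → F)) (S a : Y → F) = supp (B : Set (Y → F)) (S b : Y → F) := by
    intro a b hab
    apply Set.Subset.antisymm
    · exact supp_transfer_mono S hSbij perp0 a b (le_of_eq hab)
    · exact supp_transfer_mono S hSbij perp0 b a (le_of_eq hab.symm)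
  have transferInv : ∀ a b : A,
      supp (B : Set (Y → F)) (S a : Y → F) ⊆ supp (B : Set (Y → F)) (S b : Y → F) →
      supp (A : Set (X → E)) (a : X → E) ⊆ supp (A : Set (X → E)) (b : X → E) := by
    intro a b hab
    have := supp_transfer_mono (A := B) (B := A) Sinv hSinvbij perp0Inv (S a) (S b) hab
    rwa [hSinv_eq' a, hSinv_eq' b] at this
  -- generator choice
  have gen : ∀ D, D ∈ suppSets (A : Set (X → E)) →
      ∃ mh : A, supp (A : Set (X → E)) (mh : X → E) = D := by
    rintro D ⟨m0, hm0, rfl⟩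
    exact ⟨⟨m0, hm0⟩, rfl⟩
  choose genF genSpec using gen
  set θ : Set X → Set Y := fun D =>
    if hD : D ∈ suppSets (A : Set (X → E)) then
      supp (B : Set (Y → F)) ((S (genF D hD)) : Y → F)
    else ∅ with hθdef
  have θeq : ∀ D (hD : D ∈ suppSets (A : Set (X → E))),
      θ D = supp (B : Set (Y → F)) ((S (genF D hD)) : Y → F) := by
    intro D hD
    rw [hθdef]
    exact dif_pos hD
  have hmaps : Set.MapsTo θ (suppSets (A : Set (X → E))) (suppSets (B : Set (Y → F))) := by
    intro D hD
    rw [θeq D hD]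
    exact ⟨((S (genF D hD)) : Y → F), (S (genF D hD)).2, rfl⟩
  have hmono : ∀ U ∈ suppSets (A : Set (X → E)), ∀ V ∈ suppSets (A : Set (X → E)),
      U ⊆ V → θ U ⊆ θ V := by
    intro U hU V hV hUV
    rw [θeq U hU, θeq V hV]
    apply supp_transfer_mono S hSbij perp0
    rw [genSpec U hU, genSpec V hV]
    exact hUV
  have hinj : Set.InjOn θ (suppSets (A : Set (X → E))) := by
    intro U hU V hV hUV
    rw [θeq U hU, θeq V hV] at hUV
    have h1 := transferInv _ _ (le_of_eq hUV)
    have h2 := transferInv _ _ (le_of_eq hUV.symm)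
    rw [genSpec U hU, genSpec V hV] at h1 h2
    exact Set.Subset.antisymm h1 h2
  have hsurjOn : Set.SurjOn θ (suppSets (A : Set (X → E))) (suppSets (B : Set (Y → F))) := by
    rintro V ⟨p, hpB, rfl⟩
    have haU : supp (A : Set (X → E)) ((Sinv ⟨p, hpB⟩ : A) : X → E)
        ∈ suppSets (A : Set (X → E)) := ⟨_, (Sinv ⟨p, hpB⟩).2, rfl⟩
    refine ⟨_, haU, ?_⟩
    rw [θeq _ haU]
    have := transfer (genF _ haU) (Sinv ⟨p, hpB⟩) (by rw [genSpec _ haU])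
    rw [this, hSinv_eq]
  refine ⟨θ, ⟨hmaps, hinj, hsurjOn⟩, hmono, ?_⟩
  -- the main iff
  intro f g U hU
  rw [θeq U hU]
  set mh : A := genF U hU with hmhdef
  have hmh : supp (A : Set (X → E)) (mh : X → E) = U := genSpec U hU
  have e2 : ((mh + g : A) : X → E) - (g : X → E) = (mh : X → E) := by simp
  constructor
  · intro hfg y hy
    have hdis : carrier ((f : X → E) - (g : X → E)) ∩ carrier (mh : X → E) = ∅ := by
      apply dis_of_vanish
      intro x hx
      rw [hmh] at hx
      rw [Pi.sub_apply, hfg x hx, sub_self]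
    have h1 : carrier ((f : X → E) - (g : X → E)) ∩
        carrier (((mh + g : A) : X → E) - (g : X → E)) = ∅ := by
      rw [e2]; exact hdis
    have hYP := (hsep f (mh + g) g).1 h1
    have hsub : supp (B : Set (Y → F)) (S mh : Y → F) ⊆
        supp (B : Set (Y → F)) ((S (mh + g) : Y → F) - (S g : Y → F)) := by
      apply supp_subset_of_ann
      intro p hpB hdisp
      exact hb1 hAbasic hBbasic hAcompat S hSbij hS0 hsep mh g ⟨p, hpB⟩ hdisp
    have hvan := vanish_of_dis (A := (B : Set (Y → F)))
      (B.sub_mem (S f).2 (S g).2) hYP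
    have := hvan y (hsub hy)
    rw [Pi.sub_apply] at this
    exact sub_eq_zero.1 this
  · intro hSfg x hx
    have hdisY : carrier ((S f : Y → F) - (S g : Y → F)) ∩
        carrier (S mh : Y → F) = ∅ := by
      apply dis_of_vanish
      intro y hy
      rw [Pi.sub_apply, hSfg y hy, sub_self]
    have hp : carrier ((S f - S g : B) : Y → F) ∩ carrier (S mh : Y → F) = ∅ := hdisY
    have hb := hb2 hAbasic hBbasic hBcompat S hSbij hS0 hsep mh g (S f - S g) hp
    have hXP := (hsep f (mh + g) g).2 (by
      have ecoe : ((S f - S g : B) : Y → F) = (S f : Y → F) - (S g : Y → F) := rfl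
      rwa [ecoe] at hb)
    rw [e2] at hXP
    have := vanish_of_dis (A := (A : Set (X → E))) (A.sub_mem f.2 g.2) hXP x (hmh ▸ hx)
    rw [Pi.sub_apply] at this
    exact sub_eq_zero.1 this

/-- Direction 2: a locally determined bijection is biseparating. -/
lemma ld_to_bisep
    (hAbasic : Basic (A : Set (X → E)))
    (hBbasic : Basic (B : Set (Y → F)))
    (hAcompat : Compatible (A : Set (X → E)))
    (hBcompat : Compatible (B : Set (Y → F)))
    (S : A → B) (hSbij : Function.Bijective S) (hS0 : ((S 0 : Y → F)) = 0)
    (θ : Set X → Set Y)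
    (hbijθ : Set.BijOn θ (suppSets (A : Set (X → E))) (suppSets (B : Set (Y → F))))
    (hmono : ∀ U ∈ suppSets (A : Set (X → E)), ∀ V ∈ suppSets (A : Set (X → E)),
      U ⊆ V → θ U ⊆ θ V)
    (hiff : ∀ f g : A, ∀ U ∈ suppSets (A : Set (X → E)),
      ((∀ x ∈ U, (f : X → E) x = (g : X → E) x) ↔
        ∀ y ∈ θ U, (S f : Y → F) y = (S g : Y → F) y)) :
    ∀ f g h : A,
      carrier ((f : X → E) - (h : X → E)) ∩ carrier ((g : X → E) - (h : X → E)) = ∅ ↔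
      carrier ((S f : Y → F) - (S h : Y → F)) ∩ carrier ((S g : Y → F) - (S h : Y → F)) = ∅ := by
  classical
  set Sinv : B → A := ⇑(Equiv.ofBijective S hSbij).symm with hSinvdef
  have hSinv_eq : ∀ b : B, S (Sinv b) = b := fun b =>
    (Equiv.ofBijective S hSbij).apply_symm_apply b
  have hSinv_eq' : ∀ a : A, Sinv (S a) = a := fun a =>
    (Equiv.ofBijective S hSbij).symm_apply_apply a
  have hSinvbij : Function.Bijective Sinv := (Equiv.ofBijective S hSbij).symm.bijective
  have hSinv0 : ((Sinv 0 : X → E)) = 0 := by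
    have hz : S 0 = (0 : B) := Subtype.ext (by rw [hS0]; rfl)
    rw [← hz, hSinv_eq']
    rfl
  -- inverse θ
  have gen' : ∀ V, V ∈ suppSets (B : Set (Y → F)) →
      ∃ U, U ∈ suppSets (A : Set (X → E)) ∧ θ U = V := by
    intro V hV
    obtain ⟨U, hU, hθU⟩ := hbijθ.surjOn hV
    exact ⟨U, hU, hθU⟩
  choose g1 g1Spec using gen'
  set θ' : Set Y → Set X := fun V =>
    if hV : V ∈ suppSets (B : Set (Y → F)) then g1 V hV else ∅ with hθ'def
  have θ'eq : ∀ V (hV : V ∈ suppSets (B : Set (Y → F))), θ' V = g1 V hV := by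
    intro V hV
    rw [hθ'def]
    exact dif_pos hV
  have maps' : ∀ V (hV : V ∈ suppSets (B : Set (Y → F))),
      θ' V ∈ suppSets (A : Set (X → E)) := by
    intro V hV
    rw [θ'eq V hV]
    exact (g1Spec V hV).1
  have hθθ' : ∀ V (hV : V ∈ suppSets (B : Set (Y → F))), θ (θ' V) = V := by
    intro V hV
    rw [θ'eq V hV]
    exact (g1Spec V hV).2
  -- order reflection
  have ord : ∀ U ∈ suppSets (A : Set (X → E)), ∀ U' ∈ suppSets (A : Set (X → E)),
      θ U ⊆ θ U' → U ⊆ U' := by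
    rintro U hU U' hU' hsub
    obtain ⟨a, haA, rfl⟩ := hU
    obtain ⟨a', ha'A, rfl⟩ := hU'
    apply supp_subset_of_ann
    intro z hzA hdis
    have hz1 : ∀ x ∈ supp (A : Set (X → E)) a', ((⟨z, hzA⟩ : A) : X → E) x = ((0 : A) : X → E) x := by
      intro x hx
      have := vanish_of_dis (A := (A : Set (X → E))) hzA hdis x hx
      simpa using this
    have hz2 := (hiff ⟨z, hzA⟩ 0 _ ⟨a', ha'A, rfl⟩).1 hz1
    have hz3 : ∀ y ∈ θ (supp (A : Set (X → E)) a),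
        ((S ⟨z, hzA⟩ : Y → F)) y = ((S 0 : Y → F)) y := fun y hy => hz2 y (hsub hy)
    have hz4 := (hiff ⟨z, hzA⟩ 0 _ ⟨a, haA, rfl⟩).2 hz3
    apply dis_of_vanish
    intro x hx
    have := hz4 x hx
    simpa using this
  have mono' : ∀ V ∈ suppSets (B : Set (Y → F)), ∀ V' ∈ suppSets (B : Set (Y → F)),
      V ⊆ V' → θ' V ⊆ θ' V' := by
    intro V hV V' hV' hsub
    apply ord _ (maps' V hV) _ (maps' V' hV')
    rw [hθθ' V hV, hθθ' V' hV']
    exact hsub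
  have surj' : Set.SurjOn θ' (suppSets (B : Set (Y → F))) (suppSets (A : Set (X → E))) := by
    intro U hU
    refine ⟨θ U, hbijθ.mapsTo hU, ?_⟩
    apply hbijθ.injOn (maps' _ (hbijθ.mapsTo hU)) hU
    exact hθθ' _ (hbijθ.mapsTo hU)
  have iff' : ∀ p q : B, ∀ V ∈ suppSets (B : Set (Y → F)),
      ((∀ y ∈ V, (p : Y → F) y = (q : Y → F) y) ↔
        ∀ x ∈ θ' V, ((Sinv p : A) : X → E) x = ((Sinv q : A) : X → E) x) := by
    intro p q V hV
    have := hiff (Sinv p) (Sinv q) (θ' V) (maps' V hV)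
    rw [hSinv_eq p, hSinv_eq q, hθθ' V hV] at this
    exact this.symm
  intro f g h
  constructor
  · exact dir2_perp hAbasic hBbasic hBcompat S hSbij hS0 θ hbijθ.mapsTo hbijθ.surjOn
      hmono hiff f g h
  · intro hY
    have := dir2_perp (A := B) (B := A) hBbasic hAbasic hAcompat Sinv hSinvbij hSinv0
      θ' (fun V hV => maps' V hV) surj' mono' iff' (S f) (S g) (S h) hY
    rwa [hSinv_eq' f, hSinv_eq' g, hSinv_eq' h] at this

end Core

/-- If `A(X,E)` and `A(Y,F)` are basic and compatible, a bijection
`T : A(X,E) → A(Y,F)` is biseparating iff it is locally determined. -/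
theorem stmt3 [AddCommGroup E] [Module ℝ E] [AddCommGroup F] [Module ℝ F]
    (A : Submodule ℝ (X → E)) (B : Submodule ℝ (Y → F))
    (hAbasic : Basic (A : Set (X → E))) (hAcompat : Compatible (A : Set (X → E)))
    (hBbasic : Basic (B : Set (Y → F))) (hBcompat : Compatible (B : Set (Y → F)))
    (T : A → B) (hbij : Function.Bijective T) :
    Biseparating A B T ↔ LocallyDetermined (A : Set (X → E)) (B : Set (Y → F)) T := by
  classical
  -- normalize so that the map sends 0 to 0
  set S : A → B := fun a => T a - T 0 with hSdef
  have hSbij : Function.Bijective S := by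
    constructor
    · intro a b hab
      apply hbij.1
      have h1 : T a - T 0 = T b - T 0 := hab
      exact sub_left_inj.1 h1
    · intro b
      obtain ⟨a, ha⟩ := hbij.2 (b + T 0)
      refine ⟨a, ?_⟩
      show T a - T 0 = b
      rw [ha]
      abel
  have hS0 : ((S 0 : Y → F)) = 0 := by
    show ((T 0 - T 0 : B) : Y → F) = 0
    simp
  have hScoe : ∀ f h : A, (S f : Y → F) - (S h : Y → F) =
      (T f : Y → F) - (T h : Y → F) := by
    intro f h
    show ((T f - T 0 : B) : Y → F) - ((T h - T 0 : B) : Y → F) = _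
    simp only [AddSubgroupClass.coe_sub]
    abel
  have hcarr : ∀ f h : A, carrier ((S f : Y → F) - (S h : Y → F)) =
      carrier ((T f : Y → F) - (T h : Y → F)) := by
    intro f h
    rw [hScoe f h]
  have hpt : ∀ (f g : A) (y : Y),
      ((S f : Y → F) y = (S g : Y → F) y ↔ (T f : Y → F) y = (T g : Y → F) y) := by
    intro f g y
    show ((T f - T 0 : B) : Y → F) y = ((T g - T 0 : B) : Y → F) y ↔ _
    simp only [AddSubgroupClass.coe_sub, Pi.sub_apply]
    exact sub_left_inj
  constructor
  · rintro ⟨-, hsepT⟩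
    have hsepS : ∀ f g h : A,
        carrier ((f : X → E) - (h : X → E)) ∩ carrier ((g : X → E) - (h : X → E)) = ∅ ↔
        carrier ((S f : Y → F) - (S h : Y → F)) ∩
          carrier ((S g : Y → F) - (S h : Y → F)) = ∅ := by
      intro f g h
      rw [hcarr f h, hcarr g h]
      exact hsepT f g h
    obtain ⟨θ, hbijθ, hmono, hiffS⟩ :=
      bisep_to_ld hAbasic hBbasic hAcompat hBcompat S hSbij hS0 hsepS
    refine ⟨θ, hbijθ, hmono, ?_⟩
    intro f g U hU
    rw [hiffS f g U hU]
    constructor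
    · intro h1 y hy
      exact (hpt f g y).1 (h1 y hy)
    · intro h1 y hy
      exact (hpt f g y).2 (h1 y hy)
  · rintro ⟨θ, hbijθ, hmono, hiffT⟩
    have hiffS : ∀ f g : A, ∀ U ∈ suppSets (A : Set (X → E)),
        ((∀ x ∈ U, (f : X → E) x = (g : X → E) x) ↔
          ∀ y ∈ θ U, (S f : Y → F) y = (S g : Y → F) y) := by
      intro f g U hU
      rw [hiffT f g U hU]
      constructor
      · intro h1 y hy
        exact (hpt f g y).2 (h1 y hy)
      · intro h1 y hy
        exact (hpt f g y).1 (h1 y hy)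
    refine ⟨hbij, fun f g h => ?_⟩
    have := ld_to_bisep hAbasic hBbasic hAcompat hBcompat S hSbij hS0 θ hbijθ
      hmono hiffS f g h
    rw [hcarr f h, hcarr g h] at this
    exact this

end Stmt3
end

section
/- Let X, Y be completely regular Hausdorff topological spaces and E, F nonzero Hausdorff topological real vector spaces. Let A(X,E) = C(X,E) or C_*(X,E) and A(Y,F) = C(Y,F) or C_*(Y,F), and suppose T: A(X,E) → A(Y,F) is a biseparating map. Then there exists a homeomorphism φ: βX → βY such that for all f, g ∈ A(X,E) and every open set U ⊆ βX: f = g on U ∩ X if and only if Tf = Tg on φ(U) ∩ Y. -/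
/-!
Call `p ∈ βX` a support point of `y ∈ Y` if every neighbourhood of `p` contains the set where
some `f, g` differ although `Tf y ≠ Tg y`. Interpolating with Urysohn functions of `βX`,
biseparation shows that if `{f ≠ g}` and `{f' ≠ g'}` have disjoint closures in `βX`, then
`Tf y ≠ Tg y` forces `Tf' y = Tg' y`; hence `Tf y ≠ Tg y` puts every support point of `y` in the
closure of `{f ≠ g}`. Every `y` has a support point: otherwise a partition of unity on the
compact space `βX` would connect two constants `T⁻¹a`, `T⁻¹b` by steps that do not change the
value at `y`. A choice of support points is a continuous map `Y → βX`, and doing the same for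
`T⁻¹` yields a map `X → βY`; their Stone–Čech extensions are mutually inverse.
-/

open Set

namespace Stmt4

variable {X Y E F : Type*}

/-- The space of continuous functions, as a set of functions. -/
def Cset (X E : Type*) [TopologicalSpace X] [TopologicalSpace E] : Set (X → E) :=
  {f | Continuous f}

/-- The space of bounded continuous functions (image von Neumann bounded, i.e. absorbed
by every neighborhood of `0`), as a set of functions. -/
def CbSet (X E : Type*) [TopologicalSpace X] [TopologicalSpace E]
    [AddCommGroup E] [Module ℝ E] : Set (X → E) :=
  {f | Continuous f ∧ Bornology.IsVonNBounded ℝ (Set.range f)}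

/-- `T` is biseparating: a bijection such that `f, g` are disjoint with respect to `h`
iff `Tf, Tg` are disjoint with respect to `Th`. -/
def Biseparating {A : Set (X → E)} {B : Set (Y → F)} (T : A → B) : Prop :=
  Function.Bijective T ∧ ∀ f g h : A,
    ({x | (f : X → E) x ≠ (h : X → E) x} ∩ {x | (g : X → E) x ≠ (h : X → E) x} = ∅ ↔
      {y | (T f : Y → F) y ≠ (T h : Y → F) y} ∩ {y | (T g : Y → F) y ≠ (T h : Y → F) y} = ∅)

def neLocus (f g : X → E) : Set X := {x | f x ≠ g x}

lemma neLocus_comm (f g : X → E) : neLocus f g = neLocus g f := by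
  ext x
  exact ne_comm

lemma inter_neLocus_eq_empty_iff {f g h : X → E} :
    neLocus f h ∩ neLocus g h = ∅ ↔ ∀ x, f x = h x ∨ g x = h x := by
  simp [eq_empty_iff_forall_notMem, neLocus, or_iff_not_imp_left]

lemma isVonNBounded_range_smul [TopologicalSpace E] [AddCommGroup E] [Module ℝ E]
    [ContinuousSMul ℝ E] {u : X → ℝ} {h : X → E} (hu : ∀ x, |u x| ≤ 1)
    (hh : Bornology.IsVonNBounded ℝ (range h)) :
    Bornology.IsVonNBounded ℝ (range fun x => u x • h x) := by
  intro V hV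
  obtain ⟨W, ⟨hW, hWb⟩, hWV⟩ := (nhds_basis_balanced ℝ E).mem_iff.mp hV
  filter_upwards [hh hW] with c hc
  rintro _ ⟨x, rfl⟩
  obtain ⟨w, hw, hwx⟩ := mem_smul_set.mp (hc (mem_range_self x))
  exact mem_smul_set.mpr ⟨u x • w, hWV (hWb.smul_mem (by simpa using hu x) hw),
    by rw [smul_comm, hwx]⟩

section Admissible

open AffineMap

variable [TopologicalSpace X] [TopologicalSpace E] [AddCommGroup E] [Module ℝ E]

structure IsAdmissible (A : Set (X → E)) : Prop where
  continuous_of_mem : ∀ f ∈ A, Continuous f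
  const_mem : ∀ e : E, (fun _ => e) ∈ A
  lineMap_mem : ∀ f ∈ A, ∀ g ∈ A, ∀ u : X → ℝ, Continuous u → (∀ x, u x ∈ Icc (0 : ℝ) 1) →
    (fun x => lineMap (f x) (g x) (u x)) ∈ A

lemma IsAdmissible.eq_of_partition {A : Set (X → E)} (hA : IsAdmissible A)
    {ι α : Type*} [Fintype ι] (ρ : ι → X → ℝ) (hρ : ∀ i, Continuous (ρ i))
    (hρ0 : ∀ i x, 0 ≤ ρ i x) (hρ1 : ∀ x, ∑ i, ρ i x = 1) {N : A → α}
    (hN : ∀ i (f g : A), neLocus (f : X → E) g ⊆ Function.support (ρ i) → N f = N g)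
    (f g : A) : N f = N g := by
  classical
  have hsum (s : Finset ι) (x : X) : ∑ i ∈ s, ρ i x ∈ Icc (0 : ℝ) 1 :=
    ⟨Finset.sum_nonneg fun i _ => hρ0 i x,
      hρ1 x ▸ Finset.sum_le_univ_sum_of_nonneg fun i => hρ0 i x⟩
  let G (s : Finset ι) : A :=
    ⟨fun x => lineMap ((g : X → E) x) ((f : X → E) x) (∑ i ∈ s, ρ i x),
    hA.lineMap_mem _ g.2 _ f.2 _ (continuous_finsetSum _ fun i _ => hρ i) (hsum s)⟩
  have hG (s : Finset ι) : N (G s) = N g := by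
    induction s using Finset.induction_on with
    | empty => congr; ext x; simp [G]
    | insert i s hi ih =>
      rw [← ih]
      refine hN i _ _ fun x hx => Function.mem_support.mpr fun h0 => hx ?_
      simp [G, Finset.sum_insert hi, h0]
  have hGuniv : G Finset.univ = f := Subtype.ext <| funext fun x => by simp [G, hρ1]
  rw [← hGuniv, hG]

variable [IsTopologicalAddGroup E] [ContinuousSMul ℝ E]

lemma isAdmissible_cset : IsAdmissible (Cset X E) where
  continuous_of_mem _ hf := hf
  const_mem _ := continuous_const
  lineMap_mem _ hf _ hg _ hu _ := hf.lineMap hg hu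

lemma isAdmissible_cbSet : IsAdmissible (CbSet X E) where
  continuous_of_mem _ hf := hf.1
  const_mem e := ⟨continuous_const,
    (Bornology.isVonNBounded_singleton e).subset range_const_subset⟩
  lineMap_mem f hf g hg u hu hu01 := by
    refine ⟨hf.1.lineMap hg.1 hu, Bornology.IsVonNBounded.subset ?_
      ((isVonNBounded_range_smul (u := u) (h := fun x => g x - f x)
        (fun x => abs_le.mpr ⟨by linarith [(hu01 x).1], (hu01 x).2⟩)
        ((hg.2.sub hf.2).subset ?_)).add hf.2)⟩
    · rintro _ ⟨x, rfl⟩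
      exact ⟨_, mem_range_self x, _, mem_range_self x, (lineMap_apply_module' _ _ _).symm⟩
    · rintro _ ⟨x, rfl⟩
      exact sub_mem_sub (mem_range_self x) (mem_range_self x)

lemma IsAdmissible.of_cset_or_cbSet {A : Set (X → E)} (hA : A = Cset X E ∨ A = CbSet X E) :
    IsAdmissible A := by
  rcases hA with rfl | rfl
  exacts [isAdmissible_cset, isAdmissible_cbSet]

end Admissible

namespace Biseparating

variable {A : Set (X → E)} {B : Set (Y → F)} {T : A → B}

lemma apply_eq_or_apply_eq (hT : Biseparating T) {f g h : A}
    (hfg : ∀ x, (f : X → E) x = (h : X → E) x ∨ (g : X → E) x = (h : X → E) x) (y : Y) :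
    (T f : Y → F) y = (T h : Y → F) y ∨ (T g : Y → F) y = (T h : Y → F) y :=
  inter_neLocus_eq_empty_iff.mp ((hT.2 f g h).mp (inter_neLocus_eq_empty_iff.mpr hfg)) y

lemma apply_eq_of_eqOn (hT : Biseparating T) {f g w : A} {y : Y}
    (hw : EqOn (w : X → E) f (neLocus (f : X → E) g))
    (hy : (T f : Y → F) y ≠ (T g : Y → F) y) : (T w : Y → F) y = (T f : Y → F) y :=
  (hT.apply_eq_or_apply_eq (g := g) (h := f)
    (fun _ => or_iff_not_imp_right.mpr fun hx => hw (Ne.symm hx)) y).resolve_right (Ne.symm hy)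

lemma apply_eq_of_separated [TopologicalSpace X] [TopologicalSpace E] [AddCommGroup E]
    [Module ℝ E] (hT : Biseparating T) (hA : IsAdmissible A) {f g f' g' : A} {y : Y}
    {u : X → ℝ} (hu : Continuous u) (hu01 : ∀ x, u x ∈ Icc (0 : ℝ) 1)
    (hu0 : ∀ x ∈ neLocus (f : X → E) g, u x = 0)
    (hu1 : ∀ x ∈ neLocus (f' : X → E) g', u x = 1)
    (hy : (T f : Y → F) y ≠ (T g : Y → F) y) : (T f' : Y → F) y = (T g' : Y → F) y := by
  by_contra hy'
  let mix (h : A) : A := ⟨fun x => AffineMap.lineMap ((h : X → E) x) ((f' : X → E) x) (u x),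
    hA.lineMap_mem _ h.2 _ f'.2 u hu hu01⟩
  have mix_eq (h : A) {s : Set X} (hs : ∀ x ∈ s, u x = 0) :
      EqOn (mix h : X → E) (h : X → E) s :=
    fun x hx => by simp [mix, hs x hx]
  have mix_eq_f' (h : A) : EqOn (mix h : X → E) f' (neLocus (f' : X → E) g') :=
    fun x hx => by simp [mix, hu1 x hx]
  apply hy
  calc (T f : Y → F) y = (T (mix f) : Y → F) y := (hT.apply_eq_of_eqOn (mix_eq f hu0) hy).symm
    _ = (T f' : Y → F) y := hT.apply_eq_of_eqOn (mix_eq_f' f) hy'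
    _ = (T (mix g) : Y → F) y := (hT.apply_eq_of_eqOn (mix_eq_f' g) hy').symm
    _ = (T g : Y → F) y :=
      hT.apply_eq_of_eqOn (mix_eq g (neLocus_comm (f : X → E) g ▸ hu0)) (Ne.symm hy)

lemma symm (hT : Biseparating T) : Biseparating (Equiv.ofBijective T hT.1).symm := by
  refine ⟨Equiv.bijective _, fun f g h => ?_⟩
  have := hT.2 ((Equiv.ofBijective T hT.1).symm f) ((Equiv.ofBijective T hT.1).symm g)
    ((Equiv.ofBijective T hT.1).symm h)
  simp only [Equiv.ofBijective_apply_symm_apply] at this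
  exact this.symm

end Biseparating

section SupportPoints

variable [TopologicalSpace X] [TopologicalSpace E] [AddCommGroup E] [Module ℝ E]
  {A : Set (X → E)} {B : Set (Y → F)} {T : A → B}

def supportPoints (T : A → B) (y : Y) : Set (StoneCech X) :=
  {p | ∀ W, IsOpen W → p ∈ W → ∃ f g : A,
    neLocus (f : X → E) g ⊆ stoneCechUnit ⁻¹' W ∧ (T f : Y → F) y ≠ (T g : Y → F) y}

lemma mem_closure_of_mem_supportPoints (hT : Biseparating T) (hA : IsAdmissible A) {y : Y}
    {p : StoneCech X} (hp : p ∈ supportPoints T y) {f g : A}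
    (hfg : (T f : Y → F) y ≠ (T g : Y → F) y) :
    p ∈ closure (stoneCechUnit '' neLocus (f : X → E) g) := by
  by_contra hout
  obtain ⟨W, hWo, hpW, hWcl⟩ := normal_exists_closure_subset isClosed_singleton
    isClosed_closure.isOpen_compl (singleton_subset_iff.mpr hout)
  obtain ⟨f', g', hW, hfg'⟩ := hp W hWo (singleton_subset_iff.mp hpW)
  obtain ⟨v, hv0, hv1, hv01⟩ := exists_continuous_zero_one_of_isClosed isClosed_closure
    isClosed_closure (disjoint_compl_left.mono_left hWcl)
  exact hfg (hT.apply_eq_of_separated hA (v.continuous.comp continuous_stoneCechUnit)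
    (fun _ => hv01 _) (fun x hx => hv0 (subset_closure (hW hx)))
    (fun x hx => hv1 (subset_closure (mem_image_of_mem _ hx))) hfg')

variable [TopologicalSpace Y]

lemma apply_eq_of_forall_mem_image (hT : Biseparating T) (hA : IsAdmissible A)
    (Φ : StoneCech X ≃ₜ StoneCech Y) (hΦ : ∀ y, Φ.symm (stoneCechUnit y) ∈ supportPoints T y)
    {f g : A} {U : Set (StoneCech X)} (hU : IsOpen U)
    (hfg : ∀ x : X, stoneCechUnit x ∈ U → (f : X → E) x = (g : X → E) x)
    {y : Y} (hy : stoneCechUnit y ∈ Φ '' U) : (T f : Y → F) y = (T g : Y → F) y := by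
  by_contra hne
  rw [Φ.image_eq_preimage_symm] at hy
  obtain ⟨_, hxU, x, hx, rfl⟩ := mem_closure_iff.mp
    (mem_closure_of_mem_supportPoints hT hA (hΦ y) hne) U hU hy
  exact hx (hfg x hxU)

variable [TopologicalSpace F] [AddCommGroup F] [Module ℝ F]

lemma supportPoints_nonempty [Nontrivial F] (hT : Biseparating T) (hA : IsAdmissible A)
    (hB : IsAdmissible B) (y : Y) : (supportPoints T y).Nonempty := by
  by_contra hempty
  have hnull (p : StoneCech X) : ∃ W, IsOpen W ∧ p ∈ W ∧ ∀ f g : A,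
      neLocus (f : X → E) g ⊆ stoneCechUnit ⁻¹' W → (T f : Y → F) y = (T g : Y → F) y := by
    by_contra! h
    exact hempty ⟨p, h⟩
  choose W hWo hpW hWnull using hnull
  obtain ⟨t, ht⟩ := isCompact_univ.elim_finite_subcover W hWo
    fun p _ => mem_iUnion.mpr ⟨p, hpW p⟩
  obtain ⟨ρ, hρW⟩ := PartitionOfUnity.exists_isSubordinate isClosed_univ (fun i : t => W i)
    (fun i => hWo i) (by simpa [iUnion_subtype] using ht)
  obtain ⟨a, b, hab⟩ := exists_pair_ne F
  obtain ⟨f, hf⟩ := hT.1.2 ⟨fun _ => a, hB.const_mem a⟩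
  obtain ⟨g, hg⟩ := hT.1.2 ⟨fun _ => b, hB.const_mem b⟩
  have hfg := hA.eq_of_partition (fun i => ρ i ∘ stoneCechUnit)
    (fun i => (ρ i).continuous.comp continuous_stoneCechUnit) (fun i _ => ρ.nonneg i _)
    (fun x => by simpa [finsum_eq_sum_of_fintype] using ρ.sum_eq_one (mem_univ (stoneCechUnit x)))
    (N := fun h => (T h : Y → F) y)
    (fun i f g hfg => hWnull i f g fun x hx => hρW i (subset_tsupport _ (hfg hx))) f g
  simp only [hf, hg] at hfg
  exact hab hfg

lemma continuous_of_mem_supportPoints [T2Space F] (hT : Biseparating T) (hA : IsAdmissible A)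
    (hB : IsAdmissible B) {φ : Y → StoneCech X} (hφ : ∀ y, φ y ∈ supportPoints T y) :
    Continuous φ := by
  refine continuous_iff_continuousAt.mpr fun y₀ => tendsto_nhds.mpr fun N hNo hN => ?_
  obtain ⟨W, hWo, hW, hWN⟩ := normal_exists_closure_subset isClosed_singleton hNo
    (singleton_subset_iff.mpr hN)
  obtain ⟨f, g, hfgW, hfg⟩ := hφ y₀ W hWo (singleton_subset_iff.mp hW)
  filter_upwards [(isOpen_ne_fun (hB.continuous_of_mem _ (T f).2)
    (hB.continuous_of_mem _ (T g).2)).mem_nhds hfg] with y hy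
  exact hWN (closure_mono (image_subset_iff.mpr hfgW)
    (mem_closure_of_mem_supportPoints hT hA (hφ y) hy))

lemma stoneCechExtend_apply_of_mem_supportPoints [Nontrivial E] [T2Space F]
    (hT : Biseparating T) (hA : IsAdmissible A) (hB : IsAdmissible B)
    {φ : Y → StoneCech X} (hφ : ∀ y, φ y ∈ supportPoints T y)
    {S : B → A} (hS : Biseparating S) (hST : ∀ f, S (T f) = f)
    {ψ : X → StoneCech Y} (hψ : ∀ x, ψ x ∈ supportPoints S x) (x : X) :
    stoneCechExtend (continuous_of_mem_supportPoints hT hA hB hφ) (ψ x) = stoneCechUnit x := by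
  by_contra hne
  obtain ⟨O, O', hO, hO', hψO, hxO', hOO'⟩ := t2_separation hne
  obtain ⟨W, hWo, hxW, hWO'⟩ := normal_exists_closure_subset isClosed_singleton hO'
    (singleton_subset_iff.mpr hxO')
  obtain ⟨v, hv0, hv1, hv01⟩ := exists_continuous_zero_one_of_isClosed hWo.isClosed_compl
    isClosed_singleton (disjoint_singleton_right.mpr fun h => h (singleton_subset_iff.mp hxW))
  -- `f` differs from the constant `g` at `x` but only inside `W`, so the points `y` with
  -- `Tf y ≠ Tg y`, which accumulate at `ψ x`, have `φ y ∈ closure W ⊆ O'`.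
  obtain ⟨a, b, hab⟩ := exists_pair_ne E
  let g : A := ⟨fun _ => b, hA.const_mem b⟩
  let f : A := ⟨fun x' => AffineMap.lineMap b a (v (stoneCechUnit x')),
    hA.lineMap_mem _ g.2 _ (hA.const_mem a) _ (v.continuous.comp continuous_stoneCechUnit)
      fun _ => hv01 _⟩
  have hfgW : neLocus (f : X → E) g ⊆ stoneCechUnit ⁻¹' W := fun x' hx' =>
    by_contra fun h => hx' (by simp [f, g, hv0 h])
  have hfgx : (S (T f) : X → E) x ≠ (S (T g) : X → E) x := by
    simpa [hST, f, g, hv1 (mem_singleton _)] using hab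
  obtain ⟨_, hyO, y, hy, rfl⟩ := mem_closure_iff.mp
    (mem_closure_of_mem_supportPoints hS hB (hψ x) hfgx) _
    (hO.preimage (continuous_stoneCechExtend _)) hψO
  rw [mem_preimage, stoneCechExtend_stoneCechUnit] at hyO
  exact disjoint_left.mp hOO' hyO (hWO' (closure_mono (image_subset_iff.mpr hfgW)
    (mem_closure_of_mem_supportPoints hT hA (hφ y) hy)))

end SupportPoints

lemma leftInverse_stoneCechExtend [TopologicalSpace X] [TopologicalSpace Y]
    {φ : Y → StoneCech X} {ψ : X → StoneCech Y} (hφ : Continuous φ) (hψ : Continuous ψ)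
    (hφψ : ∀ x, stoneCechExtend hφ (ψ x) = stoneCechUnit x) :
    Function.LeftInverse (stoneCechExtend hφ) (stoneCechExtend hψ) :=
  congrFun <| stoneCech_hom_ext ((continuous_stoneCechExtend hφ).comp
    (continuous_stoneCechExtend hψ)) continuous_id <| funext fun x => by
      simp [stoneCechExtend_stoneCechUnit, hφψ]

lemma exists_homeomorph_stoneCech [TopologicalSpace X] [TopologicalSpace Y]
    {φ : Y → StoneCech X} {ψ : X → StoneCech Y} (hφ : Continuous φ) (hψ : Continuous ψ)
    (hφψ : ∀ x, stoneCechExtend hφ (ψ x) = stoneCechUnit x)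
    (hψφ : ∀ y, stoneCechExtend hψ (φ y) = stoneCechUnit y) :
    ∃ Φ : StoneCech X ≃ₜ StoneCech Y,
      (∀ x, Φ (stoneCechUnit x) = ψ x) ∧ ∀ y, Φ.symm (stoneCechUnit y) = φ y :=
  ⟨⟨⟨stoneCechExtend hψ, stoneCechExtend hφ, leftInverse_stoneCechExtend hφ hψ hφψ,
    leftInverse_stoneCechExtend hψ hφ hψφ⟩,
    continuous_stoneCechExtend hψ, continuous_stoneCechExtend hφ⟩,
    stoneCechExtend_stoneCechUnit hψ, stoneCechExtend_stoneCechUnit hφ⟩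

theorem stmt4_general [TopologicalSpace X] [TopologicalSpace Y]
    [AddCommGroup E] [Module ℝ E] [TopologicalSpace E] [IsTopologicalAddGroup E]
    [ContinuousSMul ℝ E] [T2Space E] [Nontrivial E]
    [AddCommGroup F] [Module ℝ F] [TopologicalSpace F] [IsTopologicalAddGroup F]
    [ContinuousSMul ℝ F] [T2Space F] [Nontrivial F]
    (A : Set (X → E)) (hA : A = Cset X E ∨ A = CbSet X E)
    (B : Set (Y → F)) (hB : B = Cset Y F ∨ B = CbSet Y F)
    (T : A → B) (hT : Biseparating T) :
    ∃ φ : StoneCech X ≃ₜ StoneCech Y,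
      ∀ f g : A, ∀ U : Set (StoneCech X), IsOpen U →
        ((∀ x : X, stoneCechUnit x ∈ U → (f : X → E) x = (g : X → E) x) ↔
          ∀ y : Y, stoneCechUnit y ∈ φ '' U → (T f : Y → F) y = (T g : Y → F) y) := by
  replace hA := IsAdmissible.of_cset_or_cbSet hA
  replace hB := IsAdmissible.of_cset_or_cbSet hB
  set S := (Equiv.ofBijective T hT.1).symm
  have hS : Biseparating S := hT.symm
  choose φ hφ using supportPoints_nonempty hT hA hB
  choose ψ hψ using supportPoints_nonempty hS hB hA
  obtain ⟨Φ, hΦ, hΦsymm⟩ := exists_homeomorph_stoneCech _ _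
    (stoneCechExtend_apply_of_mem_supportPoints hT hA hB hφ hS
      (Equiv.ofBijective T hT.1).symm_apply_apply hψ)
    (stoneCechExtend_apply_of_mem_supportPoints hS hB hA hψ hT
      (Equiv.ofBijective_apply_symm_apply T hT.1) hφ)
  refine ⟨Φ, fun f g U hU => ⟨fun h y => apply_eq_of_forall_mem_image hT hA Φ
    (fun y => hΦsymm y ▸ hφ y) hU h, fun h x hx => ?_⟩⟩
  simpa [S] using apply_eq_of_forall_mem_image hS hB Φ.symm (fun x => hΦ x ▸ hψ x)
    (Φ.isOpenMap U hU) h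
    (by rwa [Φ.symm.image_eq_preimage_symm, Φ.symm_symm, Φ.preimage_image])

theorem stmt4 [TopologicalSpace X] [T35Space X] [TopologicalSpace Y] [T35Space Y]
    [AddCommGroup E] [Module ℝ E] [TopologicalSpace E] [IsTopologicalAddGroup E]
    [ContinuousSMul ℝ E] [T2Space E] [Nontrivial E]
    [AddCommGroup F] [Module ℝ F] [TopologicalSpace F] [IsTopologicalAddGroup F]
    [ContinuousSMul ℝ F] [T2Space F] [Nontrivial F]
    (A : Set (X → E)) (hA : A = Cset X E ∨ A = CbSet X E)
    (B : Set (Y → F)) (hB : B = Cset Y F ∨ B = CbSet Y F)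
    (T : A → B) (hT : Biseparating T) :
    ∃ φ : StoneCech X ≃ₜ StoneCech Y,
      ∀ f g : A, ∀ U : Set (StoneCech X), IsOpen U →
        ((∀ x : X, stoneCechUnit x ∈ U → (f : X → E) x = (g : X → E) x) ↔
          ∀ y : Y, stoneCechUnit y ∈ φ '' U → (T f : Y → F) y = (T g : Y → F) y) :=
  stmt4_general A hA B hB T hT

end Stmt4
end

section
/- Let X be a metric space, E and F normed spaces, and Φ: X × E → F a function. Then the function x ↦ Φ(x, f(x)) is continuous on X for every continuous function f: X → E if and only if Φ is continuous at every point of X' × E. -/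
/-!
If `Φ` were discontinuous at `(x, e)` with `x` accumulating, then, since every section
`z ↦ Φ (z, c)` is continuous, the bad points near `(x, e)` can be taken off the fibre over `x`.
Picking bad points `(yₙ, vₙ)` with `d(yₙ, x)` and `vₙ - e` decaying geometrically, a sum of
tents of disjoint supports `f z = e + ∑ₙ φₙ z • (vₙ - e)` is continuous with `f x = e` and
`f yₙ = vₙ`, so `z ↦ Φ (z, f z)` is discontinuous at `x`.
-/

open Topology Filter

namespace Stmt6

def accPts (X : Type*) [TopologicalSpace X] : Set X := {x | 𝓝[≠] x ≠ ⊥}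

theorem continuousAt_of_tendsto_nhdsWithin_fst_ne {X E F : Type*} [TopologicalSpace X]
    [TopologicalSpace E] [TopologicalSpace F] [RegularSpace F] {Φ : X × E → F} {x : X} {e : E}
    [(𝓝[≠] x).NeBot] (hsec : ∀ c, ContinuousAt (fun z => Φ (z, c)) x)
    (h : Tendsto Φ (𝓝[{q | q.1 ≠ x}] (x, e)) (𝓝 (Φ (x, e)))) : ContinuousAt Φ (x, e) := by
  refine (closed_nhds_basis _).tendsto_right_iff.2 fun V ⟨hV, hVc⟩ => ?_
  obtain ⟨pa, hpa, pb, hpb, hV⟩ := eventually_prod_iff.1 <| by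
    simpa only [nhds_prod_eq, eventually_nhdsWithin_iff] using h.eventually hV
  rw [nhds_prod_eq]
  filter_upwards [hpa.prod_mk hpb] with ⟨a, b⟩ ⟨ha, hb⟩
  obtain rfl | hax := eq_or_ne a x
  · -- `Φ (a, b)` is a limit of values `Φ (z, b)`, `z ≠ a`, lying in the closed set `V`
    refine hVc.mem_of_tendsto ((hsec b).tendsto.mono_left (nhdsWithin_le_nhds (s := {a}ᶜ))) ?_
    filter_upwards [nhdsWithin_le_nhds hpa, self_mem_nhdsWithin] with z hz hza
    exact hV hz hb hza
  · exact hV ha hb hax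

theorem exists_continuous_eq_of_pairwise_add_le_dist {X E : Type*} [PseudoMetricSpace X]
    [NormedAddCommGroup E] [NormedSpace ℝ E] {y : ℕ → X} {ρ : ℕ → ℝ} {w : ℕ → E}
    (hρ : ∀ n, 0 < ρ n) (hsep : Pairwise fun m n => ρ m + ρ n ≤ dist (y m) (y n))
    (hw : Summable fun n => ‖w n‖) :
    ∃ f : X → E, Continuous f ∧ (∀ n, f (y n) = w n) ∧
      ∀ z, (∀ n, ρ n ≤ dist z (y n)) → f z = 0 := by
  set φ : ℕ → X → ℝ := fun n z => max 0 (1 - dist z (y n) / ρ n)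
  have hφ_cont : ∀ n, Continuous (φ n) := fun n => by fun_prop
  have hφ_le : ∀ n z, ‖φ n z‖ ≤ 1 := fun n z => by
    rw [Real.norm_of_nonneg (le_max_left _ _)]
    exact max_le zero_le_one (sub_le_self _ (div_nonneg dist_nonneg (hρ n).le))
  have hφ_far : ∀ n z, ρ n ≤ dist z (y n) → φ n z = 0 := fun n z h =>
    max_eq_left (sub_nonpos.2 ((one_le_div (hρ n)).2 h))
  have hφ_ne : ∀ z, {n | φ n z ≠ 0}.Subsingleton := by
    intro z m hm n hn
    by_contra hmn
    have := dist_triangle_left (y m) (y n) z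
    linarith [hsep hmn, not_le.1 (mt (hφ_far m z) hm), not_le.1 (mt (hφ_far n z) hn)]
  have hfin : ∀ z, (fun n => φ n z • w n).HasFiniteSupport := fun z =>
    (hφ_ne z).finite.subset (Function.support_smul_subset_left _ _)
  -- `E` need not be complete, so uniform convergence is used in its completion
  have hf_coe : ∀ z, ((∑' n, φ n z • w n : E) : UniformSpace.Completion E) =
      ∑' n, φ n z • (w n : UniformSpace.Completion E) := fun z => by
    rw [← UniformSpace.Completion.coe_toComplL (𝕜 := ℝ),
      ContinuousLinearMap.map_tsum _ (summable_of_hasFiniteSupport (hfin z))]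
    simp only [map_smul]
  refine ⟨fun z => ∑' n, φ n z • w n, ?_, fun n => ?_, fun z hz => ?_⟩
  · refine UniformSpace.Completion.coe_isometry.isEmbedding.continuous_iff.2 ?_
    rw [Function.comp_def, funext hf_coe]
    refine continuous_tsum (f := fun n z => φ n z • (w n : UniformSpace.Completion E))
      (fun n => (hφ_cont n).smul continuous_const) hw fun n z => ?_
    rw [norm_smul, UniformSpace.Completion.norm_coe]
    exact mul_le_of_le_one_left (norm_nonneg _) (hφ_le n z)
  · show ∑' m, φ m (y n) • w m = w n
    rw [tsum_eq_single n fun m hm => by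
      rw [hφ_far m _ (by linarith [hsep hm, hρ n, dist_comm (y n) (y m)]), zero_smul]]
    simp [φ]
  · simp [hφ_far _ _ (hz _)]

theorem exists_seq_dist_le_half_dist_fst {X E : Type*} [MetricSpace X] [PseudoMetricSpace E]
    {x : X} {e : E} {S : Set (X × E)} (hS : ∃ᶠ q in 𝓝 (x, e), q ∈ S ∧ q.1 ≠ x) :
    ∃ p : ℕ → X × E, (∀ n, p n ∈ S ∧ (p n).1 ≠ x) ∧
      ∀ m n, m < n → dist (p n) (x, e) ≤ dist (p m).1 x / 2 := by
  refine exists_seq_of_forall_finset_exists (fun q => q ∈ S ∧ q.1 ≠ x)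
    (fun p q => dist q (x, e) ≤ dist p.1 x / 2) fun s hs => (hS.and_eventually ?_).exists
  refine (eventually_all_finset s).2 fun p hp => ?_
  exact Metric.closedBall_mem_nhds _ (half_pos (dist_pos.2 (hs p hp).2))

theorem exists_continuous_frequently_graph_mem {X E : Type*} [MetricSpace X]
    [NormedAddCommGroup E] [NormedSpace ℝ E] {x : X} {e : E} {S : Set (X × E)}
    (hS : ∃ᶠ q in 𝓝 (x, e), q ∈ S ∧ q.1 ≠ x) :
    ∃ f : X → E, Continuous f ∧ f x = e ∧ ∃ᶠ z in 𝓝 x, (z, f z) ∈ S := by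
  obtain ⟨p, hpS, hp⟩ := exists_seq_dist_le_half_dist_fst hS
  set r : ℕ → ℝ := fun n => dist (p n).1 x
  set s : ℕ → ℝ := fun n => dist (p n) (x, e)
  have hr_pos : ∀ n, 0 < r n := fun n => dist_pos.2 (hpS n).2
  have hr_le : ∀ n, r n ≤ s n := fun n => by simp [r, s, Prod.dist_eq]
  have hw_le : ∀ n, ‖(p n).2 - e‖ ≤ s n := fun n => by simp [s, Prod.dist_eq, dist_eq_norm]
  have hr_half : ∀ m n, m < n → r n ≤ r m / 2 := fun m n h => (hr_le n).trans (hp m n h)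
  have hs_nonneg : ∀ n, 0 ≤ s n := fun n => dist_nonneg
  have hs : Summable s := by
    refine summable_of_ratio_norm_eventually_le (by norm_num : (1 / 2 : ℝ) < 1)
      (Eventually.of_forall fun n => ?_)
    simp only [Real.norm_of_nonneg (hs_nonneg _)]
    linarith [hp n (n + 1) n.lt_succ_self, hr_le n]
  have hy : Tendsto (fun n => (p n).1) atTop (𝓝 x) := tendsto_iff_dist_tendsto_zero.2 <|
    squeeze_zero (fun n => (hr_pos n).le) hr_le hs.tendsto_atTop_zero
  have hsep : Pairwise fun m n => r m / 4 + r n / 4 ≤ dist (p m).1 (p n).1 := by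
    have key : ∀ m n, m < n → r m / 4 + r n / 4 ≤ dist (p m).1 (p n).1 := fun m n h => by
      have hdist : r m - r n ≤ dist (p m).1 (p n).1 :=
        (le_abs_self _).trans (abs_dist_sub_le _ _ _)
      linarith [hr_half m n h, hr_pos m]
    intro m n hmn
    rcases hmn.lt_or_gt with h | h
    · exact key m n h
    · rw [add_comm, dist_comm]
      exact key n m h
  obtain ⟨g, hg, hgp, hg0⟩ := exists_continuous_eq_of_pairwise_add_le_dist
    (fun n => by linarith [hr_pos n]) hsep (hs.of_nonneg_of_le (fun _ => norm_nonneg _) hw_le)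
  refine ⟨fun z => e + g z, continuous_const.add hg, ?_,
    hy.frequently (Frequently.of_forall fun n => ?_)⟩
  · show e + g x = e
    rw [hg0 x fun n => by rw [dist_comm]; linarith [hr_pos n], add_zero]
  · simpa [hgp] using (hpS n).1

theorem stmt6_general {X E F : Type*} [MetricSpace X]
    [NormedAddCommGroup E] [NormedSpace ℝ E] [NormedAddCommGroup F]
    (Φ : X × E → F) :
    (∀ f : X → E, Continuous f → Continuous fun x => Φ (x, f x)) ↔
      ∀ x ∈ accPts X, ∀ e : E, ContinuousAt Φ (x, e) := by
  refine ⟨fun H x hx e => ?_, fun hΦ f hf => continuous_iff_continuousAt.2 fun x => ?_⟩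
  · have : (𝓝[≠] x).NeBot := ⟨hx⟩
    by_contra hdisc
    obtain ⟨U, hU, hbad⟩ := not_tendsto_iff_exists_frequently_notMem.1 <|
      mt (continuousAt_of_tendsto_nhdsWithin_fst_ne fun c =>
        (H _ continuous_const).continuousAt) hdisc
    rw [frequently_nhdsWithin_iff] at hbad
    obtain ⟨f, hf, hfx, hgraph⟩ :=
      exists_continuous_frequently_graph_mem (S := {q | Φ q ∉ U}) hbad
    have hnear : ∀ᶠ z in 𝓝 x, Φ (z, f z) ∈ U :=
      (H f hf).continuousAt.eventually_mem (by rwa [hfx])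
    obtain ⟨z, hzU, hz⟩ := (hgraph.and_eventually hnear).exists
    exact hzU hz
  · by_cases hx : x ∈ accPts X
    · exact ContinuousAt.comp (g := Φ) (hΦ x hx (f x)) (continuousAt_id.prodMk hf.continuousAt)
    · refine continuousWithinAt_compl_self.1 ?_
      rw [ContinuousWithinAt, not_not.1 hx]
      exact tendsto_bot

/-- `x ↦ Φ(x, f(x))` is continuous for every continuous `f : X → E` iff
`Φ` is continuous at every point of `X' × E`, where `X'` is the set of
accumulation points of `X`. -/
theorem stmt6 {X E F : Type*} [MetricSpace X]
    [NormedAddCommGroup E] [NormedSpace ℝ E] [NormedAddCommGroup F] [NormedSpace ℝ F]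
    (Φ : X × E → F) :
    (∀ f : X → E, Continuous f → Continuous fun x => Φ (x, f x)) ↔
      ∀ x ∈ accPts X, ∀ e : E, ContinuousAt Φ (x, e) :=
  stmt6_general Φ

end Stmt6
end

section
/- Let X and Y be metric spaces and E and F nontrivial normed spaces. If there exists a biseparating map T: C(X,E) → C_*(Y,F), then X and Y are compact. -/
open Topology Filter Set

/-!
A noncompact metric space contains a locally finite sequence of disjoint balls, and functions
supported in them glue to one continuous function. A biseparating map preserves disjointness
with respect to a third function, so the image of the glued function agrees with the image of
each piece wherever the latter differs from the image of `0`. If `X` is not compact, this makes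
some `T f` unbounded unless, for some ball, the images of all functions supported in it avoid
`T 0 + w` for a fixed `w ≠ 0`; a bump function in that ball shows that no ball can do this.
If `Y` is not compact, the same scheme applied to `T⁻¹`, whose values need not be bounded,
gets its contradiction from a convergent subsequence in the compact space `X` instead.
-/

namespace Stmt9

/-- The space of continuous functions, as a set of functions. -/
def Cset (X E : Type*) [TopologicalSpace X] [TopologicalSpace E] : Set (X → E) :=
  {f | Continuous f}

/-- The space of bounded continuous functions, as a set of functions. -/
def CbSet (X E : Type*) [TopologicalSpace X] [PseudoMetricSpace E] : Set (X → E) :=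
  {f | Continuous f ∧ Bornology.IsBounded (Set.range f)}

/-- `T` is biseparating: a bijection such that `f, g` are disjoint with respect to `h`
iff `Tf, Tg` are disjoint with respect to `Th`. -/
def Biseparating {X Y E F : Type*} {A : Set (X → E)} {B : Set (Y → F)} (T : A → B) : Prop :=
  Function.Bijective T ∧ ∀ f g h : A,
    ({x | (f : X → E) x ≠ (h : X → E) x} ∩ {x | (g : X → E) x ≠ (h : X → E) x} = ∅ ↔
      {y | (T f : Y → F) y ≠ (T h : Y → F) y} ∩ {y | (T g : Y → F) y ≠ (T h : Y → F) y} = ∅)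

open Metric Function

instance {α E : Type*} (A : Set (α → E)) : CoeFun A (fun _ => α → E) :=
  ⟨Subtype.val⟩

section MetricSpace

variable {Z : Type*} [MetricSpace Z]

theorem exists_infinite_forall_exists_isolated (h : ¬ CompactSpace Z) :
    ∃ D : Set Z, D.Infinite ∧ ∀ z, ∃ δ > 0, ∀ a ∈ D, dist a z < δ → a = z := by
  rw [← isCompact_univ_iff, isCompact_iff_isSeqCompact, ← isCountablyCompact_iff_isSeqCompact,
    isCountablyCompact_iff_infinite_subset_has_accPt] at h
  push Not at h
  obtain ⟨D, -, hD, hacc⟩ := h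
  refine ⟨D, hD, fun z => ?_⟩
  have := hacc z (mem_univ z)
  rw [accPt_iff_nhds] at this
  push Not at this
  obtain ⟨U, hU, hUD⟩ := this
  obtain ⟨δ, hδ, hball⟩ := Metric.mem_nhds_iff.1 hU
  exact ⟨δ, hδ, fun a ha hd => hUD a ⟨hball (mem_ball.2 hd), ha⟩⟩

theorem exists_disjoint_balls (h : ¬ CompactSpace Z) :
    ∃ (p : ℕ → Z) (s : ℕ → ℝ), (∀ n, 0 < s n) ∧
      Pairwise (Disjoint on fun n => ball (p n) (s n)) ∧
      LocallyFinite fun n => ball (p n) (s n) := by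
  obtain ⟨D, hD, isolated⟩ := exists_infinite_forall_exists_isolated h
  choose δ hδ hδD using isolated
  set p : ℕ → Z := fun n => hD.natEmbedding D n
  have hp_inj : p.Injective := Subtype.val_injective.comp (hD.natEmbedding D).injective
  have hpD : ∀ n, p n ∈ D := fun n => (hD.natEmbedding D n).2
  -- the factor `1 / (n + 1)` forces the radii to zero, which gives local finiteness
  set s : ℕ → ℝ := fun n => min (δ (p n) / 2) (1 / (n + 1))
  have hs : ∀ n, 0 < s n := fun n => lt_min (half_pos (hδ _)) Nat.one_div_pos_of_nat
  have close : ∀ m n, dist (p n) (p m) < 2 * s m → n = m := fun m n hd =>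
    hp_inj (hδD _ _ (hpD n) (by linarith [min_le_left (δ (p m) / 2) (1 / (m + 1))]))
  refine ⟨p, s, hs, fun m n hmn => ball_disjoint_ball ?_, fun z => ?_⟩
  · by_contra! hlt
    rcases le_total (s m) (s n) with hle | hle
    · exact hmn (close n m (by linarith))
    · exact hmn (close m n (by rw [dist_comm]; linarith)).symm
  · refine ⟨ball z (δ z / 2), ball_mem_nhds z (half_pos (hδ z)), ?_⟩
    have hlarge : {n : ℕ | ¬ 1 / ((n : ℝ) + 1) < δ z / 2}.Finite := by
      have := tendsto_one_div_add_atTop_nhds_zero_nat.eventually (gt_mem_nhds (half_pos (hδ z)))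
      rwa [← Nat.cofinite_eq_atTop, eventually_cofinite] at this
    have hcenter : {n | p n = z}.Subsingleton := fun a ha b hb => hp_inj (ha.trans hb.symm)
    refine (hcenter.finite.union hlarge).subset ?_
    rintro n ⟨x, hxn, hxz⟩
    by_cases hn : 1 / ((n : ℝ) + 1) < δ z / 2
    · left
      refine hδD z (p n) (hpD n) ?_
      have := dist_triangle (p n) x z
      rw [mem_ball, dist_comm] at hxn
      rw [mem_ball] at hxz
      linarith [min_le_right (δ (p n) / 2) (1 / ((n : ℝ) + 1))]
    · exact Or.inr hn

theorem exists_bump (p : Z) {r R : ℝ} (hrR : r < R) :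
    ∃ ρ : C(Z, ℝ), EqOn ρ 1 (closedBall p r) ∧ EqOn ρ 0 (ball p R)ᶜ ∧
      ∀ x, ρ x ∈ Icc (0 : ℝ) 1 := by
  obtain ⟨ρ, h0, h1, hI⟩ := exists_continuous_zero_one_of_isClosed
    (isOpen_ball (x := p) (ε := R)).isClosed_compl isClosed_closedBall
    (disjoint_compl_left_iff_subset.2 (closedBall_subset_ball hrR))
  exact ⟨ρ, h1, h0, hI⟩

end MetricSpace

theorem norm_smul_le_of_mem_Icc {E : Type*} [NormedAddCommGroup E] [NormedSpace ℝ E]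
    {t : ℝ} (ht : t ∈ Icc (0 : ℝ) 1) (v : E) : ‖t • v‖ ≤ ‖v‖ := by
  rw [norm_smul, Real.norm_of_nonneg ht.1]
  exact mul_le_of_le_one_left (norm_nonneg v) ht.2

section Gluing

variable {ι Z E : Type*} {U : ι → Set Z} {f : ι → Z → E}

theorem finsum_apply_eq_of_mem [AddCommMonoid E] (hU : Pairwise (Disjoint on U))
    (hf : ∀ i, support (f i) ⊆ U i) {i : ι} {x : Z} (hx : x ∈ U i) :
    ∑ᶠ j, f j x = f i x :=
  finsum_eq_single _ i fun j hj =>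
    notMem_support.1 fun h => (hU hj).notMem_of_mem_left (hf j h) hx

theorem finsum_apply_eq_zero [AddCommMonoid E] (hf : ∀ i, support (f i) ⊆ U i) {x : Z}
    (hx : ∀ i, x ∉ U i) : ∑ᶠ j, f j x = 0 :=
  finsum_eq_zero_of_forall_eq_zero fun i => notMem_support.1 fun h => hx i (hf i h)

theorem continuous_finsum_of_support_subset [TopologicalSpace Z] [TopologicalSpace E]
    [AddCommMonoid E] [ContinuousAdd E] (hlf : LocallyFinite U) (hfc : ∀ i, Continuous (f i))
    (hf : ∀ i, support (f i) ⊆ U i) : Continuous fun x => ∑ᶠ i, f i x :=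
  continuous_finsum hfc (hlf.subset hf)

theorem norm_finsum_apply_le [SeminormedAddCommGroup E] (hU : Pairwise (Disjoint on U))
    (hf : ∀ i, support (f i) ⊆ U i) {b : Z → ℝ} (hb : ∀ x, 0 ≤ b x)
    (hfb : ∀ i x, ‖f i x‖ ≤ b x) (x : Z) : ‖∑ᶠ i, f i x‖ ≤ b x := by
  by_cases hx : ∃ i, x ∈ U i
  · obtain ⟨i, hi⟩ := hx
    rw [finsum_apply_eq_of_mem hU hf hi]
    exact hfb i x
  · push Not at hx
    rw [finsum_apply_eq_zero hf hx, norm_zero]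
    exact hb x

end Gluing

section Separation

variable {α β E F : Type*}

def DisjointWrt (f g h : α → E) : Prop :=
  ∀ x, f x = h x ∨ g x = h x

theorem disjointWrt_finsum_zero {ι : Type*} [AddCommMonoid E] {U : ι → Set α}
    {f : ι → α → E} (hU : Pairwise (Disjoint on U)) (hf : ∀ i, support (f i) ⊆ U i)
    (i : ι) :
    DisjointWrt (fun x => ∑ᶠ j, f j x) 0 (f i) := by
  intro x
  by_cases hx : x ∈ U i
  · exact Or.inl (finsum_apply_eq_of_mem hU hf hx)
  · exact Or.inr (notMem_support.1 fun h => hx (hf i h)).symm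

theorem disjointWrt_finsum_of_disjoint {ι : Type*} [AddCommMonoid E] {U : ι → Set α}
    {f : ι → α → E} (hf : ∀ i, support (f i) ⊆ U i) {V : Set α} {g : α → E}
    (hg : support g ⊆ V) (hV : ∀ i, Disjoint (U i) V) :
    DisjointWrt (fun x => ∑ᶠ j, f j x) g 0 := by
  intro x
  by_cases hx : x ∈ V
  · exact Or.inl (finsum_apply_eq_zero hf fun i hi => (hV i).notMem_of_mem_left hi hx)
  · exact Or.inr (notMem_support.1 fun h => hx (hg h))

variable {A : Set (α → E)} {B : Set (β → F)} {T : A → B}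

theorem Biseparating.disjointWrt_iff (hT : Biseparating T) (f g h : A) :
    DisjointWrt f g h ↔ DisjointWrt (T f) (T g) (T h) := by
  unfold DisjointWrt
  simpa only [eq_empty_iff_forall_notMem, mem_inter_iff, mem_ofPred_eq, not_and_or, not_not]
    using hT.2 f g h

theorem Biseparating.symm (hT : Biseparating T) :
    Biseparating (Equiv.ofBijective T hT.1).symm := by
  refine ⟨Equiv.bijective _, fun f g h => ?_⟩
  have := hT.2 ((Equiv.ofBijective T hT.1).symm f) ((Equiv.ofBijective T hT.1).symm g)
    ((Equiv.ofBijective T hT.1).symm h)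
  simp only [Equiv.ofBijective_apply_symm_apply] at this
  exact this.symm

end Separation

section FunctionSpaces

variable {Z E F : Type*} [TopologicalSpace Z]

theorem mem_cbSet_iff [SeminormedAddCommGroup F] {f : Z → F} :
    f ∈ CbSet Z F ↔ Continuous f ∧ ∃ C, ∀ x, ‖f x‖ ≤ C := by
  simp only [CbSet, mem_ofPred_eq, isBounded_iff_forall_norm_le, forall_mem_range]

theorem mem_cbSet_of_norm_le_add [SeminormedAddCommGroup E] [SeminormedAddCommGroup F]
    {g : Z → E} (hg : g ∈ CbSet Z E) {f : Z → F} (hf : Continuous f) (C : ℝ)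
    (hfg : ∀ x, ‖f x‖ ≤ ‖g x‖ + C) : f ∈ CbSet Z F := by
  obtain ⟨D, hD⟩ := (mem_cbSet_iff.1 hg).2
  exact mem_cbSet_iff.2 ⟨hf, D + C, fun x => (hfg x).trans (by linarith [hD x])⟩

theorem zero_mem_cset [TopologicalSpace E] [Zero E] : (0 : Z → E) ∈ Cset Z E :=
  continuous_const

theorem zero_mem_cbSet [SeminormedAddCommGroup F] : (0 : Z → F) ∈ CbSet Z F :=
  mem_cbSet_iff.2 ⟨continuous_const, 0, fun _ => norm_zero.le⟩

end FunctionSpaces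

section Biseparating

variable {X Y Z W E F : Type*}

/-- With `φ` the cut-off of `q` to a ball and `g = φ + (bump at the centre)`, `q` and `g` are
disjoint with respect to `φ` while `g ≠ φ`; so `S q` and `S φ` cannot differ everywhere. -/
theorem Biseparating.exists_apply_eq_of_ball [MetricSpace Z] [NormedAddCommGroup E]
    [NormedSpace ℝ E] [Nontrivial E] {A : Set (Z → E)} {B : Set (W → F)} {S : A → B}
    (hS : Biseparating S) (q : A) (hq : Continuous q)
    (hA : ∀ f : Z → E, Continuous f → (∃ C, ∀ x, ‖f x‖ ≤ ‖q x‖ + C) → f ∈ A)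
    (p : Z) {s : ℝ} (hs : 0 < s) :
    ∃ φ : A, support φ ⊆ ball p s ∧ (∀ x, ‖φ x‖ ≤ ‖q x‖) ∧ ∃ w, S φ w = S q w := by
  obtain ⟨e, he⟩ := exists_ne (0 : E)
  obtain ⟨ρ, hρ1, hρ0, hρI⟩ := exists_bump p (half_lt_self hs)
  obtain ⟨σ, hσ1, hσ0, hσI⟩ := exists_bump p (half_pos hs)
  have hφq : ∀ x, ‖ρ x • q x‖ ≤ ‖q x‖ := fun x => norm_smul_le_of_mem_Icc (hρI x) _
  let φ : A := ⟨fun x => ρ x • q x,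
    hA _ (ρ.continuous.smul hq) ⟨0, fun x => (hφq x).trans (le_add_of_nonneg_right le_rfl)⟩⟩
  let g : A := ⟨fun x => ρ x • q x + σ x • e,
    hA _ ((ρ.continuous.smul hq).add (σ.continuous.smul continuous_const))
      ⟨‖e‖, fun x => (norm_add_le _ _).trans
        (add_le_add (hφq x) (norm_smul_le_of_mem_Icc (hσI x) e))⟩⟩
  refine ⟨φ, fun x hx => by_contra fun h => hx ?_, hφq, ?_⟩
  · simp [φ, hρ0 h]
  by_contra! hne
  have hd : DisjointWrt q g φ := by
    intro x
    by_cases hx : x ∈ closedBall p (s / 2)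
    · left
      simp [φ, hρ1 hx]
    · right
      simp [g, φ, hσ0 fun h => hx (ball_subset_closedBall h)]
  have hgφ : g = φ := hS.1.1 <| Subtype.ext <| funext fun w =>
    ((hS.disjointWrt_iff q g φ).1 hd w).resolve_left fun h => hne w h.symm
  have := congrFun (congrArg Subtype.val hgφ) p
  exact he (by simpa [g, φ, hσ1 (mem_closedBall_self le_rfl)] using this)

variable [NormedAddCommGroup E] [NormedAddCommGroup F]

/-- Otherwise the counterexamples `φ n` glue to an `f` with `T f` unbounded: `T f` agrees with
`T (φ n)` wherever `T (φ n)` differs from `T 0`. -/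
theorem Biseparating.exists_forall_apply_ne_add_smul [TopologicalSpace X] [TopologicalSpace Y]
    [NormedSpace ℝ F]
    {T : Cset X E → CbSet Y F} (hT : Biseparating T) {U : ℕ → Set X}
    (hU : Pairwise (Disjoint on U)) (hlf : LocallyFinite U) {v : F} (hv : v ≠ 0) :
    ∃ n : ℕ, ∀ φ : Cset X E, support φ ⊆ U n →
      ∀ y, T φ y ≠ T ⟨0, zero_mem_cset⟩ y + ((n : ℝ) + 1) • v := by
  by_contra! h
  choose φ hφU y hy using h
  let f : Cset X E := ⟨fun x => ∑ᶠ n, φ n x,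
    continuous_finsum_of_support_subset hlf (fun n => (φ n).2) hφU⟩
  have hTf : ∀ n, T f (y n) = T ⟨0, zero_mem_cset⟩ (y n) + ((n : ℝ) + 1) • v := by
    intro n
    rw [← hy n]
    refine ((hT.disjointWrt_iff f ⟨0, zero_mem_cset⟩ (φ n)).1
      (disjointWrt_finsum_zero hU hφU n) (y n)).resolve_right fun h => ?_
    rw [hy n, left_eq_add, smul_eq_zero] at h
    exact h.elim (by positivity) hv
  obtain ⟨C₁, hC₁⟩ := (mem_cbSet_iff.1 (T f).2).2
  obtain ⟨C₀, hC₀⟩ := (mem_cbSet_iff.1 (T ⟨0, zero_mem_cset⟩).2).2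
  obtain ⟨n, hn⟩ := exists_nat_gt ((C₁ + C₀) / ‖v‖)
  have hvpos : 0 < ‖v‖ := norm_pos_iff.2 hv
  have : ((n : ℝ) + 1) * ‖v‖ ≤ C₁ + C₀ := by
    calc ((n : ℝ) + 1) * ‖v‖ = ‖T f (y n) - T ⟨0, zero_mem_cset⟩ (y n)‖ := by
          rw [hTf n, add_sub_cancel_left, norm_smul, Real.norm_of_nonneg (by positivity)]
      _ ≤ C₁ + C₀ := (norm_sub_le _ _).trans (add_le_add (hC₁ _) (hC₀ _))
  rw [div_lt_iff₀ hvpos] at hn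
  linarith

/-- Otherwise, along a convergent subsequence of the witnesses, glue the counterexamples of even
index into `g`: then `S g = S γ` at the even and `S g = S 0` at the odd witnesses, so `S γ` and
`S 0` agree at the limit. -/
theorem Biseparating.exists_forall_apply_ne [TopologicalSpace X] [FirstCountableTopology X]
    [CompactSpace X] [TopologicalSpace Y]
    {S : CbSet Y F → Cset X E} (hS : Biseparating S) {U : ℕ → Set Y}
    (hU : Pairwise (Disjoint on U)) (hlf : LocallyFinite U) (γ : CbSet Y F)
    (hγ : ∀ x, S γ x ≠ S ⟨0, zero_mem_cbSet⟩ x) :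
    ∃ n : ℕ, ∀ θ : CbSet Y F, support θ ⊆ U n → (∀ y, ‖θ y‖ ≤ ‖γ y‖) →
      ∀ x, S θ x ≠ S γ x := by
  by_contra! h
  choose θ hθU hθγ x hx using h
  obtain ⟨x₀, ψ, hψ, hlim⟩ := CompactSpace.tendsto_subseq x
  have hev_inj : Injective fun k => ψ (2 * k) := hψ.injective.comp fun a b h => by omega
  have hθU' : ∀ k, support (θ (ψ (2 * k))) ⊆ U (ψ (2 * k)) := fun k => hθU _
  obtain ⟨Cγ, hCγ⟩ := (mem_cbSet_iff.1 γ.2).2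
  let g : CbSet Y F := ⟨fun y => ∑ᶠ k, θ (ψ (2 * k)) y, mem_cbSet_iff.2
    ⟨continuous_finsum_of_support_subset (hlf.comp_injective hev_inj)
      (fun k => (θ _).2.1) hθU',
    Cγ, fun y => (norm_finsum_apply_le (hU.comp_of_injective hev_inj) hθU'
      (fun _ => norm_nonneg _) (fun k => hθγ _) y).trans (hCγ y)⟩⟩
  have heven : ∀ k, S g (x (ψ (2 * k))) = S γ (x (ψ (2 * k))) := by
    intro k
    rw [← hx]
    exact ((hS.disjointWrt_iff g ⟨0, zero_mem_cbSet⟩ (θ (ψ (2 * k)))).1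
      (disjointWrt_finsum_zero (hU.comp_of_injective hev_inj) hθU' k) _).resolve_right
      fun h => hγ _ (h.trans (hx _)).symm
  have hodd : ∀ k, S g (x (ψ (2 * k + 1))) = S ⟨0, zero_mem_cbSet⟩ (x (ψ (2 * k + 1))) := by
    intro k
    exact ((hS.disjointWrt_iff g (θ (ψ (2 * k + 1))) ⟨0, zero_mem_cbSet⟩).1
      (disjointWrt_finsum_of_disjoint hθU' (hθU _)
        fun j => hU (hψ.injective.ne (by omega))) _).resolve_right
      fun h => hγ _ ((hx _).symm.trans h)
  have hlim_ev := hlim.comp (show StrictMono fun k : ℕ => 2 * k by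
    intro a b h; dsimp only; omega).tendsto_atTop
  have hlim_odd := hlim.comp (show StrictMono fun k : ℕ => 2 * k + 1 by
    intro a b h; dsimp only; omega).tendsto_atTop
  refine hγ x₀ ?_
  rw [← (isClosed_eq (S g).2 (S γ).2).mem_of_tendsto hlim_ev (.of_forall heven)]
  exact (isClosed_eq (S g).2 (S _).2).mem_of_tendsto hlim_odd (.of_forall hodd)

theorem Biseparating.compactSpace_domain [MetricSpace X] [TopologicalSpace Y]
    [NormedSpace ℝ E] [Nontrivial E] [NormedSpace ℝ F] [Nontrivial F]
    {T : Cset X E → CbSet Y F} (hT : Biseparating T) : CompactSpace X := by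
  by_contra hX
  obtain ⟨p, s, hs, hdisj, hlf⟩ := exists_disjoint_balls hX
  obtain ⟨v, hv⟩ := exists_ne (0 : F)
  obtain ⟨n, hn⟩ := hT.exists_forall_apply_ne_add_smul hdisj hlf hv
  let c : CbSet Y F := ⟨fun y => T ⟨0, zero_mem_cset⟩ y + ((n : ℝ) + 1) • v,
    mem_cbSet_of_norm_le_add (T _).2 ((T _).2.1.add continuous_const) _
      fun y => norm_add_le _ _⟩
  let q := (Equiv.ofBijective T hT.1).symm c
  have hq : T q = c := Equiv.ofBijective_apply_symm_apply T hT.1 c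
  obtain ⟨φ, hφ, -, w, hw⟩ := hT.exists_apply_eq_of_ball q q.2 (fun f hf _ => hf) (p n) (hs n)
  exact hn φ hφ w (by rw [hw, hq])

theorem Biseparating.compactSpace_codomain [TopologicalSpace X] [FirstCountableTopology X]
    [CompactSpace X] [MetricSpace Y] [Nontrivial E] [NormedSpace ℝ F] [Nontrivial F]
    {T : Cset X E → CbSet Y F} (hT : Biseparating T) : CompactSpace Y := by
  by_contra hY
  obtain ⟨p, s, hs, hdisj, hlf⟩ := exists_disjoint_balls hY
  obtain ⟨e, he⟩ := exists_ne (0 : E)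
  let S := (Equiv.ofBijective T hT.1).symm
  let γ := T ⟨fun x => S ⟨0, zero_mem_cbSet⟩ x + e, (S _).2.add continuous_const⟩
  have hγ : ∀ x, S γ x ≠ S ⟨0, zero_mem_cbSet⟩ x := by
    simp [γ, S, Equiv.ofBijective_symm_apply_apply, he]
  obtain ⟨n, hn⟩ := hT.symm.exists_forall_apply_ne hdisj hlf γ hγ
  obtain ⟨θ, hθ, hθγ, x, hx⟩ := hT.symm.exists_apply_eq_of_ball γ γ.2.1
    (fun f hf ⟨C, hC⟩ => mem_cbSet_of_norm_le_add γ.2 hf C hC) (p n) (hs n)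
  exact hn θ hθ hθγ x hx

end Biseparating

/-- If there is a biseparating map `T : C(X,E) → C_*(Y,F)`, then `X` and `Y` are compact. -/
theorem stmt9 {X Y E F : Type*} [MetricSpace X] [MetricSpace Y]
    [NormedAddCommGroup E] [NormedSpace ℝ E] [Nontrivial E]
    [NormedAddCommGroup F] [NormedSpace ℝ F] [Nontrivial F]
    (T : Cset X E → CbSet Y F) (hT : Biseparating T) :
    CompactSpace X ∧ CompactSpace Y :=
  have := hT.compactSpace_domain
  ⟨this, hT.compactSpace_codomain⟩

end Stmt9
end

section
/- Let X be a complete metric space and E a Banach space. (1) If f: X → E is uniformly continuous, then there exist ε > 0 and C < ∞ such that ‖f(x₁) − f(x₂)‖ ≤ C·d_ε(x₁,x₂) whenever x₁, x₂ ∈ X satisfy d(x₁,x₂) > ε. (2) Conversely, if f: X → E is a function and there exist ε > 0 and C < ∞ such that ‖f(x₁) − f(x₂)‖ ≤ C·d_ε(x₁,x₂) for all x₁, x₂ ∈ X, then f is uniformly continuous. -/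
open ENNReal

namespace Stmt11

/-- The chain "metric" `d_ε(a,b)`: the infimum of the lengths of chains from `a` to `b`
whose steps all have length at most `ε` (`∞` if no such chain exists). -/
noncomputable def chainDist {X : Type*} [MetricSpace X] (ε : ℝ) (a b : X) : ℝ≥0∞ :=
  ⨅ (n : ℕ) (x : ℕ → X) (_ : x 0 = a) (_ : x n = b)
    (_ : ∀ i < n, dist (x i) (x (i + 1)) ≤ ε),
    ∑ i ∈ Finset.range n, ENNReal.ofReal (dist (x i) (x (i + 1)))

lemma chain_bound {X E : Type*} [MetricSpace X] [NormedAddCommGroup E]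
    (f : X → E) (ε : ℝ) (hε : 0 < ε)
    (hf : ∀ a b : X, dist a b ≤ ε → ‖f a - f b‖ ≤ 1) :
    ∀ n : ℕ, ∀ x : ℕ → X, (∀ i < n, dist (x i) (x (i + 1)) ≤ ε) →
      ‖f (x 0) - f (x n)‖ ≤ 1 + (2 / ε) * ∑ i ∈ Finset.range n, dist (x i) (x (i + 1)) := by
  intro n
  induction n using Nat.strong_induction_on with
  | _ n ih =>
    rcases n with _ | _ | m
    · intro x _
      simp only [Finset.range_zero, Finset.sum_empty, mul_zero, add_zero, sub_self, norm_zero]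
      norm_num
    · intro x hx
      have h1 : ‖f (x 0) - f (x 1)‖ ≤ 1 := hf _ _ (hx 0 (by norm_num))
      have h2 : (0:ℝ) ≤ (2 / ε) * ∑ i ∈ Finset.range 1, dist (x i) (x (i + 1)) := by
        apply mul_nonneg (by positivity)
        exact Finset.sum_nonneg fun i _ => dist_nonneg
      linarith
    · intro x hx
      have hsum : ∑ i ∈ Finset.range (m + 2), dist (x i) (x (i + 1))
          = dist (x 0) (x 1) + dist (x 1) (x 2)
            + ∑ i ∈ Finset.range m, dist (x (i + 2)) (x (i + 3)) := by
        rw [Finset.sum_range_succ' _ (m + 1), Finset.sum_range_succ' _ m]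
        have e : ∀ i, dist (x (i + 1 + 1)) (x (i + 1 + 1 + 1)) = dist (x (i + 2)) (x (i + 3)) :=
          fun i => rfl
        simp only [e]
        ring
      by_cases hcase : dist (x 0) (x 1) + dist (x 1) (x 2) ≤ ε
      · -- merge first two steps
        set y : ℕ → X := fun i => if i = 0 then x 0 else x (i + 1) with hy
        have hy0 : y 0 = x 0 := rfl
        have hyn : y (m + 1) = x (m + 2) := rfl
        have hysucc : ∀ i, y (i + 1) = x (i + 2) := fun i => rfl
        have hysteps : ∀ i < m + 1, dist (y i) (y (i + 1)) ≤ ε := by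
          intro i hi
          rcases i with _ | j
          · calc dist (y 0) (y 1) = dist (x 0) (x 2) := rfl
              _ ≤ dist (x 0) (x 1) + dist (x 1) (x 2) := dist_triangle _ _ _
              _ ≤ ε := hcase
          · exact hx (j + 2) (by omega)
        have hIH := ih (m + 1) (by omega) y hysteps
        have hysum : ∑ i ∈ Finset.range (m + 1), dist (y i) (y (i + 1))
            ≤ ∑ i ∈ Finset.range (m + 2), dist (x i) (x (i + 1)) := by
          rw [Finset.sum_range_succ' (fun i => dist (y i) (y (i + 1))) m, hsum]
          have h1 : ∀ i ∈ Finset.range m, dist (y (i + 1)) (y (i + 1 + 1))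
              = dist (x (i + 2)) (x (i + 3)) := fun i _ => rfl
          rw [Finset.sum_congr rfl h1]
          have : dist (y 0) (y 1) = dist (x 0) (x 2) := rfl
          rw [this]
          have := dist_triangle (x 0) (x 1) (x 2)
          linarith
        rw [hy0, hyn] at hIH
        have : (0:ℝ) ≤ 2 / ε := by positivity
        nlinarith [hIH, hysum]
      · -- first two steps sum to more than ε
        push_neg at hcase
        have hIH := ih m (by omega) (fun i => x (i + 2)) (fun i hi => hx (i + 2) (by omega))
        have h01 : ‖f (x 0) - f (x 1)‖ ≤ 1 := hf _ _ (hx 0 (by omega))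
        have h12 : ‖f (x 1) - f (x 2)‖ ≤ 1 := hf _ _ (hx 1 (by omega))
        have htri : ‖f (x 0) - f (x (m + 2))‖
            ≤ ‖f (x 0) - f (x 1)‖ + ‖f (x 1) - f (x 2)‖ + ‖f (x 2) - f (x (m + 2))‖ := by
          have := norm_sub_le_norm_sub_add_norm_sub (f (x 0)) (f (x 1)) (f (x (m + 2)))
          have := norm_sub_le_norm_sub_add_norm_sub (f (x 1)) (f (x 2)) (f (x (m + 2)))
          linarith
        have h2 : (2:ℝ) ≤ (2 / ε) * (dist (x 0) (x 1) + dist (x 1) (x 2)) := by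
          rw [div_mul_eq_mul_div, le_div_iff₀ hε]
          nlinarith
        rw [hsum]
        simp only [show ∀ i, i + 2 + 1 = i + 3 from fun i => rfl] at hIH
        linarith
  
/-- (1) A uniformly continuous function is "Lipschitz for large distances" with respect to
some `d_ε`; (2) conversely, a function that is `d_ε`-Lipschitz is uniformly continuous. -/
theorem stmt11 {X E : Type*} [MetricSpace X] [CompleteSpace X]
    [NormedAddCommGroup E] [NormedSpace ℝ E] [CompleteSpace E] :
    (∀ f : X → E, UniformContinuous f →
      ∃ ε : ℝ, 0 < ε ∧ ∃ C : ℝ, ∀ x₁ x₂ : X, ε < dist x₁ x₂ →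
        ENNReal.ofReal ‖f x₁ - f x₂‖ ≤ ENNReal.ofReal C * chainDist ε x₁ x₂) ∧
    (∀ f : X → E,
      (∃ ε : ℝ, 0 < ε ∧ ∃ C : ℝ, ∀ x₁ x₂ : X,
        ENNReal.ofReal ‖f x₁ - f x₂‖ ≤ ENNReal.ofReal C * chainDist ε x₁ x₂) →
      UniformContinuous f) := by
  constructor
  · intro f hf
    obtain ⟨δ, hδ, hδf⟩ := Metric.uniformContinuous_iff.mp hf 1 one_pos
    set ε := δ / 2 with hεdef
    have hε : 0 < ε := by positivity
    refine ⟨ε, hε, 3 / ε, ?_⟩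
    intro x₁ x₂ hdist
    have hf1 : ∀ a b : X, dist a b ≤ ε → ‖f a - f b‖ ≤ 1 := by
      intro a b hab
      have : dist (f a) (f b) < 1 := hδf (by rw [hεdef] at hab; linarith)
      rw [dist_eq_norm] at this
      linarith
    have hC0 : ENNReal.ofReal (3 / ε) ≠ 0 := by
      simp [ENNReal.ofReal_eq_zero, not_le]
      positivity
    rw [mul_comm, ← ENNReal.div_le_iff_le_mul (Or.inl hC0) (Or.inl ENNReal.ofReal_ne_top)]
    rw [chainDist]
    refine le_iInf fun n => le_iInf fun x => le_iInf fun h0 => le_iInf fun hn =>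
      le_iInf fun hsteps => ?_
    rw [ENNReal.div_le_iff_le_mul (Or.inl hC0) (Or.inl ENNReal.ofReal_ne_top), mul_comm]
    rw [← ENNReal.ofReal_sum_of_nonneg (fun i _ => dist_nonneg),
        ← ENNReal.ofReal_mul (by positivity)]
    apply ENNReal.ofReal_le_ofReal
    have key := chain_bound f ε hε hf1 n x hsteps
    rw [h0, hn] at key
    have hL : dist x₁ x₂ ≤ ∑ i ∈ Finset.range n, dist (x i) (x (i + 1)) := by
      have := dist_le_range_sum_dist x n
      rwa [h0, hn] at this
    have hLε : ε < ∑ i ∈ Finset.range n, dist (x i) (x (i + 1)) := lt_of_lt_of_le hdist hL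
    have h1 : (1:ℝ) ≤ (1 / ε) * ∑ i ∈ Finset.range n, dist (x i) (x (i + 1)) := by
      rw [one_div, inv_mul_eq_div, le_div_iff₀ hε]
      linarith
    have : (3 / ε) * ∑ i ∈ Finset.range n, dist (x i) (x (i + 1))
        = (1 / ε) * (∑ i ∈ Finset.range n, dist (x i) (x (i + 1)))
          + (2 / ε) * ∑ i ∈ Finset.range n, dist (x i) (x (i + 1)) := by ring
    linarith
  · intro f ⟨ε, hε, C, hC⟩
    rw [Metric.uniformContinuous_iff]
    intro δ hδ
    set C' := max C 0 with hC'def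
    have hC'0 : 0 ≤ C' := le_max_right _ _
    refine ⟨min ε (δ / (C' + 1)), by positivity, ?_⟩
    intro a b hab
    have habε : dist a b ≤ ε := le_of_lt (lt_of_lt_of_le hab (min_le_left _ _))
    have hab2 : dist a b < δ / (C' + 1) := lt_of_lt_of_le hab (min_le_right _ _)
    -- one-step chain
    have hchain : chainDist ε a b ≤ ENNReal.ofReal (dist a b) := by
      rw [chainDist]
      refine iInf_le_of_le 1 (iInf_le_of_le (fun i => if i = 0 then a else b) ?_)
      refine iInf_le_of_le rfl (iInf_le_of_le rfl (iInf_le_of_le ?_ ?_))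
      · intro i hi
        interval_cases i
        simpa using habε
      · simp
    have h1 : ENNReal.ofReal ‖f a - f b‖ ≤ ENNReal.ofReal C' * ENNReal.ofReal (dist a b) := by
      calc ENNReal.ofReal ‖f a - f b‖ ≤ ENNReal.ofReal C * chainDist ε a b := hC a b
        _ ≤ ENNReal.ofReal C' * ENNReal.ofReal (dist a b) := by
            exact mul_le_mul' (ENNReal.ofReal_le_ofReal (le_max_left _ _)) hchain
    rw [← ENNReal.ofReal_mul hC'0] at h1
    have h2 : ‖f a - f b‖ ≤ C' * dist a b :=
      (ENNReal.ofReal_le_ofReal_iff (by positivity)).mp h1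
    rw [dist_eq_norm]
    calc ‖f a - f b‖ ≤ C' * dist a b := h2
      _ ≤ (C' + 1) * dist a b := by nlinarith [dist_nonneg (x := a) (y := b)]
      _ < (C' + 1) * (δ / (C' + 1)) := by
          apply mul_lt_mul_of_pos_left hab2 (by positivity)
      _ = δ := by field_simp

end Stmt11
end

section
/- Let X be a complete metric space and E a Banach space. If ((x_n,e_n))_{n=1}^∞ is a u-sequence in X × E, then there exist an infinite subset N of ℕ and a uniformly continuous function f: X → E such that f(x_n) = e_n for all n ∈ N. -/
/-!
The chain distance `d_ε` is an extended pseudometric with `d ≤ d_ε`, and `d_ε = d` on pairs at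
distance at most `ε`; so a map that is Lipschitz for `d_ε` is uniformly continuous for `d`, and
the u-sequence condition says that `x n ↦ e n` is `C`-Lipschitz for `d_ε`. By the infinitary
Erdős–Szekeres theorem, along a subsequence the norms `‖e n‖` are either bounded or grow
geometrically. In either case one can choose pairwise disjoint `d_ε`-balls around the `x n`,
of radius comparable to the separation `δ` in the bounded case and to `‖e n‖ + 1` in the growing
case, such that `‖e n‖` is at most a fixed multiple of the radius. The sum of the tents
`(1 - d_ε(·, x n) / r n)⁺ • e n` is then `d_ε`-Lipschitz and interpolates.
-/

open ENNReal

namespace Stmt12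

/-- The chain "metric" `d_ε(a,b)`. -/
noncomputable def chainDist {X : Type*} [MetricSpace X] (ε : ℝ) (a b : X) : ℝ≥0∞ :=
  ⨅ (n : ℕ) (x : ℕ → X) (_ : x 0 = a) (_ : x n = b)
    (_ : ∀ i < n, dist (x i) (x (i + 1)) ≤ ε),
    ∑ i ∈ Finset.range n, ENNReal.ofReal (dist (x i) (x (i + 1)))

/-- A sequence is separated if its terms are uniformly spaced apart. -/
def Separated {X : Type*} [MetricSpace X] (x : ℕ → X) : Prop :=
  ∃ δ : ℝ, 0 < δ ∧ ∀ m n : ℕ, m ≠ n → δ ≤ dist (x m) (x n)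

/-- `((x_n, e_n))` is a u-sequence: `(x_n)` is separated and the `e_n` are
`C·d_ε`-Lipschitz-related to the `x_n`. -/
def USequence {X E : Type*} [MetricSpace X] [NormedAddCommGroup E]
    (x : ℕ → X) (e : ℕ → E) : Prop :=
  Separated x ∧ ∃ ε : ℝ, 0 < ε ∧ ∃ C : ℝ, ∀ m n : ℕ,
    ENNReal.ofReal ‖e n - e m‖ ≤ ENNReal.ofReal C * chainDist ε (x n) (x m)

open scoped NNReal
open Function

section ChainDist

variable {X : Type*} [MetricSpace X] {ε : ℝ} {a b : X}

lemma chainDist_le_sum {n : ℕ} {y : ℕ → X} (h0 : y 0 = a) (hn : y n = b)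
    (hy : ∀ i < n, dist (y i) (y (i + 1)) ≤ ε) :
    chainDist ε a b ≤ ∑ i ∈ Finset.range n, edist (y i) (y (i + 1)) := by
  simp only [edist_dist]
  exact iInf_le_of_le n <| iInf_le_of_le y <| iInf_le_of_le h0 <| iInf_le_of_le hn <|
    iInf_le _ hy

lemma le_chainDist {r : ℝ≥0∞}
    (h : ∀ (n : ℕ) (y : ℕ → X), y 0 = a → y n = b →
      (∀ i < n, dist (y i) (y (i + 1)) ≤ ε) → r ≤ ∑ i ∈ Finset.range n, edist (y i) (y (i + 1))) :
    r ≤ chainDist ε a b := by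
  simpa only [chainDist, le_iInf_iff, edist_dist] using h

lemma chainDist_self (ε : ℝ) (a : X) : chainDist ε a a = 0 :=
  nonpos_iff_eq_zero.mp <|
    (chainDist_le_sum (n := 0) (y := fun _ => a) rfl rfl (by simp)).trans_eq (by simp)

lemma chainDist_le_edist (h : dist a b ≤ ε) : chainDist ε a b ≤ edist a b :=
  (chainDist_le_sum (n := 1) (y := fun i => if i = 0 then a else b) rfl rfl (by simpa)).trans_eq
    (by simp)

lemma edist_le_chainDist : edist a b ≤ chainDist ε a b :=
  le_chainDist fun n y h0 hn _ => h0 ▸ hn ▸ edist_le_range_sum_edist y n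

lemma chainDist_comm (ε : ℝ) (a b : X) : chainDist ε a b = chainDist ε b a := by
  suffices ∀ a b : X, chainDist ε a b ≤ chainDist ε b a from le_antisymm (this a b) (this b a)
  refine fun a b => le_chainDist fun n y h0 hn hy => ?_
  refine (chainDist_le_sum (n := n) (y := fun i => y (n - i)) (by simpa using hn)
    (by simpa using h0) fun i hi => ?_).trans_eq ?_
  · rw [show n - i = n - (i + 1) + 1 by omega, dist_comm]
    exact hy _ (by omega)
  · rw [← Finset.sum_range_reflect]
    refine Finset.sum_congr rfl fun i hi => ?_
    rw [Finset.mem_range] at hi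
    rw [show n - (n - 1 - i) = i + 1 by omega, show n - (n - 1 - i + 1) = i by omega, edist_comm]

lemma chainDist_triangle (ε : ℝ) (a b c : X) :
    chainDist ε a c ≤ chainDist ε a b + chainDist ε b c := by
  conv_rhs => simp only [chainDist, ENNReal.iInf_add, ENNReal.add_iInf, ← edist_dist]
  simp only [le_iInf_iff]
  intro m y hy0 hym hy n x hx0 hxn hx
  let z : ℕ → X := fun i => if i ≤ n then x i else y (i - n)
  have hzx : ∀ i ≤ n, z i = x i := fun i hi => if_pos hi
  have hzy : ∀ i, n ≤ i → z i = y (i - n) := fun i hi => by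
    rcases hi.eq_or_lt with rfl | hi
    · simp [z, hxn, hy0]
    · exact if_neg (by omega)
  have hz : ∀ i < n + m, dist (z i) (z (i + 1)) ≤ ε := fun i hi => by
    rcases lt_or_ge i n with hin | hin
    · rw [hzx i hin.le, hzx (i + 1) hin]
      exact hx i hin
    · rw [hzy i hin, hzy (i + 1) (by omega), show i + 1 - n = i - n + 1 by omega]
      exact hy _ (by omega)
  refine (chainDist_le_sum (n := n + m) (y := z) (by simp [hzx, hx0])
    (by simp [hzy, hym]) hz).trans_eq ?_
  rw [Finset.sum_range_add]
  congr 1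
  · refine Finset.sum_congr rfl fun i hi => ?_
    rw [Finset.mem_range] at hi
    rw [hzx i hi.le, hzx (i + 1) hi]
  · refine Finset.sum_congr rfl fun i _ => ?_
    rw [hzy _ (by omega), hzy _ (by omega), show n + i + 1 - n = i + 1 by omega,
      Nat.add_sub_cancel_left]

end ChainDist

def ChainSpace (X : Type*) (_ε : ℝ) : Type _ := X

def toChainSpace {X : Type*} (ε : ℝ) : X → ChainSpace X ε := id

noncomputable instance {X : Type*} [MetricSpace X] (ε : ℝ) :
    PseudoEMetricSpace (ChainSpace X ε) where
  edist := chainDist (X := X) ε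
  edist_self := chainDist_self (X := X) ε
  edist_comm := chainDist_comm (X := X) ε
  edist_triangle := chainDist_triangle (X := X) ε

section ChainSpace

variable {X : Type*} [MetricSpace X] {ε : ℝ}

lemma edist_toChainSpace (a b : X) :
    edist (toChainSpace ε a) (toChainSpace ε b) = chainDist ε a b := rfl

lemma uniformContinuous_toChainSpace (hε : 0 < ε) :
    UniformContinuous (toChainSpace (X := X) ε) := by
  refine EMetric.uniformContinuous_iff.mpr fun η hη =>
    ⟨min η (ENNReal.ofReal ε), by simp [hη, hε], ?_⟩
  intro a b hab
  rw [lt_min_iff, edist_dist, ENNReal.ofReal_lt_ofReal_iff hε] at hab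
  rw [edist_toChainSpace]
  exact (chainDist_le_edist hab.2.le).trans_lt (edist_dist a b ▸ hab.1)

end ChainSpace

lemma LipschitzWith.tsum_of_pairwise_disjoint_support {ι Y E : Type*} [PseudoEMetricSpace Y]
    [NormedAddCommGroup E] {h : ι → Y → E} {K : ℝ≥0} (hh : ∀ i, LipschitzWith K (h i))
    (hd : Pairwise (Disjoint on fun i => support (h i))) :
    LipschitzWith (2 * K) fun y => ∑' i, h i y := by
  rcases isEmpty_or_nonempty ι with hι | hι
  · simpa using LipschitzWith.const' (α := Y) (0 : E)
  have hsingle : ∀ y, ∃ k, ∀ j ≠ k, h j y = 0 := fun y => by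
    by_cases hy : ∃ k, h k y ≠ 0
    · obtain ⟨k, hk⟩ := hy
      exact ⟨k, fun j hj => not_not.mp fun hjy => Set.disjoint_left.mp (hd hj) hjy hk⟩
    · push Not at hy
      exact ⟨Classical.arbitrary ι, fun j _ => hy j⟩
  intro y z
  obtain ⟨k, hk⟩ := hsingle y
  obtain ⟨l, hl⟩ := hsingle z
  simp only [tsum_eq_single k hk, tsum_eq_single l hl]
  have hcross : edist (h k z) (h l z) ≤ edist (h l y) (h l z) := by
    rcases eq_or_ne k l with rfl | hkl
    · simp
    · rw [hl k hkl, hk l hkl.symm]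
  calc edist (h k y) (h l z) ≤ edist (h k y) (h k z) + edist (h k z) (h l z) :=
        edist_triangle _ _ _
    _ ≤ K * edist y z + K * edist y z := add_le_add (hh k y z) (hcross.trans (hh l y z))
    _ = 2 * K * edist y z := by ring

theorem exists_lipschitzWith_interpolating {ι Y E : Type*} [PseudoEMetricSpace Y]
    [NormedAddCommGroup E] [NormedSpace ℝ E] {p : ι → Y} {v : ι → E} {s : ι → ℝ} {K : ℝ≥0}
    (hs : ∀ i, 0 < s i)
    (hsep : Pairwise fun i j => ENNReal.ofReal (s i) + ENNReal.ofReal (s j) ≤ edist (p i) (p j))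
    (hv : ∀ i, ‖v i‖ ≤ K * s i) :
    ∃ g : Y → E, LipschitzWith (2 * K) g ∧ ∀ i, g (p i) = v i := by
  let ball i := Metric.eball (p i) (ENNReal.ofReal (s i))
  have hdisj : Pairwise (Disjoint on ball) := fun i j hij => Set.disjoint_left.mpr
    fun y hyi hyj => (hsep hij).not_gt <|
      (edist_triangle_left _ _ y).trans_lt (ENNReal.add_lt_add hyi hyj)
  let h i y := (thickenedIndicator (hs i) {p i} y : ℝ) • v i
  have hzero : ∀ i y, y ∉ ball i → h i y = 0 := fun i y hy => by
    have hy' : y ∉ Metric.thickening (s i) {p i} := by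
      rwa [Metric.mem_thickening_iff_infEDist_lt, Metric.infEDist_singleton]
    simp only [h, thickenedIndicator_zero (hs i) _ hy', NNReal.coe_zero, zero_smul]
  have hsupp : ∀ i, support (h i) ⊆ ball i := fun i y hy =>
    by_contra fun hn => hy (hzero i y hn)
  have hlip : ∀ i, LipschitzWith K (h i) := fun i => by
    refine ((ContinuousLinearMap.toSpanSingleton ℝ (v i)).lipschitz.comp <|
      NNReal.isometry_coe.lipschitz.comp <|
        lipschitzWith_thickenedIndicator (hs i) {p i}).weaken ?_
    rw [ContinuousLinearMap.nnnorm_toSpanSingleton, one_mul,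
      mul_inv_le_iff₀ (by simpa using hs i), ← NNReal.coe_le_coe]
    simpa [Real.coe_toNNReal _ (hs i).le] using hv i
  refine ⟨fun y => ∑' i, h i y, LipschitzWith.tsum_of_pairwise_disjoint_support hlip
    fun i j hij => (hdisj hij).mono (hsupp i) (hsupp j), fun i => ?_⟩
  have hcenter : p i ∈ ball i := Metric.mem_eball_self (by simpa using hs i)
  show ∑' j, h j (p i) = v i
  rw [tsum_eq_single i fun j hj => hzero j _ (Set.disjoint_left.mp (hdisj hj.symm) hcenter)]
  simp only [h, thickenedIndicator_one (hs i) _ (Set.mem_singleton _), NNReal.coe_one, one_smul]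

section Interpolation

variable {ι Y E : Type*} [PseudoEMetricSpace Y] [NormedAddCommGroup E] [NormedSpace ℝ E]
  {p : ι → Y} {v : ι → E}

theorem exists_lipschitzWith_interpolating_of_bounded {δ B : ℝ} (hδ : 0 < δ)
    (hp : Pairwise fun i j => ENNReal.ofReal δ ≤ edist (p i) (p j)) (hB : ∀ i, ‖v i‖ ≤ B) :
    ∃ (K : ℝ≥0) (g : Y → E), LipschitzWith K g ∧ ∀ i, g (p i) = v i := by
  refine ⟨_, exists_lipschitzWith_interpolating (s := fun _ => δ / 2)
    (K := (2 * B / δ).toNNReal) (fun _ => half_pos hδ) (fun i j hij => ?_) fun i => ?_⟩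
  · rw [← ENNReal.ofReal_add (half_pos hδ).le (half_pos hδ).le, add_halves]
    exact hp hij
  · calc ‖v i‖ ≤ B := hB i
      _ = 2 * B / δ * (δ / 2) := by field_simp
      _ ≤ (2 * B / δ).toNNReal * (δ / 2) := by gcongr; exact Real.le_coe_toNNReal _

theorem exists_lipschitzWith_interpolating_of_growth [LinearOrder ι] {C : ℝ≥0}
    (hC : ∀ i j, edist (v i) (v j) ≤ C * edist (p i) (p j))
    (hgrow : ∀ i j, i < j → 3 * ‖v i‖ + 2 ≤ ‖v j‖) :
    ∃ (K : ℝ≥0) (g : Y → E), LipschitzWith K g ∧ ∀ i, g (p i) = v i := by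
  have hC1 : (0 : ℝ) < C + 1 := by positivity
  -- For `i < j`, `hgrow` is exactly what makes `s i + s j ≤ (‖v j‖ - ‖v i‖) / (C + 1)`.
  let s i := (‖v i‖ + 1) / (2 * (C + 1))
  have hs : ∀ i, 0 < s i := fun i => by positivity
  have hsep : ∀ i j, i < j →
      ENNReal.ofReal (s i) + ENNReal.ofReal (s j) ≤ edist (p i) (p j) := by
    intro i j hij
    have hnorm : ENNReal.ofReal (‖v j‖ - ‖v i‖) ≤ (C + 1 : ℝ≥0) * edist (p i) (p j) :=
      calc ENNReal.ofReal (‖v j‖ - ‖v i‖) ≤ edist (v i) (v j) := by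
            rw [edist_dist, dist_comm, dist_eq_norm]
            exact ENNReal.ofReal_le_ofReal (norm_sub_norm_le _ _)
        _ ≤ C * edist (p i) (p j) := hC i j
        _ ≤ (C + 1 : ℝ≥0) * edist (p i) (p j) := by gcongr; exact le_self_add
    calc ENNReal.ofReal (s i) + ENNReal.ofReal (s j)
        = ENNReal.ofReal (s i + s j) := (ENNReal.ofReal_add (hs i).le (hs j).le).symm
      _ ≤ ENNReal.ofReal ((‖v j‖ - ‖v i‖) / (C + 1)) := by
          refine ENNReal.ofReal_le_ofReal ?_
          simp only [s]
          rw [← add_div, div_le_div_iff₀ (by positivity) hC1]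
          nlinarith [mul_le_mul_of_nonneg_left (hgrow i j hij) hC1.le]
      _ ≤ edist (p i) (p j) := by
          rw [ENNReal.ofReal_div_of_pos hC1]
          refine ENNReal.div_le_of_le_mul ?_
          rwa [mul_comm, ← NNReal.coe_one, ← NNReal.coe_add, ENNReal.ofReal_coe_nnreal]
  refine ⟨_, exists_lipschitzWith_interpolating (K := 2 * (C + 1)) hs (fun i j hij => ?_)
    fun i => ?_⟩
  · rcases hij.lt_or_gt with hij | hij
    · exact hsep i j hij
    · rw [add_comm, edist_comm]
      exact hsep j i hij
  · simp only [s]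
    push_cast
    rw [mul_div_cancel₀ _ (by positivity)]
    linarith

end Interpolation

theorem exists_subseq_growing_or_bounded (a : ℕ → ℝ≥0) :
    ∃ φ : ℕ ↪o ℕ,
      (∀ i j, i < j → 3 * a (φ i) + 2 ≤ a (φ j)) ∨ ∀ k, a (φ k) ≤ 3 * a (φ 0) + 2 := by
  have : IsTrans ℝ≥0 fun a b => 3 * a + 2 ≤ b := ⟨fun a b c hab hbc => hab.trans <|
    le_trans (le_add_right (le_mul_of_one_le_left b.2 (by norm_num))) hbc⟩
  obtain ⟨φ, hgrow | hbdd⟩ :=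
    exists_increasing_or_nonincreasing_subseq (fun a b => 3 * a + 2 ≤ b) a
  · exact ⟨φ, Or.inl hgrow⟩
  · refine ⟨φ, Or.inr fun k => ?_⟩
    rcases k.eq_zero_or_pos with rfl | hk
    · exact le_add_right (le_mul_of_one_le_left zero_le (by norm_num))
    · exact (not_le.mp (hbdd 0 k hk)).le

theorem stmt12_general {X E : Type*} [MetricSpace X]
    [NormedAddCommGroup E] [NormedSpace ℝ E]
    (x : ℕ → X) (e : ℕ → E) (h : USequence x e) :
    ∃ N : Set ℕ, N.Infinite ∧ ∃ f : X → E, UniformContinuous f ∧ ∀ n ∈ N, f (x n) = e n := by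
  obtain ⟨⟨δ, hδ, hsep⟩, ε, hε, C, hC⟩ := h
  let p n := toChainSpace ε (x n)
  have hp : Pairwise fun m n => ENNReal.ofReal δ ≤ edist (p m) (p n) := fun m n hmn =>
    (ENNReal.ofReal_le_ofReal (hsep m n hmn)).trans <|
      edist_dist (x m) (x n) ▸ edist_le_chainDist
  have hpe : ∀ m n, edist (e m) (e n) ≤ C.toNNReal * edist (p m) (p n) := fun m n => by
    rw [edist_dist, dist_eq_norm]
    exact hC n m
  obtain ⟨φ, hφ⟩ := exists_subseq_growing_or_bounded fun n => ‖e n‖₊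
  suffices ∃ (K : ℝ≥0) (g : ChainSpace X ε → E),
      LipschitzWith K g ∧ ∀ k, g (p (φ k)) = e (φ k) by
    obtain ⟨K, g, hg, hgv⟩ := this
    refine ⟨Set.range φ, Set.infinite_range_of_injective φ.injective, g ∘ toChainSpace ε,
      hg.uniformContinuous.comp (uniformContinuous_toChainSpace hε), ?_⟩
    rintro _ ⟨k, rfl⟩
    exact hgv k
  rcases hφ with hgrow | hbdd
  · exact exists_lipschitzWith_interpolating_of_growth (fun i j => hpe (φ i) (φ j))
      fun i j hij => by exact_mod_cast hgrow i j hij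
  · exact exists_lipschitzWith_interpolating_of_bounded (B := 3 * ‖e (φ 0)‖ + 2) hδ
      (fun i j hij => hp (φ.injective.ne hij)) fun k => by exact_mod_cast hbdd k

/-- Any u-sequence admits a uniformly continuous function interpolating it along an
infinite subset of indices. -/
theorem stmt12 {X E : Type*} [MetricSpace X] [CompleteSpace X]
    [NormedAddCommGroup E] [NormedSpace ℝ E] [CompleteSpace E]
    (x : ℕ → X) (e : ℕ → E) (h : USequence x e) :
    ∃ N : Set ℕ, N.Infinite ∧ ∃ f : X → E, UniformContinuous f ∧ ∀ n ∈ N, f (x n) = e n :=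
  stmt12_general x e h

end Stmt12
end

section
/- Let X be a bounded complete metric space, E and F Banach spaces, and Ξ: X × E → F a function such that x ↦ Ξ(x, f(x)) is a Lipschitz function for every f ∈ Lip(X,E). If x₀ is an accumulation point of X, then there exists a dense open subset O of E such that the map Ξ(x₀,·): E → F is continuous at every point of O. -/
open Topology Filter Metric

/-!
Let `S n` (`oscBoundSet Ξ x₀ n`) be the set of centres `c` such that for every `x` with
`0 < d(x, x₀) ≤ 1/(n+1)` the map `Ξ(x, ·)` oscillates by at most `(n+1) d(x, x₀)` on the ball
of radius `d(x, x₀)` about `c`. These sets are closed and cover `E`: if `u` lay in no `S n`,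
there would be bad points `xₙ → x₀` with `d(xₙ, x₀)` decaying geometrically, and gluing disjoint
bumps around them yields two Lipschitz maps `X → E` through `u` at `x₀` whose superpositions
have unbounded difference quotients at the `xₙ`. By Baire, the interiors of the `S n` form a
dense open set. On a ball inside `S n`, chaining along segments in steps shorter than
`d(x, x₀)` bounds the oscillation of `Ξ(x, ·)` by `(n+1)(‖v - w‖ + d(x, x₀))`; letting
`x → x₀` along `𝓝[≠] x₀`, which is possible since `x₀` is an accumulation point and each
`Ξ(·, v)` is Lipschitz, shows that `Ξ(x₀, ·)` is `(n+1)`-Lipschitz there.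
-/

theorem lipschitzWith_tsum_smul_of_disjoint {ι X E : Type*} [Nonempty ι] [PseudoMetricSpace X]
    [SeminormedAddCommGroup E] [NormedSpace ℝ E] {K C : NNReal} {φ : ι → X → ℝ} {c : ι → E}
    (hφ : ∀ k, LipschitzWith K (φ k)) (hdisj : ∀ z j k, φ j z ≠ 0 → φ k z ≠ 0 → j = k)
    (hc : ∀ k, ‖c k‖ ≤ C) :
    LipschitzWith (2 * K * C) fun z => ∑' k, φ k z • c k := by
  have hsingle : ∀ z, ∃ j, ∀ k ≠ j, φ k z = 0 := by
    intro z
    by_cases h : ∃ j, φ j z ≠ 0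
    · obtain ⟨j, hj⟩ := h
      exact ⟨j, fun k hk => by_contra fun hkz => hk (hdisj z k j hkz hj)⟩
    · push Not at h
      exact ⟨Classical.arbitrary ι, fun k _ => h k⟩
  have hterm : ∀ j z z', ‖(φ j z - φ j z') • c j‖ ≤ K * C * dist z z' := fun j z z' => by
    rw [norm_smul, mul_right_comm]
    exact mul_le_mul ((hφ j).dist_le_mul z z') (hc j) (norm_nonneg _) (by positivity)
  refine LipschitzWith.of_dist_le_mul fun z z' => ?_
  obtain ⟨j, hj⟩ := hsingle z
  obtain ⟨k, hk⟩ := hsingle z'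
  rw [tsum_eq_single j fun i hi => by rw [hj i hi, zero_smul],
    tsum_eq_single k fun i hi => by rw [hk i hi, zero_smul], dist_eq_norm]
  push_cast
  obtain rfl | hjk := eq_or_ne j k
  · rw [← sub_smul]
    have : 0 ≤ (K : ℝ) * C * dist z z' := by positivity
    exact (hterm j z z').trans (by linarith)
  · have hdecomp : φ j z • c j - φ k z' • c k
        = (φ j z - φ j z') • c j - (φ k z' - φ k z) • c k := by
      rw [hk j hjk, hj k hjk.symm]; simp
    rw [hdecomp]
    calc _ ≤ ‖(φ j z - φ j z') • c j‖ + ‖(φ k z' - φ k z) • c k‖ := norm_sub_le _ _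
      _ ≤ K * C * dist z z' + K * C * dist z' z := add_le_add (hterm j z z') (hterm k z' z)
      _ = 2 * K * C * dist z z' := by rw [dist_comm]; ring

theorem exists_lipschitzWith_eq_of_separated {ι X E : Type*} [Nonempty ι] [PseudoMetricSpace X]
    [SeminormedAddCommGroup E] [NormedSpace ℝ E] {a : ι → X} {r : ι → ℝ} (hr : ∀ k, 0 < r k)
    (hsep : Pairwise fun j k => r j + r k ≤ dist (a j) (a k)) (u : E) {p : ι → E} {C : NNReal}
    (hp : ∀ k, ‖p k - u‖ ≤ C * r k) :
    ∃ f : X → E, LipschitzWith (2 * C) f ∧ (∀ k, f (a k) = p k) ∧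
      ∀ z, (∀ k, r k ≤ dist z (a k)) → f z = u := by
  set φ : ι → X → ℝ := fun k z => max (r k - dist z (a k)) 0
  have hφ : ∀ k, LipschitzWith 1 (φ k) := fun k => by
    simpa using ((LipschitzWith.const (r k)).sub (LipschitzWith.dist_left (a k))).max_const 0
  have hφ_ne : ∀ k z, φ k z ≠ 0 → dist z (a k) < r k := fun k z hz => by
    by_contra! h
    exact hz (max_eq_right (by linarith))
  have hdisj : ∀ z j k, φ j z ≠ 0 → φ k z ≠ 0 → j = k := fun z j k hj hk => by
    by_contra hjk
    have := dist_triangle_left (a j) (a k) z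
    linarith [hsep hjk, hφ_ne j z hj, hφ_ne k z hk]
  set c : ι → E := fun k => (r k)⁻¹ • (p k - u)
  have hc : ∀ k, ‖c k‖ ≤ C := fun k => by
    rw [norm_smul, norm_inv, Real.norm_of_nonneg (hr k).le, inv_mul_le_iff₀ (hr k), mul_comm]
    exact hp k
  refine ⟨fun z => u + ∑' k, φ k z • c k, ?_, fun k => ?_, fun z hz => ?_⟩
  · simpa using (LipschitzWith.const u).add (lipschitzWith_tsum_smul_of_disjoint hφ hdisj hc)
  · have hφk : φ k (a k) = r k := by simp [φ, (hr k).le]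
    have hφk_ne : φ k (a k) ≠ 0 := hφk ▸ (hr k).ne'
    have hothers : ∀ j ≠ k, φ j (a k) • c j = 0 := fun j hj => by
      rw [not_ne_iff.1 fun h => hj (hdisj _ j k h hφk_ne), zero_smul]
    change u + _ = p k
    rw [tsum_eq_single k hothers, hφk, smul_inv_smul₀ (hr k).ne', add_sub_cancel]
  · have hzero : ∀ k, φ k z = 0 := fun k => max_eq_right (by linarith [hz k])
    simp [hzero]

theorem Convex.dist_le_of_forall_norm_sub_lt {E F : Type*} [SeminormedAddCommGroup E]
    [NormedSpace ℝ E] [PseudoMetricSpace F] {g : E → F} {s : Set E} (hs : Convex ℝ s)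
    {δ M : ℝ} (hδ : 0 < δ) (hg : ∀ p ∈ s, ∀ q, ‖q - p‖ < δ → dist (g p) (g q) ≤ M)
    {v w : E} (hv : v ∈ s) (hw : w ∈ s) :
    dist (g v) (g w) ≤ M * (‖w - v‖ / δ + 1) := by
  have hM : 0 ≤ M := dist_nonneg.trans (hg v hv v (by simpa using hδ))
  set N := ⌊‖w - v‖ / δ⌋₊ + 1
  have hN : (0 : ℝ) < N := by positivity
  set P : ℕ → E := fun i => v + ((i : ℝ) / N) • (w - v)
  have hP : ∀ i ≤ N, P i ∈ s := fun i hi =>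
    hs.add_smul_sub_mem hv hw ⟨by positivity, div_le_one_of_le₀ (by exact_mod_cast hi) hN.le⟩
  have hstep : ∀ i, ‖P (i + 1) - P i‖ < δ := fun i => by
    have hlt : ‖w - v‖ / δ < N := by exact_mod_cast Nat.lt_floor_add_one (‖w - v‖ / δ)
    have : P (i + 1) - P i = (N : ℝ)⁻¹ • (w - v) := by
      simp only [P]; push_cast; module
    rw [this, norm_smul, norm_inv, Real.norm_of_nonneg hN.le, inv_mul_lt_iff₀ hN]
    rwa [div_lt_iff₀ hδ] at hlt
  calc dist (g v) (g w) = dist (g (P 0)) (g (P N)) := by simp [P, hN.ne']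
    _ ≤ ∑ i ∈ Finset.range N, dist (g (P i)) (g (P (i + 1))) :=
        dist_le_range_sum_dist (fun i => g (P i)) N
    _ ≤ ∑ _i ∈ Finset.range N, M := Finset.sum_le_sum fun i hi =>
        hg _ (hP i (Finset.mem_range.1 hi).le) _ (hstep i)
    _ = N * M := by simp
    _ ≤ (‖w - v‖ / δ + 1) * M := by
        gcongr
        simp only [N, Nat.cast_add, Nat.cast_one]
        gcongr
        exact Nat.floor_le (by positivity)
    _ = M * (‖w - v‖ / δ + 1) := mul_comm _ _

namespace Stmt18

section PseudoMetric

variable {X E F : Type*} [PseudoMetricSpace X] [PseudoMetricSpace E] [PseudoMetricSpace F]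

def PreservesLipschitz (Ξ : X × E → F) : Prop :=
  ∀ f : X → E, (∃ K : NNReal, LipschitzWith K f) → ∃ K : NNReal, LipschitzWith K fun x => Ξ (x, f x)

theorem PreservesLipschitz.continuous_left {Ξ : X × E → F} (hΞ : PreservesLipschitz Ξ) (v : E) :
    Continuous fun x => Ξ (x, v) :=
  let ⟨_, hK⟩ := hΞ (fun _ => v) ⟨0, LipschitzWith.const v⟩
  hK.continuous

def oscBoundSet (Ξ : X × E → F) (x₀ : X) (n : ℕ) : Set E :=
  {c | ∀ x, 0 < dist x x₀ → dist x x₀ ≤ 1 / (n + 1) →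
    ∀ v ∈ ball c (dist x x₀), ∀ w ∈ ball c (dist x x₀),
      dist (Ξ (x, v)) (Ξ (x, w)) ≤ (n + 1) * dist x x₀}

theorem isClosed_oscBoundSet (Ξ : X × E → F) (x₀ : X) (n : ℕ) :
    IsClosed (oscBoundSet Ξ x₀ n) := by
  have hopen : ∀ (v : E) (ρ : ℝ), IsOpen {c | v ∈ ball c ρ} := fun v ρ =>
    isOpen_lt (continuous_const.dist continuous_id) continuous_const
  simp only [oscBoundSet, Set.ofPred_forall]
  refine isClosed_iInter fun x => isClosed_iInter fun _ => isClosed_iInter fun _ =>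
    isClosed_iInter fun v => isClosed_imp (hopen v _) ?_
  rw [Set.ofPred_forall]
  exact isClosed_iInter fun w => isClosed_imp (hopen w _) isClosed_const

end PseudoMetric

section Normed

variable {X E F : Type*} [NormedAddCommGroup E] [NormedSpace ℝ E] [PseudoMetricSpace F]

theorem PreservesLipschitz.exists_dist_le_mul [PseudoMetricSpace X] {Ξ : X × E → F}
    (hΞ : PreservesLipschitz Ξ) {x₀ : X} {u : E} {x : ℕ → X} {v w : ℕ → E}
    (hx : ∀ k, 0 < dist (x k) x₀)
    (hdecay : ∀ j k, j < k → dist (x k) x₀ ≤ dist (x j) x₀ / 2)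
    (hv : ∀ k, ‖v k - u‖ ≤ dist (x k) x₀) (hw : ∀ k, ‖w k - u‖ ≤ dist (x k) x₀) :
    ∃ K : ℝ, ∀ k, dist (Ξ (x k, v k)) (Ξ (x k, w k)) ≤ K * dist (x k) x₀ := by
  have hr : ∀ k, 0 < dist (x k) x₀ / 3 := fun k => div_pos (hx k) three_pos
  have hsep : Pairwise fun j k => dist (x j) x₀ / 3 + dist (x k) x₀ / 3 ≤ dist (x j) (x k) := by
    have key : ∀ j k, j < k → dist (x j) x₀ / 3 + dist (x k) x₀ / 3 ≤ dist (x j) (x k) :=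
      fun j k hjk => by linarith [hdecay j k hjk, dist_triangle (x j) (x k) x₀]
    intro j k hjk
    rcases hjk.lt_or_gt with h | h
    · exact key j k h
    · linarith [key k j h, dist_comm (x j) (x k)]
  have hfar : ∀ k, dist (x k) x₀ / 3 ≤ dist x₀ (x k) := fun k => by
    rw [dist_comm x₀]; linarith [hx k]
  have hbound : ∀ p : ℕ → E, (∀ k, ‖p k - u‖ ≤ dist (x k) x₀) →
      ∃ K : ℝ, ∀ k, dist (Ξ (x k, p k)) (Ξ (x₀, u)) ≤ K * dist (x k) x₀ := fun p hp => by
    obtain ⟨f, hf, hfx, hfx₀⟩ :=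
      exists_lipschitzWith_eq_of_separated hr hsep u (C := 3) (p := p) fun k => by
        push_cast; linarith [hp k]
    obtain ⟨K, hK⟩ := hΞ f ⟨_, hf⟩
    refine ⟨K, fun k => ?_⟩
    simpa [hfx, hfx₀ x₀ hfar] using hK.dist_le_mul (x k) x₀
  obtain ⟨Kv, hKv⟩ := hbound v hv
  obtain ⟨Kw, hKw⟩ := hbound w hw
  refine ⟨Kv + Kw, fun k => ?_⟩
  calc dist (Ξ (x k, v k)) (Ξ (x k, w k))
      ≤ dist (Ξ (x k, v k)) (Ξ (x₀, u)) + dist (Ξ (x k, w k)) (Ξ (x₀, u)) :=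
        dist_triangle_right _ _ _
    _ ≤ (Kv + Kw) * dist (x k) x₀ := by linarith [hKv k, hKw k]

theorem PreservesLipschitz.exists_mem_oscBoundSet [PseudoMetricSpace X] {Ξ : X × E → F}
    (hΞ : PreservesLipschitz Ξ) (x₀ : X) (u : E) : ∃ n, u ∈ oscBoundSet Ξ x₀ n := by
  by_contra! h
  simp only [oscBoundSet, Set.mem_ofPred_eq, mem_ball, not_forall, not_le, exists_prop] at h
  choose x hx hx_le v hv w hw hbig using h
  have hlim : Tendsto (fun n => dist (x n) x₀) atTop (𝓝 0) :=
    squeeze_zero (fun _ => dist_nonneg) hx_le tendsto_one_div_add_atTop_nhds_zero_nat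
  obtain ⟨φ, hφ, hdecay, -⟩ := hasAntitoneBasis_atTop.subbasis_with_rel fun m =>
    hlim.eventually (eventually_le_nhds (half_pos (hx m)))
  obtain ⟨K, hK⟩ := hΞ.exists_dist_le_mul (x := x ∘ φ) (v := v ∘ φ) (w := w ∘ φ) (u := u)
    (fun k => hx _) (fun j k hjk => hdecay hjk)
    (fun k => by simpa [dist_eq_norm] using (hv (φ k)).le)
    (fun k => by simpa [dist_eq_norm] using (hw (φ k)).le)
  obtain ⟨k, hk⟩ := exists_nat_gt K
  have hlt : ((φ k : ℝ) + 1) * dist (x (φ k)) x₀ < K * dist (x (φ k)) x₀ :=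
    (hbig _).trans_le (hK k)
  have hφk : (k : ℝ) ≤ φ k := by exact_mod_cast hφ.id_le k
  linarith [lt_of_mul_lt_mul_right hlt (hx _).le]

theorem lipschitzOnWith_of_subset_oscBoundSet [MetricSpace X] {Ξ : X × E → F} {x₀ : X}
    [(𝓝[≠] x₀).NeBot] (hcont : ∀ v, ContinuousAt (fun x => Ξ (x, v)) x₀) {n : ℕ} {s : Set E}
    (hs : Convex ℝ s)
    (hsub : s ⊆ oscBoundSet Ξ x₀ n) :
    LipschitzOnWith (n + 1) (fun v => Ξ (x₀, v)) s := by
  refine LipschitzOnWith.of_dist_le_mul fun v hv w hw => ?_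
  have hnear : ∀ᶠ x in 𝓝[≠] x₀,
      dist (Ξ (x, v)) (Ξ (x, w)) ≤ (n + 1) * (‖w - v‖ + dist x x₀) := by
    filter_upwards [self_mem_nhdsWithin, nhdsWithin_le_nhds
      (ball_mem_nhds x₀ (by positivity : (0 : ℝ) < 1 / (n + 1)))] with x hx hx_ball
    have hd : 0 < dist x x₀ := dist_pos.2 hx
    have := Convex.dist_le_of_forall_norm_sub_lt hs (g := fun v => Ξ (x, v)) hd
      (fun p hp q hq => hsub hp x hd (mem_ball.1 hx_ball).le p (mem_ball_self hd) q
        (by rwa [mem_ball, dist_eq_norm])) hv hw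
    rwa [mul_add_one, mul_assoc, mul_div_cancel₀ _ hd.ne', ← mul_add] at this
  have hdist : Tendsto (fun x => dist x x₀) (𝓝[≠] x₀) (𝓝 0) := by
    have h := (continuous_id.dist (continuous_const (y := x₀))).tendsto x₀
    simpa using h.mono_left (nhdsWithin_le_nhds (s := {x₀}ᶜ))
  have hright : Tendsto (fun x => (n + 1) * (‖w - v‖ + dist x x₀)) (𝓝[≠] x₀)
      (𝓝 ((n + 1) * ‖w - v‖)) := by
    simpa using (hdist.const_add ‖w - v‖).const_mul ((n : ℝ) + 1)
  have hleft : Tendsto (fun x => dist (Ξ (x, v)) (Ξ (x, w))) (𝓝[≠] x₀)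
      (𝓝 (dist (Ξ (x₀, v)) (Ξ (x₀, w)))) :=
    ((hcont v).tendsto.dist (hcont w).tendsto).mono_left nhdsWithin_le_nhds
  push_cast
  rw [dist_eq_norm v, norm_sub_rev]
  exact le_of_tendsto_of_tendsto hleft hright hnear

end Normed

theorem stmt18_general {X E F : Type*} [MetricSpace X]
    [NormedAddCommGroup E] [NormedSpace ℝ E] [CompleteSpace E]
    [NormedAddCommGroup F]
    (Ξ : X × E → F)
    (hΞ : ∀ f : X → E, (∃ K : NNReal, LipschitzWith K f) →
      ∃ K : NNReal, LipschitzWith K fun x => Ξ (x, f x))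
    (x₀ : X) (hx₀ : 𝓝[≠] x₀ ≠ ⊥) :
    ∃ O : Set E, IsOpen O ∧ Dense O ∧
      ∀ u ∈ O, ContinuousAt (fun e => Ξ (x₀, e)) u := by
  have : (𝓝[≠] x₀).NeBot := ⟨hx₀⟩
  have hcover : ⋃ n, oscBoundSet Ξ x₀ n = Set.univ :=
    Set.eq_univ_of_forall fun u =>
      Set.mem_iUnion.2 (PreservesLipschitz.exists_mem_oscBoundSet hΞ x₀ u)
  refine ⟨⋃ n, interior (oscBoundSet Ξ x₀ n), isOpen_iUnion fun _ => isOpen_interior,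
    dense_iUnion_interior_of_closed (isClosed_oscBoundSet Ξ x₀) hcover, fun u hu => ?_⟩
  obtain ⟨n, hn⟩ := Set.mem_iUnion.1 hu
  obtain ⟨ρ, hρ, hball⟩ := Metric.isOpen_iff.1 isOpen_interior u hn
  have hlip := lipschitzOnWith_of_subset_oscBoundSet
    (fun v => (PreservesLipschitz.continuous_left hΞ v).continuousAt) (convex_ball u ρ)
    (hball.trans interior_subset)
  exact hlip.continuousOn.continuousAt (ball_mem_nhds u hρ)

/-- If `Ξ : X × E → F` is a Lipschitz section (i.e. `x ↦ Ξ(x, f(x))` is Lipschitz for every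
Lipschitz `f`) and `x₀` is an accumulation point of `X`, then `Ξ(x₀,·)` is continuous on a
dense open subset of `E`. -/
theorem stmt18 {X E F : Type*} [MetricSpace X] [CompleteSpace X]
    (hXbdd : Bornology.IsBounded (Set.univ : Set X))
    [NormedAddCommGroup E] [NormedSpace ℝ E] [CompleteSpace E]
    [NormedAddCommGroup F] [NormedSpace ℝ F] [CompleteSpace F]
    (Ξ : X × E → F)
    (hΞ : ∀ f : X → E, (∃ K : NNReal, LipschitzWith K f) →
      ∃ K : NNReal, LipschitzWith K fun x => Ξ (x, f x))
    (x₀ : X) (hx₀ : 𝓝[≠] x₀ ≠ ⊥) :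
    ∃ O : Set E, IsOpen O ∧ Dense O ∧
      ∀ u ∈ O, ContinuousAt (fun e => Ξ (x₀, e)) u :=
  stmt18_general Ξ hΞ x₀ hx₀

end Stmt18
end
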